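/- arXiv:1501.06836 — 9 statements merged into one kernel-verified Lean document; each statement's English description precedes it below -/
import Mathlib

section
/- Let c ≥ 1, q > 0, f, g : ℝ → ℝ continuous with f positive, and let φ ∈ C²([0,R)) solve φ'' + ((c-1)/r)φ' = f(φ) + g(φ)|φ'|^q on (0,R) with φ(0) = a, φ'(0) = 0 and cφ''(0) = f(a). Then φ'(r) > 0 for all r ∈ (0,R), i.e. φ is strictly increasing on [0,R). -/
/-!
Near `0` the function `φ'` starts at `0` with slope `f a / c > 0`, so it is positive on some
`(0, ε)`. At a first zero `r₀` of `φ'` the equation reduces to `φ''(r₀) = f(φ(r₀)) > 0`, which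
is impossible for a function that is positive just to the left of `r₀` and vanishes at `r₀`.
-/

open Real Set Filter Topology

section

variable {u : ℝ → ℝ} {a b : ℝ}

theorem HasDerivAt.nonpos_of_eventually_le_left {d r : ℝ} (hd : HasDerivAt u d r)
    (hleft : ∀ᶠ x in 𝓝[<] r, u r ≤ u x) : d ≤ 0 := by
  have hslope : Tendsto (slope u r) (𝓝[<] r) (𝓝 d) :=
    (hasDerivWithinAt_iff_tendsto_slope' (s := Iio r) (lt_irrefl r)).1 hd.hasDerivWithinAt
  refine le_of_tendsto hslope ?_
  filter_upwards [hleft, self_mem_nhdsWithin] with x hux hxr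
  rw [slope_def_field]
  exact div_nonpos_of_nonneg_of_nonpos (sub_nonneg.2 hux) (sub_nonpos.2 (le_of_lt hxr))

theorem exists_first_zero_of_pos_of_nonpos {t s : ℝ} (hts : t ≤ s)
    (hu : ContinuousOn u (Icc t s)) (ht : 0 < u t) (hs : u s ≤ 0) :
    ∃ r ∈ Ioc t s, u r = 0 ∧ ∀ x ∈ Ico t r, 0 < u x := by
  set Z := Icc t s ∩ u ⁻¹' Iic 0
  have hZ : IsClosed Z := hu.preimage_isClosed_of_isClosed isClosed_Icc isClosed_Iic
  have hZne : Z.Nonempty := ⟨s, ⟨hts, le_rfl⟩, hs⟩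
  have hZbdd : BddBelow Z := ⟨t, fun x hx => hx.1.1⟩
  obtain ⟨⟨htr, hrs⟩, hr⟩ := hZ.csInf_mem hZne hZbdd
  set r := sInf Z
  have hbefore : ∀ x ∈ Ico t r, 0 < u x := fun x hx => by
    by_contra! hux
    exact (csInf_le hZbdd ⟨⟨hx.1, hx.2.le.trans hrs⟩, hux⟩).not_gt hx.2
  -- The intermediate value theorem on `[t, r]` yields a zero, which cannot lie before `r`.
  obtain ⟨x, hx, hux⟩ := intermediate_value_Icc' htr (hu.mono (Icc_subset_Icc_right hrs))
    ⟨hr, ht.le⟩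
  have hxr : x = r := le_antisymm hx.2 (csInf_le hZbdd ⟨⟨hx.1, hx.2.trans hrs⟩, hux.le⟩)
  rw [hxr] at hux
  have htr_lt : t < r := htr.lt_of_ne fun htr_eq => ht.ne' (htr_eq ▸ hux)
  exact ⟨r, ⟨htr_lt, hrs⟩, hux, hbefore⟩

theorem pos_on_Ioo_of_deriv_pos_at_zeros (hu : DifferentiableOn ℝ u (Ioo a b))
    (h0 : ∀ᶠ x in 𝓝[>] a, 0 < u x) (hzero : ∀ r ∈ Ioo a b, u r = 0 → 0 < deriv u r) :
    ∀ r ∈ Ioo a b, 0 < u r := by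
  intro s hs
  by_contra! hus
  obtain ⟨t, hut, hat, hts⟩ := (h0.and (Ioo_mem_nhdsGT hs.1)).exists
  obtain ⟨r, ⟨htr, hrs⟩, hur, hbefore⟩ := exists_first_zero_of_pos_of_nonpos hts.le
    (hu.continuousOn.mono (Icc_subset_Ioo hat hs.2)) hut hus
  have hr : r ∈ Ioo a b := ⟨hat.trans htr, hrs.trans_lt hs.2⟩
  have hd : HasDerivAt u (deriv u r) r :=
    (hu.differentiableAt (isOpen_Ioo.mem_nhds hr)).hasDerivAt
  have hleft : ∀ᶠ x in 𝓝[<] r, u r ≤ u x := by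
    filter_upwards [Ioo_mem_nhdsLT htr] with x hx
    exact hur ▸ (hbefore x ⟨hx.1.le, hx.2⟩).le
  exact (hzero r hr hur).not_ge (hd.nonpos_of_eventually_le_left hleft)

theorem eventually_pos_of_tendsto_deriv_pos {L : ℝ} (hab : a < b)
    (hu : DifferentiableOn ℝ u (Ioo a b)) (h0 : Tendsto u (𝓝[>] a) (𝓝 0))
    (hderiv : Tendsto (deriv u) (𝓝[>] a) (𝓝 L)) (hL : 0 < L) :
    ∀ᶠ x in 𝓝[>] a, 0 < u x := by
  obtain ⟨ε, hε, hεsub⟩ := mem_nhdsGT_iff_exists_Ioo_subset.1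
    ((hderiv.eventually (eventually_gt_nhds hL)).and (Ioo_mem_nhdsGT hab))
  have hmono : StrictMonoOn u (Ioo a ε) := by
    refine strictMonoOn_of_deriv_pos (convex_Ioo a ε)
      (hu.continuousOn.mono fun x hx => (hεsub hx).2) fun x hx => ?_
    rw [interior_Ioo] at hx
    exact (hεsub hx).1
  have hnonneg : ∀ y ∈ Ioo a ε, 0 ≤ u y := fun y hy => by
    refine le_of_tendsto h0 ?_
    filter_upwards [Ioo_mem_nhdsGT hy.1] with z hz
    exact (hmono ⟨hz.1, hz.2.trans hy.2⟩ hy hz.2).le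
  filter_upwards [Ioo_mem_nhdsGT hε] with x hx
  have hmid : (a + x) / 2 ∈ Ioo a ε := ⟨by linarith [hx.1], by linarith [hx.1, hx.2]⟩
  exact (hnonneg _ hmid).trans_lt (hmono hmid hx (by linarith [hx.1]))

end

theorem stmt0_general (c q R a : ℝ) (hc : 1 ≤ c) (hq : 0 < q)
    (f g φ : ℝ → ℝ)
    (hfpos : ∀ t, 0 < f t)
    (hφc : ContinuousOn φ (Set.Ico 0 R))
    (hφ2 : ContDiffOn ℝ 2 φ (Set.Ioo 0 R))
    (hd0 : Filter.Tendsto (deriv φ) (nhdsWithin 0 (Set.Ioi 0)) (nhds 0))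
    (hd2 : Filter.Tendsto (deriv (deriv φ)) (nhdsWithin 0 (Set.Ioi 0)) (nhds (f a / c)))
    (hode : ∀ r ∈ Set.Ioo 0 R,
      deriv (deriv φ) r + (c - 1) / r * deriv φ r = f (φ r) + g (φ r) * |deriv φ r| ^ q) :
    (∀ r ∈ Set.Ioo 0 R, 0 < deriv φ r) ∧ StrictMonoOn φ (Set.Ico 0 R) := by
  have hdiff : DifferentiableOn ℝ (deriv φ) (Ioo 0 R) :=
    (hφ2.deriv_of_isOpen isOpen_Ioo (by norm_num) : ContDiffOn ℝ 1 (deriv φ) _).differentiableOn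
      one_ne_zero
  have hzero : ∀ r ∈ Ioo 0 R, deriv φ r = 0 → 0 < deriv (deriv φ) r := fun r hr hr0 => by
    have h := hode r hr
    rw [hr0, abs_zero, zero_rpow hq.ne', mul_zero, mul_zero, add_zero, add_zero] at h
    exact h ▸ hfpos (φ r)
  have hpos : ∀ r ∈ Ioo 0 R, 0 < deriv φ r := fun r hr =>
    pos_on_Ioo_of_deriv_pos_at_zeros hdiff
      (eventually_pos_of_tendsto_deriv_pos (hr.1.trans hr.2) hdiff hd0 hd2
        (div_pos (hfpos a) (zero_lt_one.trans_le hc)))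
      hzero r hr
  refine ⟨hpos, strictMonoOn_of_deriv_pos (convex_Ico 0 R) hφc fun x hx => ?_⟩
  rw [interior_Ico] at hx
  exact hpos x hx

theorem stmt0 (c q R a : ℝ) (hc : 1 ≤ c) (hq : 0 < q) (hR : 0 < R)
    (f g φ : ℝ → ℝ)
    (hf : Continuous f) (hfpos : ∀ t, 0 < f t) (hg : Continuous g)
    (hφc : ContinuousOn φ (Set.Ico 0 R))
    (hφ2 : ContDiffOn ℝ 2 φ (Set.Ioo 0 R))
    (hφa : φ 0 = a)
    (hd0 : Filter.Tendsto (deriv φ) (nhdsWithin 0 (Set.Ioi 0)) (nhds 0))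
    (hd2 : Filter.Tendsto (deriv (deriv φ)) (nhdsWithin 0 (Set.Ioi 0)) (nhds (f a / c)))
    (hode : ∀ r ∈ Set.Ioo 0 R,
      deriv (deriv φ) r + (c - 1) / r * deriv φ r = f (φ r) + g (φ r) * |deriv φ r| ^ q) :
    (∀ r ∈ Set.Ioo 0 R, 0 < deriv φ r) ∧ StrictMonoOn φ (Set.Ico 0 R) :=
  stmt0_general c q R a hc hq f g φ hfpos hφc hφ2 hd0 hd2 hode
end

section
/- Let c ≥ 1, q > 0, f, g : ℝ → ℝ continuous and nondecreasing with f positive, and let φ ∈ C²([0,R)) solve φ'' + ((c-1)/r)φ' = f(φ) + g(φ)|φ'|^q on (0,R) with φ(0) = a, φ'(0) = 0. Then φ is convex on [0,R), i.e. φ'' ≥ 0 on (0,R). -/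
open Real Set Filter

/-!
Near `0`, `φ'' → f(a)/c > 0`; suppose `r₀` is the first point with `φ''(r₀) ≤ 0`. On `(0, r₀]` the
slope `φ'` increases strictly from `0`, so `φ' > 0` and `φ` increases. Since `f`, `g` are monotone and
`(c - 1)/r ≥ (c - 1)/r₀`, comparing the equation at `r < r₀` with the one at `r₀` (where `φ'' ≤ 0`)
gives `φ''(r) ≤ L (φ'(r₀) - φ'(r))` for a constant `L`. A backward Gronwall argument then forces
`φ' = φ'(r₀)` just below `r₀`, contradicting strict monotonicity.
-/

theorem one_sub_rpow_le_max_mul {t : ℝ} (q : ℝ) (ht₀ : 0 ≤ t) (ht₁ : t ≤ 1) :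
    1 - t ^ q ≤ max 1 q * (1 - t) := by
  rcases le_total q 1 with hq | hq
  · have := self_le_rpow_of_le_one ht₀ ht₁ hq
    nlinarith [le_max_left 1 q]
  · have := one_add_mul_self_le_rpow_one_add (s := t - 1) (by linarith) hq
    rw [add_sub_cancel] at this
    nlinarith [le_max_right 1 q]

theorem rpow_sub_rpow_le_max_mul {m v : ℝ} (q : ℝ) (hm : 0 < m) (hv : 0 ≤ v) (hvm : v ≤ m) :
    m ^ q - v ^ q ≤ max 1 q * m ^ (q - 1) * (m - v) := by
  have key := one_sub_rpow_le_max_mul q (div_nonneg hv hm.le) ((div_le_one hm).2 hvm)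
  have hv_eq : v ^ q = (v / m) ^ q * m ^ q := by
    rw [← mul_rpow (div_nonneg hv hm.le) hm.le, div_mul_cancel₀ _ hm.ne']
  have hm_eq : m ^ q = m ^ (q - 1) * m := by
    rw [← rpow_add_one hm.ne', sub_add_cancel]
  calc m ^ q - v ^ q = m ^ q * (1 - (v / m) ^ q) := by rw [hv_eq]; ring
    _ ≤ m ^ q * (max 1 q * (1 - v / m)) := by gcongr
    _ = max 1 q * m ^ (q - 1) * (m - v) := by rw [hm_eq]; field_simp

theorem mul_rpow_le_mul_rpow_add {m v G q : ℝ} (hq : 0 ≤ q) (hm : 0 < m) (hv : 0 ≤ v)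
    (hvm : v ≤ m) :
    G * v ^ q ≤ G * m ^ q + max (-G) 0 * (max 1 q * m ^ (q - 1)) * (m - v) := by
  rcases le_total 0 G with hG | hG
  · have : v ^ q ≤ m ^ q := rpow_le_rpow hv hvm hq
    have : 0 ≤ m - v := by linarith
    rw [max_eq_right (by linarith)]
    nlinarith
  · rw [max_eq_left (by linarith)]
    have := rpow_sub_rpow_le_max_mul q hm hv hvm
    nlinarith

theorem monotoneOn_exp_mul_of_neg_mul_le_deriv {u : ℝ → ℝ} {a b L : ℝ}
    (hu : ContinuousOn u (Icc a b)) (hdu : DifferentiableOn ℝ u (Ioo a b))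
    (h : ∀ x ∈ Ioo a b, -(L * u x) ≤ deriv u x) :
    MonotoneOn (fun x => exp (L * x) * u x) (Icc a b) := by
  have hderiv : ∀ x ∈ Ioo a b,
      HasDerivAt (fun x => exp (L * x) * u x) (exp (L * x) * (L * u x + deriv u x)) x := by
    intro x hx
    have hux := (hdu.differentiableAt (isOpen_Ioo.mem_nhds hx)).hasDerivAt
    have hexp : HasDerivAt (fun x => exp (L * x)) (exp (L * x) * L) x := by
      simpa using ((hasDerivAt_id x).const_mul L).exp
    exact (hexp.mul hux).congr_deriv (by ring)
  refine monotoneOn_of_deriv_nonneg (convex_Icc a b) (by fun_prop) ?_ ?_ <;> rw [interior_Icc]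
  · exact fun x hx => (hderiv x hx).differentiableAt.differentiableWithinAt
  · intro x hx
    rw [(hderiv x hx).deriv]
    exact mul_nonneg (exp_pos _).le (by linarith [h x hx])

theorem exists_first_nonpos {h : ℝ → ℝ} {a b : ℝ} (hh : ContinuousOn h (Ioo a b))
    (hpos : ∀ᶠ x in nhdsWithin a (Ioi a), 0 < h x) (hneg : ∃ x ∈ Ioo a b, h x ≤ 0) :
    ∃ x₀ ∈ Ioo a b, h x₀ ≤ 0 ∧ ∀ x ∈ Ioo a x₀, 0 < h x := by
  obtain ⟨x₁, hx₁, hx₁neg⟩ := hneg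
  obtain ⟨u, hau, hu⟩ := mem_nhdsGT_iff_exists_Ioo_subset.1 hpos
  have hux₁ : u ≤ x₁ := by
    by_contra! hlt
    exact (hu ⟨hx₁.1, hlt⟩).not_ge hx₁neg
  set S := Icc u x₁ ∩ h ⁻¹' Iic 0
  have hSsub : Icc u x₁ ⊆ Ioo a b := fun x hx => ⟨hau.trans_le hx.1, hx.2.trans_lt hx₁.2⟩
  have hS : IsClosed S := (hh.mono hSsub).preimage_isClosed_of_isClosed isClosed_Icc isClosed_Iic
  have hSne : S.Nonempty := ⟨x₁, ⟨hux₁, le_rfl⟩, hx₁neg⟩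
  have hSbdd : BddBelow S := ⟨u, fun x hx => hx.1.1⟩
  obtain ⟨hx₀mem, hx₀neg⟩ := hS.csInf_mem hSne hSbdd
  refine ⟨sInf S, hSsub hx₀mem, hx₀neg, fun x hx => ?_⟩
  rcases lt_or_ge x u with hxu | hux
  · exact hu ⟨hx.1, hxu⟩
  · by_contra! hx0
    exact (csInf_le hSbdd ⟨⟨hux, hx.2.le.trans hx₀mem.2⟩, hx0⟩).not_gt hx.2

theorem StrictMonoOn.pos_of_tendsto_nhdsGT {v : ℝ → ℝ} {a b : ℝ} (hv : StrictMonoOn v (Ioc a b))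
    (hlim : Tendsto v (nhdsWithin a (Ioi a)) (nhds 0)) : ∀ x ∈ Ioc a b, 0 < v x := by
  have hnonneg : ∀ x ∈ Ioc a b, 0 ≤ v x := fun x hx =>
    le_of_tendsto hlim <| mem_of_superset (Ioo_mem_nhdsGT hx.1) fun s hs =>
      (hv ⟨hs.1, hs.2.le.trans hx.2⟩ hx hs.2).le
  intro x hx
  have hmid : (a + x) / 2 ∈ Ioc a b := ⟨by linarith [hx.1], by linarith [hx.1, hx.2]⟩
  exact (hnonneg _ hmid).trans_lt (hv hmid hx (by linarith [hx.1]))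

section RadialODE

variable {c q R : ℝ} {f g φ : ℝ → ℝ}

theorem deriv2_pos_of_forall_lt (hc : 1 ≤ c) (hq : 0 < q) (hfmono : Monotone f)
    (hgmono : Monotone g) (hφc : ContinuousOn φ (Ico 0 R))
    (hφd : DifferentiableOn ℝ φ (Ioo 0 R)) (hvd : DifferentiableOn ℝ (deriv φ) (Ioo 0 R))
    (hd0 : Tendsto (deriv φ) (nhdsWithin 0 (Ioi 0)) (nhds 0))
    (hode : ∀ r ∈ Ioo 0 R,
      deriv (deriv φ) r + (c - 1) / r * deriv φ r = f (φ r) + g (φ r) * |deriv φ r| ^ q)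
    {r₀ : ℝ} (hr₀ : r₀ ∈ Ioo 0 R) (hpos : ∀ r ∈ Ioo 0 r₀, 0 < deriv (deriv φ) r) :
    0 < deriv (deriv φ) r₀ := by
  by_contra! hr₀nonpos
  obtain ⟨hr₀pos, hr₀R⟩ := hr₀
  have hsub : Ioc 0 r₀ ⊆ Ioo 0 R := fun x hx => ⟨hx.1, hx.2.trans_lt hr₀R⟩
  have hvmono : StrictMonoOn (deriv φ) (Ioc 0 r₀) :=
    strictMonoOn_of_deriv_pos (convex_Ioc 0 r₀) (hvd.continuousOn.mono hsub)
      (by rwa [interior_Ioc])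
  have hvpos := hvmono.pos_of_tendsto_nhdsGT hd0
  have hφmono : MonotoneOn φ (Icc 0 r₀) := by
    refine monotoneOn_of_deriv_nonneg (convex_Icc 0 r₀)
      (hφc.mono fun x hx => ⟨hx.1, hx.2.trans_lt hr₀R⟩) ?_ ?_ <;> rw [interior_Icc]
    · exact hφd.mono fun x hx => hsub (Ioo_subset_Ioc_self hx)
    · exact fun x hx => (hvpos x (Ioo_subset_Ioc_self hx)).le
  set m := deriv φ r₀
  have hm : 0 < m := hvpos r₀ ⟨hr₀pos, le_rfl⟩
  have hat_r₀ : f (φ r₀) + g (φ r₀) * m ^ q ≤ (c - 1) / r₀ * m := by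
    have := hode r₀ ⟨hr₀pos, hr₀R⟩
    rw [abs_of_pos hm] at this
    linarith
  set L := max (-g (φ r₀)) 0 * (max 1 q * m ^ (q - 1)) + (c - 1) / r₀
  have hbound : ∀ r ∈ Ioo 0 r₀, deriv (deriv φ) r ≤ L * (m - deriv φ r) := by
    intro r hr
    have hrr₀ : r ∈ Ioc 0 r₀ := Ioo_subset_Ioc_self hr
    have hv := hvpos r hrr₀
    have hvm : deriv φ r ≤ m := (hvmono hrr₀ ⟨hr₀pos, le_rfl⟩ hr.2).le
    have hφr : φ r ≤ φ r₀ := hφmono ⟨hr.1.le, hr.2.le⟩ ⟨hr₀pos.le, le_rfl⟩ hr.2.le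
    have hode_r := hode r (hsub hrr₀)
    rw [abs_of_pos hv] at hode_r
    have hcoef : (c - 1) / r₀ * deriv φ r ≤ (c - 1) / r * deriv φ r :=
      mul_le_mul_of_nonneg_right (div_le_div_of_nonneg_left (by linarith) hr.1 hr.2.le) hv.le
    have hf_r : f (φ r) ≤ f (φ r₀) := hfmono hφr
    have hg_r : g (φ r) * deriv φ r ^ q ≤ g (φ r₀) * deriv φ r ^ q :=
      mul_le_mul_of_nonneg_right (hgmono hφr) (rpow_nonneg hv.le q)
    have hrpow := mul_rpow_le_mul_rpow_add (G := g (φ r₀)) hq.le hm hv.le hvm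
    calc deriv (deriv φ) r
        ≤ f (φ r₀) + g (φ r₀) * deriv φ r ^ q - (c - 1) / r₀ * deriv φ r := by linarith
      _ ≤ L * (m - deriv φ r) := by linarith
  -- Gronwall, run backwards from `r₀`: `m - φ'` vanishes at `r₀`, hence on `[r₀/2, r₀]`.
  have hhalf : r₀ / 2 ∈ Ioc 0 r₀ := ⟨by positivity, by linarith⟩
  have hIcc : Icc (r₀ / 2) r₀ ⊆ Ioc 0 r₀ := fun x hx => ⟨hhalf.1.trans_le hx.1, hx.2⟩
  have hW := monotoneOn_exp_mul_of_neg_mul_le_deriv (L := L) (u := fun r => m - deriv φ r)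
    (continuousOn_const.sub (hvd.continuousOn.mono (hIcc.trans hsub)))
    ((differentiableOn_const m).sub (hvd.mono (Ioo_subset_Icc_self.trans (hIcc.trans hsub))))
    fun x hx => by
      rw [deriv_const_sub]
      linarith [hbound x ⟨hhalf.1.trans hx.1, hx.2⟩]
  have hend : exp (L * (r₀ / 2)) * (m - deriv φ (r₀ / 2)) ≤ exp (L * r₀) * (m - m) :=
    hW ⟨le_rfl, hhalf.2⟩ ⟨hhalf.2, le_rfl⟩ hhalf.2
  have hlt : deriv φ (r₀ / 2) < m := hvmono hhalf ⟨hr₀pos, le_rfl⟩ (by linarith)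
  rw [sub_self, mul_zero] at hend
  nlinarith [exp_pos (L * (r₀ / 2))]

end RadialODE

theorem stmt1_general (c q R a : ℝ) (hc : 1 ≤ c) (hq : 0 < q)
    (f g φ : ℝ → ℝ)
    (hfpos : ∀ t, 0 < f t) (hfmono : Monotone f)
    (hgmono : Monotone g)
    (hφc : ContinuousOn φ (Set.Ico 0 R))
    (hφ2 : ContDiffOn ℝ 2 φ (Set.Ioo 0 R))
    (hd0 : Filter.Tendsto (deriv φ) (nhdsWithin 0 (Set.Ioi 0)) (nhds 0))
    (hd2 : Filter.Tendsto (deriv (deriv φ)) (nhdsWithin 0 (Set.Ioi 0)) (nhds (f a / c)))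
    (hode : ∀ r ∈ Set.Ioo 0 R,
      deriv (deriv φ) r + (c - 1) / r * deriv φ r = f (φ r) + g (φ r) * |deriv φ r| ^ q) :
    (∀ r ∈ Set.Ioo 0 R, 0 ≤ deriv (deriv φ) r) ∧ ConvexOn ℝ (Set.Ico 0 R) φ := by
  have hφd : DifferentiableOn ℝ φ (Ioo 0 R) := hφ2.differentiableOn (by norm_num)
  have hv : ContDiffOn ℝ 1 (deriv φ) (Ioo 0 R) := hφ2.deriv_of_isOpen isOpen_Ioo (by norm_num)
  have hvd : DifferentiableOn ℝ (deriv φ) (Ioo 0 R) := hv.differentiableOn one_ne_zero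
  have hnonneg : ∀ r ∈ Ioo 0 R, 0 ≤ deriv (deriv φ) r := by
    by_contra! ⟨r, hr, hneg⟩
    have hnear0 : ∀ᶠ r in nhdsWithin 0 (Ioi 0), 0 < deriv (deriv φ) r :=
      hd2.eventually (eventually_gt_nhds (div_pos (hfpos a) (by linarith)))
    obtain ⟨r₀, hr₀, hnonpos, hpos⟩ := exists_first_nonpos
      (hv.continuousOn_deriv_of_isOpen isOpen_Ioo le_rfl) hnear0 ⟨r, hr, hneg.le⟩
    exact hnonpos.not_gt
      (deriv2_pos_of_forall_lt hc hq hfmono hgmono hφc hφd hvd hd0 hode hr₀ hpos)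
  refine ⟨hnonneg, convexOn_of_deriv2_nonneg (convex_Ico 0 R) hφc ?_ ?_ ?_⟩ <;>
    rw [interior_Ico]
  · exact hφd
  · exact hvd
  · simpa only [Function.iterate_succ, Function.iterate_zero, Function.comp_apply, id] using
      hnonneg

theorem stmt1 (c q R a : ℝ) (hc : 1 ≤ c) (hq : 0 < q) (hR : 0 < R)
    (f g φ : ℝ → ℝ)
    (hf : Continuous f) (hfpos : ∀ t, 0 < f t) (hfmono : Monotone f)
    (hg : Continuous g) (hgmono : Monotone g)
    (hφc : ContinuousOn φ (Set.Ico 0 R))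
    (hφ2 : ContDiffOn ℝ 2 φ (Set.Ioo 0 R))
    (hφa : φ 0 = a)
    (hd0 : Filter.Tendsto (deriv φ) (nhdsWithin 0 (Set.Ioi 0)) (nhds 0))
    (hd2 : Filter.Tendsto (deriv (deriv φ)) (nhdsWithin 0 (Set.Ioi 0)) (nhds (f a / c)))
    (hode : ∀ r ∈ Set.Ioo 0 R,
      deriv (deriv φ) r + (c - 1) / r * deriv φ r = f (φ r) + g (φ r) * |deriv φ r| ^ q) :
    (∀ r ∈ Set.Ioo 0 R, 0 ≤ deriv (deriv φ) r) ∧ ConvexOn ℝ (Set.Ico 0 R) φ :=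
  stmt1_general c q R a hc hq f g φ hfpos hfmono hgmono hφc hφ2 hd0 hd2 hode
end

section
/- Let c ≥ 1, q > 0, f, g continuous nondecreasing with f positive and g nonnegative. If φ is a C² solution of φ'' + ((c-1)/r)φ' = f(φ) + g(φ)|φ'|^q on [0,R) with φ(0)=a, φ'(0)=0, then φ''(r) ≥ φ'(r)/r for all r ∈ (0,R). -/
/-!
Write `F = f(φ) + g(φ)|φ'|^q > 0`, so that `(r^(c-1) φ')' = r^(c-1) F` with `r^(c-1) φ' → 0` at `0`.
On an interval `(0, r]` where `φ'' ≥ 0`, both `φ` and `φ' ≥ 0` are nondecreasing, hence so is `F`,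
and comparing `r^(c-1) φ'` with `r^c F(r) / c` gives `c φ'(r) ≤ r F(r)`; the equation turns this
into `φ'(r) / r ≤ F(r) / c ≤ φ''(r)`, so in particular `φ''(r) > 0`. Since `φ''(0+) = f(a) / c > 0`
(L'Hôpital on `φ' / r`), looking at the first point where `φ''` could fail to be positive shows
`φ'' > 0` on all of `(0, R)`.
-/

open Set Filter Topology

theorem monotoneOn_Ioc_of_hasDerivAt_nonneg {f f' : ℝ → ℝ} {a b : ℝ}
    (hf : ∀ x ∈ Ioc a b, HasDerivAt f (f' x) x) (hf' : ∀ x ∈ Ioo a b, 0 ≤ f' x) :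
    MonotoneOn f (Ioc a b) :=
  monotoneOn_of_hasDerivWithinAt_nonneg (convex_Ioc a b)
    (fun x hx => (hf x hx).continuousAt.continuousWithinAt)
    (by rw [interior_Ioc]; exact fun x hx => (hf x (Ioo_subset_Ioc_self hx)).hasDerivWithinAt)
    (by rw [interior_Ioc]; exact hf')

theorem le_of_tendsto_nhdsGT_of_hasDerivAt_nonneg {ψ ψ' : ℝ → ℝ} {a b l : ℝ} (hab : a < b)
    (hψ : ∀ x ∈ Ioc a b, HasDerivAt ψ (ψ' x) x) (hψ' : ∀ x ∈ Ioo a b, 0 ≤ ψ' x)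
    (hl : Tendsto ψ (𝓝[>] a) (𝓝 l)) : l ≤ ψ b := by
  have hmono := monotoneOn_Ioc_of_hasDerivAt_nonneg hψ hψ'
  refine le_of_tendsto hl ?_
  filter_upwards [Ioo_mem_nhdsGT hab] with x hx
  exact hmono ⟨hx.1, hx.2.le⟩ (right_mem_Ioc.2 hab) hx.2.le

theorem ContinuousOn.forall_pos_of_nonneg_imp_pos {ψ : ℝ → ℝ} {R : ℝ}
    (hψ : ContinuousOn ψ (Ioo 0 R)) (h0 : ∀ᶠ r in 𝓝[>] 0, 0 < ψ r)
    (hstep : ∀ r ∈ Ioo 0 R, (∀ s ∈ Ioo 0 r, 0 ≤ ψ s) → 0 < ψ r) :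
    ∀ r ∈ Ioo 0 R, 0 < ψ r := by
  by_contra! h
  obtain ⟨x, hx, hxψ⟩ := h
  set S := {r ∈ Ioo 0 R | ψ r ≤ 0}
  obtain ⟨u, hu, hus⟩ := mem_nhdsGT_iff_exists_Ioo_subset.1 h0
  have hlb : ∀ s ∈ S, u ≤ s := fun s hs => not_lt.1 fun hsu => hs.2.not_gt (hus ⟨hs.1.1, hsu⟩)
  have hSne : S.Nonempty := ⟨x, hx, hxψ⟩
  have hbdd : BddBelow S := ⟨u, hlb⟩
  have hr0 : sInf S ∈ Ioo 0 R :=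
    ⟨hu.trans_le (le_csInf hSne hlb), (csInf_le hbdd ⟨hx, hxψ⟩).trans_lt hx.2⟩
  have hpos : 0 < ψ (sInf S) := hstep _ hr0 fun s hs =>
    le_of_not_ge fun hψs => notMem_of_lt_csInf hs.2 hbdd ⟨⟨hs.1, hs.2.trans hr0.2⟩, hψs⟩
  obtain ⟨s, hs, hsS⟩ := mem_closure_iff_nhds.1 (csInf_mem_closure hSne hbdd) _
    ((hψ.continuousAt (isOpen_Ioo.mem_nhds hr0)).preimage_mem_nhds (Ioi_mem_nhds hpos))
  exact hsS.2.not_gt hs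

section RadialODE

variable {c b : ℝ} {v v' : ℝ → ℝ}

theorem hasDerivAt_rpow_mul {d s : ℝ} (hs : 0 < s) (hv : HasDerivAt v d s) :
    HasDerivAt (fun r => r ^ (c - 1) * v r) (s ^ (c - 1) * (d + (c - 1) / s * v s)) s := by
  refine ((Real.hasDerivAt_rpow_const (p := c - 1) (Or.inl hs.ne')).mul hv).congr_deriv ?_
  rw [Real.rpow_sub_one hs.ne']
  field_simp
  ring

theorem tendsto_rpow_mul_nhdsGT_zero {e : ℝ} (he : 0 ≤ e) (hv : Tendsto v (𝓝[>] 0) (𝓝 0)) :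
    Tendsto (fun r => r ^ e * v r) (𝓝[>] 0) (𝓝 0) := by
  refine squeeze_zero_norm' ?_ (by simpa using hv.norm)
  filter_upwards [Ioo_mem_nhdsGT one_pos] with r hr
  rw [norm_mul, Real.norm_of_nonneg (Real.rpow_nonneg hr.1.le e)]
  exact mul_le_of_le_one_left (norm_nonneg _) (Real.rpow_le_one hr.1.le hr.2.le he)

theorem nonneg_of_radial_deriv_nonneg (hc : 1 ≤ c) (hb : 0 < b)
    (hv : ∀ s ∈ Ioc 0 b, HasDerivAt v (v' s) s) (hv0 : Tendsto v (𝓝[>] 0) (𝓝 0))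
    (hode : ∀ s ∈ Ioo 0 b, 0 ≤ v' s + (c - 1) / s * v s) : 0 ≤ v b := by
  have hw : 0 ≤ b ^ (c - 1) * v b :=
    le_of_tendsto_nhdsGT_of_hasDerivAt_nonneg (ψ := fun r => r ^ (c - 1) * v r) hb
      (fun s hs => hasDerivAt_rpow_mul hs.1 (hv s hs))
      (fun s hs => mul_nonneg (Real.rpow_nonneg hs.1.le _) (hode s hs))
      (tendsto_rpow_mul_nhdsGT_zero (sub_nonneg.2 hc) hv0)
  exact nonneg_of_mul_nonneg_right hw (Real.rpow_pos_of_pos hb _)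

theorem mul_le_of_radial_deriv_le {K : ℝ} (hc : 1 ≤ c) (hb : 0 < b)
    (hv : ∀ s ∈ Ioc 0 b, HasDerivAt v (v' s) s) (hv0 : Tendsto v (𝓝[>] 0) (𝓝 0))
    (hode : ∀ s ∈ Ioo 0 b, v' s + (c - 1) / s * v s ≤ K) : c * v b ≤ b * K := by
  have hc0 : 0 < c := by linarith
  have hlin : Tendsto (fun s => s * (K / c)) (𝓝[>] 0) (𝓝 0) :=
    ((continuous_mul_const (K / c)).tendsto' 0 0 (zero_mul _)).mono_left nhdsWithin_le_nhds
  have key := nonneg_of_radial_deriv_nonneg (v := fun s => s * (K / c) - v s)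
    (v' := fun s => K / c - v' s) hc hb (fun s hs => (hasDerivAt_mul_const (K / c)).sub (hv s hs))
    (by simpa using hlin.sub hv0)
    (fun s hs => by
      have hK : K / c - v' s + (c - 1) / s * (s * (K / c) - v s)
          = K - (v' s + (c - 1) / s * v s) := by
        field_simp [hs.1.ne']
        ring
      linarith [hode s hs])
  rw [sub_nonneg, ← mul_div_assoc, le_div_iff₀ hc0] at key
  linarith

theorem div_le_rhs_div_le_deriv_of_radial_ode {F : ℝ → ℝ} (hc : 1 ≤ c) (hb : 0 < b)
    (hv : ∀ s ∈ Ioc 0 b, HasDerivAt v (v' s) s) (hv0 : Tendsto v (𝓝[>] 0) (𝓝 0))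
    (hode : ∀ s ∈ Ioc 0 b, v' s + (c - 1) / s * v s = F s) (hF : ∀ s ∈ Ioo 0 b, F s ≤ F b) :
    v b / b ≤ F b / c ∧ F b / c ≤ v' b := by
  have hc0 : 0 < c := by linarith
  have hvb : v b / b ≤ F b / c := by
    rw [div_le_div_iff₀ hb hc0]
    linarith [mul_le_of_radial_deriv_le hc hb hv hv0
      fun s hs => (hode s (Ioo_subset_Ioc_self hs)).trans_le (hF s hs)]
  refine ⟨hvb, ?_⟩
  have hlower : (c - 1) / b * v b ≤ (c - 1) * (F b / c) := by
    rw [div_mul_eq_mul_div, mul_div_assoc]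
    exact mul_le_mul_of_nonneg_left hvb (by linarith)
  have hFc : F b / c = F b - (c - 1) * (F b / c) := by
    field_simp
    ring
  linarith [hode b (right_mem_Ioc.2 hb)]

theorem mul_eq_of_radial_ode_tendsto {F : ℝ → ℝ} {L A : ℝ}
    (hv : ∀ᶠ s in 𝓝[>] 0, HasDerivAt v (v' s) s)
    (hode : ∀ᶠ s in 𝓝[>] 0, v' s + (c - 1) / s * v s = F s)
    (hv0 : Tendsto v (𝓝[>] 0) (𝓝 0)) (hv' : Tendsto v' (𝓝[>] 0) (𝓝 L))
    (hF : Tendsto F (𝓝[>] 0) (𝓝 A)) : c * L = A := by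
  have hquot : Tendsto (fun s => v s / s) (𝓝[>] 0) (𝓝 L) :=
    HasDerivAt.lhopital_zero_nhdsGT hv (Eventually.of_forall fun s => hasDerivAt_id s)
      (Eventually.of_forall fun _ => one_ne_zero) hv0
      (tendsto_id.mono_left nhdsWithin_le_nhds) (by simpa using hv')
  have hlhs : Tendsto (fun s => v' s + (c - 1) / s * v s) (𝓝[>] 0) (𝓝 (L + (c - 1) * L)) :=
    hv'.add ((hquot.const_mul (c - 1)).congr fun s => by ring)
  linarith [tendsto_nhds_unique (hlhs.congr' hode) hF]

end RadialODE

theorem monotoneOn_add_mul_abs_rpow {f g φ v : ℝ → ℝ} {q : ℝ} {s : Set ℝ} (hq : 0 ≤ q)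
    (hf : Monotone f) (hg : Monotone g) (hg0 : ∀ t, 0 ≤ g t) (hφ : MonotoneOn φ s)
    (hv : MonotoneOn v s) (hv0 : ∀ r ∈ s, 0 ≤ v r) :
    MonotoneOn (fun r => f (φ r) + g (φ r) * |v r| ^ q) s := by
  intro x hx y hy hxy
  have hφxy := hφ hx hy hxy
  dsimp only
  rw [abs_of_nonneg (hv0 x hx), abs_of_nonneg (hv0 y hy)]
  exact add_le_add (hf hφxy) (mul_le_mul (hg hφxy)
    (Real.rpow_le_rpow (hv0 x hx) (hv hx hy hxy) hq) (Real.rpow_nonneg (hv0 x hx) q) (hg0 _))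

theorem tendsto_add_mul_abs_rpow {f g φ v : ℝ → ℝ} {q a : ℝ} {l : Filter ℝ} (hq : 0 < q)
    (hf : ContinuousAt f a) (hg : ContinuousAt g a) (hφ : Tendsto φ l (𝓝 a))
    (hv : Tendsto v l (𝓝 0)) :
    Tendsto (fun r => f (φ r) + g (φ r) * |v r| ^ q) l (𝓝 (f a)) := by
  have habs : Tendsto (fun r => |v r| ^ q) l (𝓝 0) := by
    simpa [Real.zero_rpow hq.ne', Function.comp_def] using
      (Real.continuousAt_rpow_const 0 q (Or.inr hq.le)).tendsto.comp (by simpa using hv.abs)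
  simpa using (hf.tendsto.comp hφ).add ((hg.tendsto.comp hφ).mul habs)

theorem div_le_rhs_div_le_deriv2_of_deriv2_nonneg {c q b : ℝ} {f g φ φ' φ'' : ℝ → ℝ}
    (hc : 1 ≤ c) (hq : 0 ≤ q) (hb : 0 < b) (hf : Monotone f) (hg : Monotone g)
    (hg0 : ∀ t, 0 ≤ g t) (hφ : ∀ s ∈ Ioc 0 b, HasDerivAt φ (φ' s) s)
    (hφ' : ∀ s ∈ Ioc 0 b, HasDerivAt φ' (φ'' s) s) (hφ'0 : Tendsto φ' (𝓝[>] 0) (𝓝 0))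
    (hode : ∀ s ∈ Ioc 0 b, φ'' s + (c - 1) / s * φ' s = f (φ s) + g (φ s) * |φ' s| ^ q)
    (hφ'' : ∀ s ∈ Ioo 0 b, 0 ≤ φ'' s) :
    φ' b / b ≤ (f (φ b) + g (φ b) * |φ' b| ^ q) / c ∧
      (f (φ b) + g (φ b) * |φ' b| ^ q) / c ≤ φ'' b := by
  have hφ'nonneg : ∀ s ∈ Ioc 0 b, 0 ≤ φ' s := fun s hs =>
    le_of_tendsto_nhdsGT_of_hasDerivAt_nonneg hs.1 (fun x hx => hφ' x ⟨hx.1, hx.2.trans hs.2⟩)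
      (fun x hx => hφ'' x ⟨hx.1, hx.2.trans_le hs.2⟩) hφ'0
  have hFmono := monotoneOn_add_mul_abs_rpow hq hf hg hg0
    (monotoneOn_Ioc_of_hasDerivAt_nonneg hφ fun s hs => hφ'nonneg s (Ioo_subset_Ioc_self hs))
    (monotoneOn_Ioc_of_hasDerivAt_nonneg hφ' hφ'') hφ'nonneg
  exact div_le_rhs_div_le_deriv_of_radial_ode hc hb hφ' hφ'0 hode
    fun s hs => hFmono ⟨hs.1, hs.2.le⟩ (right_mem_Ioc.2 hb) hs.2.le

theorem stmt3 (c q R a : ℝ) (hc : 1 ≤ c) (hq : 0 < q) (hR : 0 < R)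
    (f g φ : ℝ → ℝ)
    (hf : Continuous f) (hfpos : ∀ t, 0 < f t) (hfmono : Monotone f)
    (hg : Continuous g) (hgmono : Monotone g) (hgnonneg : ∀ t, 0 ≤ g t)
    (hφc : ContinuousOn φ (Set.Ico 0 R))
    (hφ2 : ContDiffOn ℝ 2 φ (Set.Ioo 0 R))
    (hφa : φ 0 = a)
    (hd0 : Filter.Tendsto (deriv φ) (nhdsWithin 0 (Set.Ioi 0)) (nhds 0))
    (hd2 : ∃ L, Filter.Tendsto (deriv (deriv φ)) (nhdsWithin 0 (Set.Ioi 0)) (nhds L))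
    (hode : ∀ r ∈ Set.Ioo 0 R,
      deriv (deriv φ) r + (c - 1) / r * deriv φ r = f (φ r) + g (φ r) * |deriv φ r| ^ q) :
    ∀ r ∈ Set.Ioo 0 R, deriv φ r / r ≤ deriv (deriv φ) r := by
  have hc0 : 0 < c := by linarith
  have hFpos : ∀ r, 0 < f (φ r) + g (φ r) * |deriv φ r| ^ q := fun r =>
    add_pos_of_pos_of_nonneg (hfpos _) (mul_nonneg (hgnonneg _) (by positivity))
  have hφ' : ∀ s ∈ Ioo 0 R, HasDerivAt φ (deriv φ s) s := fun s hs =>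
    ((hφ2.differentiableOn (by norm_num)).differentiableAt (isOpen_Ioo.mem_nhds hs)).hasDerivAt
  have hφ2' : ContDiffOn ℝ 1 (deriv φ) (Ioo 0 R) := hφ2.deriv_of_isOpen isOpen_Ioo (by norm_num)
  have hφ'' : ∀ s ∈ Ioo 0 R, HasDerivAt (deriv φ) (deriv (deriv φ) s) s := fun s hs =>
    ((hφ2'.differentiableOn one_ne_zero).differentiableAt (isOpen_Ioo.mem_nhds hs)).hasDerivAt
  have hbounds (r : ℝ) (hr : r ∈ Ioo 0 R) :=
    have hsub : Ioc 0 r ⊆ Ioo 0 R := fun s hs => ⟨hs.1, hs.2.trans_lt hr.2⟩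
    div_le_rhs_div_le_deriv2_of_deriv2_nonneg hc hq.le hr.1 hfmono hgmono hgnonneg
      (fun s hs => hφ' s (hsub hs)) (fun s hs => hφ'' s (hsub hs)) hd0
      (fun s hs => hode s (hsub hs))
  obtain ⟨L, hL⟩ := hd2
  have hnear : ∀ᶠ s in 𝓝[>] 0, s ∈ Ioo 0 R := Ioo_mem_nhdsGT hR
  have hφ0 : Tendsto φ (𝓝[>] 0) (𝓝 a) := by
    rw [← hφa, ← nhdsWithin_Ioo_eq_nhdsGT hR]
    exact ((hφc 0 ⟨le_rfl, hR⟩).mono Ioo_subset_Ico_self).tendsto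
  have hcL : c * L = f a := mul_eq_of_radial_ode_tendsto (hnear.mono hφ'') (hnear.mono hode) hd0
    hL (tendsto_add_mul_abs_rpow hq hf.continuousAt hg.continuousAt hφ0 hd0)
  have hL0 : 0 < L := pos_of_mul_pos_right (hcL ▸ hfpos a) hc0.le
  have hφ''pos : ∀ r ∈ Ioo 0 R, 0 < deriv (deriv φ) r :=
    (hφ2'.continuousOn_deriv_of_isOpen isOpen_Ioo le_rfl).forall_pos_of_nonneg_imp_pos
      (hL.eventually (eventually_gt_nhds hL0))
      fun r hr h => (div_pos (hFpos r) hc0).trans_le (hbounds r hr h).2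
  intro r hr
  obtain ⟨hle, hle'⟩ := hbounds r hr fun s hs => (hφ''pos s ⟨hs.1, hs.2.trans hr.2⟩).le
  exact hle.trans hle'
end

section
/- Let 0 < q < 2, c ≥ 1, f, g continuous nondecreasing with f positive. If φ is a C² solution of φ'' + ((c-1)/r)φ' = f(φ) + g(φ)|φ'|^q on [0,R) with φ(0)=a, φ'(0)=0 (hence φ convex increasing), then for all r ∈ [0,R): φ'(r) ≤ 2^{2/(2-q)} [ (∫_a^{φ(r)} f(t) dt)^{1/2} + (∫_a^{φ(r)} g⁺(t) dt)^{1/(2-q)} ], where g⁺(t) = max(g(t), 0). -/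
open Real MeasureTheory Set Filter Topology

/-!
Write `F`, `G` for the primitives of `f` and `g⁺` vanishing at `a`. First `φ' ≥ 0`: near `0`
because `(r ^ (c - 1) φ')' = r ^ (c - 1) (f(φ) + g(φ) |φ'| ^ q)` with right-hand side close to
`f(a) > 0`, and then everywhere because `φ'' = f(φ) > 0` at any zero of `φ'`. Fix `r` and let
`M = max φ'` on `[0, r]`, attained at `r₀`. Multiplying the equation by `φ' ≥ 0` and dropping the
damping term shows that `φ' ^ 2 / 2 - F(φ) - M ^ q G(φ)` is nonincreasing on `[0, r]`; it vanishes
at `0`, so at `r₀` we get `M ^ 2 ≤ 2 F(φ r) + 2 M ^ q G(φ r)`. According to which term dominates,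
`M ^ 2 ≤ 4 F` or `M ^ (2 - q) ≤ 4 G`, and either case gives the bound.
-/

lemma deriv_eq_zero_of_tendsto_deriv_nhdsGT {E : Type*} [NormedAddCommGroup E] [NormedSpace ℝ E]
    {f : ℝ → E} {x : ℝ} {s : Set ℝ} (hs : s ∈ 𝓝[>] x) (hd : DifferentiableOn ℝ f s)
    (hc : ContinuousWithinAt f s x) (hlim : Tendsto (deriv f) (𝓝[>] x) (𝓝 0)) :
    deriv f x = 0 := by
  by_cases h : DifferentiableAt ℝ f x
  · rw [← h.derivWithin (uniqueDiffWithinAt_Ici x)]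
    exact (hasDerivWithinAt_Ici_of_tendsto_deriv hd hc hs hlim).derivWithin
      (uniqueDiffWithinAt_Ici x)
  · exact deriv_zero_of_not_differentiableAt h

lemma continuousOn_Ico_of_continuousOn_Ioo {α : Type*} [TopologicalSpace α] {u : ℝ → α}
    {a b : ℝ} (h : ContinuousOn u (Ioo a b)) (ha : ContinuousWithinAt u (Ioi a) a) :
    ContinuousOn u (Ico a b) := by
  intro x hx
  rcases hx.1.eq_or_lt with rfl | hax
  · exact (continuousWithinAt_Ioi_iff_Ici.1 ha).mono Ico_subset_Ici_self
  · exact (h.continuousAt (Ioo_mem_nhds hax hx.2)).continuousWithinAt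

lemma nonneg_of_deriv_pos_of_eq_zero {u u' : ℝ → ℝ} {a b : ℝ}
    (hu : ∀ x ∈ Icc a b, HasDerivAt u (u' x) x) (ha : 0 ≤ u a)
    (hzero : ∀ x ∈ Ico a b, u x = 0 → 0 < u' x) : ∀ x ∈ Icc a b, 0 ≤ u x := by
  intro x hx
  have := image_le_of_deriv_right_lt_deriv_boundary' (f := fun x => -u x) (f' := fun x => -u' x)
    (B := 0) (B' := 0) (fun y hy => (hu y hy).continuousAt.continuousWithinAt.neg)
    (fun y hy => (hu y (Ico_subset_Icc_self hy)).neg.hasDerivWithinAt) (by simpa using ha)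
    continuousOn_const (fun _ _ => hasDerivWithinAt_const _ _ _)
    (fun y hy hy0 => by simpa using hzero y hy (neg_eq_zero.1 hy0)) hx
  simpa using this

lemma HasDerivAt.rpow_const_mul {u : ℝ → ℝ} {u' s : ℝ} (p : ℝ) (hu : HasDerivAt u u' s)
    (hs : 0 < s) : HasDerivAt (fun x => x ^ p * u x) (s ^ p * (u' + p / s * u s)) s := by
  refine ((hasDerivAt_rpow_const (p := p) (Or.inl hs.ne')).mul hu).congr_deriv ?_
  rw [rpow_sub_one hs.ne']
  field_simp
  ring

lemma le_two_rpow_mul_of_sq_le {q M A B : ℝ} (hq0 : 0 ≤ q) (hq2 : q < 2) (hM : 0 ≤ M)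
    (hA : 0 ≤ A) (hB : 0 ≤ B) (h : M ^ 2 ≤ 2 * A + 2 * (M ^ q * B)) :
    M ≤ 2 ^ (2 / (2 - q)) * (A ^ ((1 : ℝ) / 2) + B ^ (1 / (2 - q))) := by
  have h2q : 0 < 2 - q := by linarith
  have hA' : 0 ≤ A ^ ((1 : ℝ) / 2) := rpow_nonneg hA _
  have hB' : 0 ≤ B ^ (1 / (2 - q)) := rpow_nonneg hB _
  have hK : 0 ≤ (2 : ℝ) ^ (2 / (2 - q)) := by positivity
  rcases le_total (M ^ q * B) A with hcase | hcase
  · have hMA : M ≤ 2 * A ^ ((1 : ℝ) / 2) := by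
      rw [← sqrt_eq_rpow, ← pow_le_pow_iff_left₀ hM (by positivity) two_ne_zero, mul_pow,
        sq_sqrt hA]
      linarith
    have h2K : (2 : ℝ) ≤ 2 ^ (2 / (2 - q)) := by
      simpa using rpow_le_rpow_of_exponent_le one_le_two ((one_le_div h2q).2 (by linarith))
    calc M ≤ 2 * A ^ ((1 : ℝ) / 2) := hMA
      _ ≤ 2 ^ (2 / (2 - q)) * A ^ ((1 : ℝ) / 2) := by gcongr
      _ ≤ _ := by gcongr; linarith
  · have hMB : M ^ (2 - q) ≤ 4 * B := by
      rcases hM.eq_or_lt with rfl | hMpos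
      · rw [zero_rpow h2q.ne']
        positivity
      have hsplit : M ^ 2 = M ^ q * M ^ (2 - q) := by
        rw [← rpow_add hMpos, add_sub_cancel, rpow_two]
      refine le_of_mul_le_mul_left ?_ (rpow_pos_of_pos hMpos q)
      linarith
    calc M = (M ^ (2 - q)) ^ (1 / (2 - q)) := by
          rw [← rpow_mul hM, mul_one_div_cancel h2q.ne', rpow_one]
      _ ≤ (4 * B) ^ (1 / (2 - q)) := by gcongr
      _ = 2 ^ (2 / (2 - q)) * B ^ (1 / (2 - q)) := by
          rw [mul_rpow (by norm_num) hB, show (4 : ℝ) = 2 ^ (2 : ℝ) by norm_num, ← rpow_mul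
            (by norm_num), mul_one_div]
      _ ≤ _ := by gcongr; linarith

lemma radial_energy_deriv_nonpos {c q s v w A B M : ℝ} (hc : 1 ≤ c) (hq : 0 ≤ q) (hs : 0 ≤ s)
    (hv : 0 ≤ v) (hvM : v ≤ M) (hode : w + (c - 1) / s * v = A + B * |v| ^ q) :
    v * w - A * v - M ^ q * (max B 0 * v) ≤ 0 := by
  rw [abs_of_nonneg hv] at hode
  have hB : B * v ^ q ≤ max B 0 * M ^ q :=
    mul_le_mul (le_max_left _ _) (rpow_le_rpow hv hvM hq) (rpow_nonneg hv q) (le_max_right _ _)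
  have hdamp : 0 ≤ (c - 1) / s * v * v := by
    have : 0 ≤ (c - 1) / s := div_nonneg (by linarith) hs
    positivity
  have hw : w = A + B * v ^ q - (c - 1) / s * v := by linarith
  rw [hw]
  nlinarith [mul_le_mul_of_nonneg_left hB hv]

lemma eventually_deriv_nonneg_of_radial_ode {c q a : ℝ} {f g φ : ℝ → ℝ} (hc : 1 ≤ c) (hq : 0 < q)
    (hf : Continuous f) (hfa : 0 < f a) (hg : Continuous g)
    (hφ : Tendsto φ (𝓝[>] 0) (𝓝 a)) (hd0 : Tendsto (deriv φ) (𝓝[>] 0) (𝓝 0))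
    (hode : ∀ᶠ r in 𝓝[>] 0, HasDerivAt (deriv φ) (deriv (deriv φ) r) r ∧
      deriv (deriv φ) r + (c - 1) / r * deriv φ r = f (φ r) + g (φ r) * |deriv φ r| ^ q) :
    ∀ᶠ r in 𝓝[>] 0, 0 ≤ deriv φ r := by
  have hrhs : Tendsto (fun r => f (φ r) + g (φ r) * |deriv φ r| ^ q) (𝓝[>] 0) (𝓝 (f a)) := by
    have hpow := (continuousAt_rpow_const 0 q (Or.inr hq.le)).tendsto.comp
      (by simpa using hd0.abs)
    simpa [zero_rpow hq.ne'] using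
      ((hf.tendsto a).comp hφ).add (((hg.tendsto a).comp hφ).mul hpow)
  obtain ⟨u, hu, hsub⟩ := mem_nhdsGT_iff_exists_Ioo_subset.1
    (hode.and (hrhs.eventually (eventually_gt_nhds hfa)))
  set h := fun r => r ^ (c - 1) * deriv φ r
  have hh : ∀ r ∈ Ioo 0 u,
      HasDerivAt h (r ^ (c - 1) * (f (φ r) + g (φ r) * |deriv φ r| ^ q)) r := by
    intro r hr
    obtain ⟨⟨hd, hode⟩, -⟩ := hsub hr
    rw [← hode]
    exact hd.rpow_const_mul (c - 1) hr.1
  have hmono : MonotoneOn h (Ioo 0 u) :=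
    monotoneOn_of_hasDerivWithinAt_nonneg (convex_Ioo 0 u)
      (fun r hr => (hh r hr).continuousAt.continuousWithinAt)
      (by simpa only [interior_Ioo] using fun r hr => (hh r hr).hasDerivWithinAt)
      (by simpa only [interior_Ioo] using
        fun r hr => (mul_pos (rpow_pos_of_pos hr.1 _) (hsub hr).2).le)
  have hh0 : Tendsto h (𝓝[>] 0) (𝓝 0) := by
    simpa using ((continuousAt_rpow_const 0 (c - 1) (Or.inr (by linarith))).tendsto.mono_left
      nhdsWithin_le_nhds).mul hd0
  filter_upwards [Ioo_mem_nhdsGT hu] with r hr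
  refine nonneg_of_mul_nonneg_right (le_of_tendsto hh0 ?_) (rpow_pos_of_pos hr.1 (c - 1))
  filter_upwards [Ioo_mem_nhdsGT hr.1] with t ht
  exact hmono ⟨ht.1, ht.2.trans hr.2⟩ hr ht.2.le

lemma deriv_nonneg_of_radial_ode {c q R a : ℝ} {f g φ : ℝ → ℝ} (hc : 1 ≤ c) (hq : 0 < q)
    (hf : Continuous f) (hfpos : ∀ t, 0 < f t) (hg : Continuous g)
    (hφ : Tendsto φ (𝓝[>] 0) (𝓝 a)) (hd0 : Tendsto (deriv φ) (𝓝[>] 0) (𝓝 0))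
    (hφ' : ∀ r ∈ Ioo 0 R, HasDerivAt (deriv φ) (deriv (deriv φ) r) r)
    (hode : ∀ r ∈ Ioo 0 R,
      deriv (deriv φ) r + (c - 1) / r * deriv φ r = f (φ r) + g (φ r) * |deriv φ r| ^ q) :
    ∀ r ∈ Ioo 0 R, 0 ≤ deriv φ r := by
  intro r hr
  have hnear := eventually_deriv_nonneg_of_radial_ode hc hq hf (hfpos a) hg hφ hd0 <| by
    filter_upwards [Ioo_mem_nhdsGT (hr.1.trans hr.2)] with s hs using ⟨hφ' s hs, hode s hs⟩
  obtain ⟨t, ht, htr⟩ := (hnear.and (Ioo_mem_nhdsGT hr.1)).exists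
  have hsub : Icc t r ⊆ Ioo 0 R := Icc_subset_Ioo htr.1 hr.2
  -- At a zero of `φ'` the ODE gives `φ'' = f(φ) > 0`.
  refine nonneg_of_deriv_pos_of_eq_zero (fun s hs => hφ' s (hsub hs)) ht
    (fun s hs hs0 => ?_) r ⟨htr.2.le, le_rfl⟩
  have := hode s (hsub (Ico_subset_Icc_self hs))
  rw [hs0, abs_zero, zero_rpow hq.ne', mul_zero, mul_zero, add_zero, add_zero] at this
  exact this ▸ hfpos _

lemma half_sq_deriv_le_of_radial_ode {c q r a M : ℝ} {f g φ : ℝ → ℝ} (hc : 1 ≤ c) (hq : 0 ≤ q)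
    (hr : 0 ≤ r) (hf : Continuous f) (hg : Continuous g)
    (hφc : ContinuousOn φ (Icc 0 r)) (hφ'c : ContinuousOn (deriv φ) (Icc 0 r))
    (hφd : ∀ s ∈ Ioo 0 r, HasDerivAt φ (deriv φ s) s)
    (hφ'd : ∀ s ∈ Ioo 0 r, HasDerivAt (deriv φ) (deriv (deriv φ) s) s)
    (hφa : φ 0 = a) (hφ'0 : deriv φ 0 = 0)
    (hbound : ∀ s ∈ Ioo 0 r, 0 ≤ deriv φ s ∧ deriv φ s ≤ M)
    (hode : ∀ s ∈ Ioo 0 r,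
      deriv (deriv φ) s + (c - 1) / s * deriv φ s = f (φ s) + g (φ s) * |deriv φ s| ^ q) :
    deriv φ r ^ 2 / 2 ≤ (∫ t in a..φ r, f t) + M ^ q * ∫ t in a..φ r, max (g t) 0 := by
  set F := fun x => ∫ t in a..x, f t
  set G := fun x => ∫ t in a..x, max (g t) 0
  have hF : ∀ x, HasDerivAt F (f x) x := fun x => (hf.integral_hasStrictDerivAt a x).hasDerivAt
  have hG : ∀ x, HasDerivAt G (max (g x) 0) x :=
    fun x => ((hg.max continuous_const).integral_hasStrictDerivAt a x).hasDerivAt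
  set W := fun s => deriv φ s ^ 2 / 2 - F (φ s) - M ^ q * G (φ s)
  set W' := fun s => deriv φ s * deriv (deriv φ) s - f (φ s) * deriv φ s
      - M ^ q * (max (g (φ s)) 0 * deriv φ s)
  have hW : ∀ s ∈ Ioo 0 r, HasDerivAt W (W' s) s := by
    intro s hs
    refine ((((hφ'd s hs).pow 2).div_const 2).sub ((hF _).comp s (hφd s hs))).sub
      (((hG _).comp s (hφd s hs)).const_mul (M ^ q)) |>.congr_deriv ?_
    push_cast
    ring
  have hanti : AntitoneOn W (Icc 0 r) := by
    refine antitoneOn_of_hasDerivWithinAt_nonpos (f' := W') (convex_Icc 0 r) ?_ ?_ ?_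
    · have hFc := continuous_iff_continuousAt.2 fun x => (hF x).continuousAt
      have hGc := continuous_iff_continuousAt.2 fun x => (hG x).continuousAt
      exact ((hφ'c.pow 2).div_const 2).sub (hFc.comp_continuousOn hφc) |>.sub
        ((hGc.comp_continuousOn hφc).const_smul (M ^ q))
    · simpa only [interior_Icc] using fun s hs => (hW s hs).hasDerivWithinAt
    · simpa only [interior_Icc] using fun s hs =>
        radial_energy_deriv_nonpos hc hq hs.1.le (hbound s hs).1 (hbound s hs).2 (hode s hs)
  have := hanti ⟨le_rfl, hr⟩ ⟨hr, le_rfl⟩ hr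
  simp only [W, F, G, hφa, hφ'0, intervalIntegral.integral_same] at this
  linarith

lemma deriv_le_of_radial_ode {c q r a : ℝ} {f g φ : ℝ → ℝ} (hc : 1 ≤ c) (hq0 : 0 ≤ q)
    (hq2 : q < 2) (hr : 0 ≤ r) (hf : Continuous f) (hf0 : ∀ t, 0 ≤ f t) (hg : Continuous g)
    (hφc : ContinuousOn φ (Icc 0 r)) (hφ'c : ContinuousOn (deriv φ) (Icc 0 r))
    (hφd : ∀ s ∈ Ioo 0 r, HasDerivAt φ (deriv φ s) s)
    (hφ'd : ∀ s ∈ Ioo 0 r, HasDerivAt (deriv φ) (deriv (deriv φ) s) s)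
    (hφa : φ 0 = a) (hφ'0 : deriv φ 0 = 0) (hφ'nonneg : ∀ s ∈ Ioo 0 r, 0 ≤ deriv φ s)
    (hode : ∀ s ∈ Ioo 0 r,
      deriv (deriv φ) s + (c - 1) / s * deriv φ s = f (φ s) + g (φ s) * |deriv φ s| ^ q) :
    deriv φ r ≤ (2 : ℝ) ^ (2 / (2 - q)) *
      ((∫ t in a..φ r, f t) ^ ((1 : ℝ) / 2) + (∫ t in a..φ r, max (g t) 0) ^ (1 / (2 - q))) := by
  have hφmono : MonotoneOn φ (Icc 0 r) := monotoneOn_of_hasDerivWithinAt_nonneg (convex_Icc 0 r)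
    hφc (by simpa only [interior_Icc] using fun s hs => (hφd s hs).hasDerivWithinAt)
    (by simpa only [interior_Icc] using hφ'nonneg)
  obtain ⟨r₀, hr₀, hmax⟩ := isCompact_Icc.exists_isMaxOn (nonempty_Icc.2 hr) hφ'c
  have hsub : Icc 0 r₀ ⊆ Icc 0 r := Icc_subset_Icc_right hr₀.2
  have hsub' : Ioo 0 r₀ ⊆ Ioo 0 r := Ioo_subset_Ioo_right hr₀.2
  have henergy := half_sq_deriv_le_of_radial_ode (M := deriv φ r₀) hc hq0 hr₀.1 hf hg
    (hφc.mono hsub) (hφ'c.mono hsub) (fun s hs => hφd s (hsub' hs)) (fun s hs => hφ'd s (hsub' hs))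
    hφa hφ'0 (fun s hs => ⟨hφ'nonneg s (hsub' hs), hmax (Ioo_subset_Icc_self (hsub' hs))⟩)
    (fun s hs => hode s (hsub' hs))
  have haφ : a ≤ φ r₀ := hφa ▸ hφmono ⟨le_rfl, hr⟩ hr₀ hr₀.1
  have hφr : φ r₀ ≤ φ r := hφmono hr₀ ⟨hr, le_rfl⟩ hr₀.2
  have hF := intervalIntegral.integral_mono_interval (μ := volume) le_rfl haφ hφr
    (Eventually.of_forall hf0) (hf.intervalIntegrable a (φ r))
  have hG := intervalIntegral.integral_mono_interval (μ := volume) le_rfl haφ hφr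
    (Eventually.of_forall fun t => le_max_right (g t) 0)
    ((hg.max continuous_const).intervalIntegrable a (φ r))
  have hM : 0 ≤ deriv φ r₀ := hφ'0 ▸ hmax ⟨le_rfl, hr⟩
  refine (hmax ⟨hr, le_rfl⟩).trans (le_two_rpow_mul_of_sq_le hq0 hq2 hM
    (intervalIntegral.integral_nonneg (haφ.trans hφr) fun t _ => hf0 t)
    (intervalIntegral.integral_nonneg (haφ.trans hφr) fun t _ => le_max_right (g t) 0) ?_)
  nlinarith [mul_le_mul_of_nonneg_left hG (rpow_nonneg hM q)]

theorem stmt4_general (c q R a : ℝ) (hc : 1 ≤ c) (hq0 : 0 < q) (hq2 : q < 2) (hR : 0 < R)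
    (f g φ : ℝ → ℝ)
    (hf : Continuous f) (hfpos : ∀ t, 0 < f t)
    (hg : Continuous g)
    (hφc : ContinuousOn φ (Set.Ico 0 R))
    (hφ2 : ContDiffOn ℝ 2 φ (Set.Ioo 0 R))
    (hφa : φ 0 = a)
    (hd0 : Filter.Tendsto (deriv φ) (nhdsWithin 0 (Set.Ioi 0)) (nhds 0))
    (hode : ∀ r ∈ Set.Ioo 0 R,
      deriv (deriv φ) r + (c - 1) / r * deriv φ r = f (φ r) + g (φ r) * |deriv φ r| ^ q) :
    ∀ r ∈ Set.Ico 0 R,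
      deriv φ r ≤ (2 : ℝ) ^ (2 / (2 - q)) *
        ((∫ t in a..φ r, f t) ^ ((1 : ℝ) / 2) +
          (∫ t in a..φ r, max (g t) 0) ^ (1 / (2 - q))) := by
  have hφd : ∀ s ∈ Ioo 0 R, HasDerivAt φ (deriv φ s) s := fun s hs =>
    ((hφ2.differentiableOn (by norm_num)).differentiableAt (Ioo_mem_nhds hs.1 hs.2)).hasDerivAt
  have hφ'C : ContDiffOn ℝ 1 (deriv φ) (Ioo 0 R) := hφ2.deriv_of_isOpen isOpen_Ioo (by norm_num)
  have hφ'd : ∀ s ∈ Ioo 0 R, HasDerivAt (deriv φ) (deriv (deriv φ) s) s := fun s hs =>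
    ((hφ'C.differentiableOn one_ne_zero).differentiableAt (Ioo_mem_nhds hs.1 hs.2)).hasDerivAt
  have hφ0 : ContinuousWithinAt φ (Ioo 0 R) 0 := (hφc 0 ⟨le_rfl, hR⟩).mono Ioo_subset_Ico_self
  have hφ'0 : deriv φ 0 = 0 := deriv_eq_zero_of_tendsto_deriv_nhdsGT (Ioo_mem_nhdsGT hR)
    (fun s hs => (hφd s hs).differentiableAt.differentiableWithinAt) hφ0 hd0
  have hφ'c : ContinuousOn (deriv φ) (Ico 0 R) := continuousOn_Ico_of_continuousOn_Ioo
    (fun s hs => (hφ'd s hs).continuousAt.continuousWithinAt) (by rwa [ContinuousWithinAt, hφ'0])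
  have hφ'nonneg := deriv_nonneg_of_radial_ode hc hq0 hf hfpos hg
    (hφa ▸ (hφ0.mono_of_mem_nhdsWithin (Ioo_mem_nhdsGT hR)).tendsto) hd0 hφ'd hode
  intro r hr
  have hsub : Icc 0 r ⊆ Ico 0 R := Icc_subset_Ico_right hr.2
  have hsub' : Ioo 0 r ⊆ Ioo 0 R := Ioo_subset_Ioo_right hr.2.le
  exact deriv_le_of_radial_ode hc hq0.le hq2 hr.1 hf (fun t => (hfpos t).le) hg (hφc.mono hsub)
    (hφ'c.mono hsub) (fun s hs => hφd s (hsub' hs)) (fun s hs => hφ'd s (hsub' hs)) hφa hφ'0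
    (fun s hs => hφ'nonneg s (hsub' hs)) (fun s hs => hode s (hsub' hs))

theorem stmt4 (c q R a : ℝ) (hc : 1 ≤ c) (hq0 : 0 < q) (hq2 : q < 2) (hR : 0 < R)
    (f g φ : ℝ → ℝ)
    (hf : Continuous f) (hfpos : ∀ t, 0 < f t) (hfmono : Monotone f)
    (hg : Continuous g) (hgmono : Monotone g)
    (hφc : ContinuousOn φ (Set.Ico 0 R))
    (hφ2 : ContDiffOn ℝ 2 φ (Set.Ioo 0 R))
    (hφa : φ 0 = a)
    (hd0 : Filter.Tendsto (deriv φ) (nhdsWithin 0 (Set.Ioi 0)) (nhds 0))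
    (hd2 : ∃ L, Filter.Tendsto (deriv (deriv φ)) (nhdsWithin 0 (Set.Ioi 0)) (nhds L))
    (hode : ∀ r ∈ Set.Ioo 0 R,
      deriv (deriv φ) r + (c - 1) / r * deriv φ r = f (φ r) + g (φ r) * |deriv φ r| ^ q) :
    ∀ r ∈ Set.Ico 0 R,
      deriv φ r ≤ (2 : ℝ) ^ (2 / (2 - q)) *
        ((∫ t in a..φ r, f t) ^ ((1 : ℝ) / 2) +
          (∫ t in a..φ r, max (g t) 0) ^ (1 / (2 - q))) :=
  stmt4_general c q R a hc hq0 hq2 hR f g φ hf hfpos hg hφc hφ2 hφa hd0 hode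
end

section
/- Let 0 < q < 2, c ≥ 1, f, g continuous nondecreasing with f positive, and suppose g(a) ≥ 0. If φ is a C² solution of φ'' + ((c-1)/r)φ' = f(φ) + g(φ)|φ'|^q on [0,R) with φ(0)=a, φ'(0)=0, then for all r ∈ [0,R): φ'(r) ≥ (1/2) ((2-q)/c)^{1/(2-q)} [ (∫_a^{φ(r)} f(t) dt)^{1/2} + (∫_a^{φ(r)} g⁺(t) dt)^{1/(2-q)} ]. -/
/-!
Near `0` the equation and l'Hôpital's rule give `φ'' → f(a)/c > 0`. As long as `φ'' > 0` on
`(0, b)`, `φ'` is positive and increasing there, so `φ ≥ a`, `g(φ) ≥ 0`, and the right-hand side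
`h = f(φ) + g(φ) φ'^q` is nondecreasing; integrating `(s^(c-1) φ')' = s^(c-1) h(s) ≤ s^(c-1) h(b)`
gives `φ'(b) ≤ b h(b) / c`, hence `φ''(b) ≥ h(b) / c > 0`, and a continuity argument propagates
this to all of `(0, R)`. Multiplying `φ'' ≥ f(φ)/c` by `φ'` and `φ'' ≥ g⁺(φ) φ'^q / c` by
`φ'^(1-q)` and integrating gives `φ'^2 ≥ (2/c) ∫_a^φ f` and `φ'^(2-q) ≥ ((2-q)/c) ∫_a^φ g⁺`;
averaging the two, with `((2-q)/c)^(1/(2-q)) ≤ (2/c)^(1/2)`, gives the bound.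
-/

open Set Filter Topology

theorem MonotoneOn.deriv_nonneg_of_uniqueDiffWithinAt {u : ℝ → ℝ} {s : Set ℝ} {x : ℝ}
    (hu : MonotoneOn u s) (hs : UniqueDiffWithinAt ℝ s x) : 0 ≤ deriv u x := by
  by_cases hd : DifferentiableAt ℝ u x
  · rw [← hd.derivWithin hs]
    exact hu.derivWithin_nonneg
  · rw [deriv_zero_of_not_differentiableAt hd]

theorem ContDiffOn.hasDerivAt_deriv {u : ℝ → ℝ} {s : Set ℝ} {n : WithTop ℕ∞}
    (hu : ContDiffOn ℝ n u s) (hs : IsOpen s) (hn : n ≠ 0) {x : ℝ} (hx : x ∈ s) :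
    HasDerivAt u (deriv u x) x :=
  ((hu.differentiableOn hn).differentiableAt (hs.mem_nhds hx)).hasDerivAt

theorem Convex.monotoneOn_of_hasDerivAt_nonneg {D : Set ℝ} {u u' : ℝ → ℝ} (hD : Convex ℝ D)
    (hc : ContinuousOn u D) (hu : ∀ x ∈ interior D, HasDerivAt u (u' x) x)
    (hu' : ∀ x ∈ interior D, 0 ≤ u' x) : MonotoneOn u D :=
  monotoneOn_of_hasDerivWithinAt_nonneg hD hc (fun x hx => (hu x hx).hasDerivWithinAt) hu'

theorem monotoneOn_Ioc_of_hasDerivAt_nonneg_s6 {u u' : ℝ → ℝ} {x₀ b : ℝ}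
    (hu : ∀ x ∈ Ioc x₀ b, HasDerivAt u (u' x) x) (hu' : ∀ x ∈ Ioo x₀ b, 0 ≤ u' x) :
    MonotoneOn u (Ioc x₀ b) :=
  (convex_Ioc x₀ b).monotoneOn_of_hasDerivAt_nonneg
    (fun x hx => (hu x hx).continuousAt.continuousWithinAt)
    (fun x hx => hu x (interior_subset hx)) (fun x hx => hu' x (by rwa [interior_Ioc] at hx))

theorem MonotoneOn.le_of_tendsto_nhdsGT {u : ℝ → ℝ} {x₀ b ℓ : ℝ} (hu : MonotoneOn u (Ioc x₀ b))
    (hb : x₀ < b) (hlim : Tendsto u (𝓝[>] x₀) (𝓝 ℓ)) : ℓ ≤ u b :=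
  le_of_tendsto hlim <| by
    filter_upwards [Ioc_mem_nhdsGT hb] with x hx using hu hx (right_mem_Ioc.2 hb) hx.2

theorem le_of_tendsto_nhdsGT_of_hasDerivAt_nonneg_s6 {u u' : ℝ → ℝ} {x₀ b ℓ : ℝ} (hb : x₀ < b)
    (hu : ∀ x ∈ Ioc x₀ b, HasDerivAt u (u' x) x) (hu' : ∀ x ∈ Ioo x₀ b, 0 ≤ u' x)
    (hlim : Tendsto u (𝓝[>] x₀) (𝓝 ℓ)) : ℓ ≤ u b :=
  (monotoneOn_Ioc_of_hasDerivAt_nonneg_s6 hu hu').le_of_tendsto_nhdsGT hb hlim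

theorem lt_of_tendsto_nhdsGT_of_hasDerivAt_pos {u u' : ℝ → ℝ} {x₀ b ℓ : ℝ} (hb : x₀ < b)
    (hu : ∀ x ∈ Ioc x₀ b, HasDerivAt u (u' x) x) (hu' : ∀ x ∈ Ioo x₀ b, 0 < u' x)
    (hlim : Tendsto u (𝓝[>] x₀) (𝓝 ℓ)) : ℓ < u b := by
  have hmono : StrictMonoOn u (Ioc x₀ b) :=
    strictMonoOn_of_hasDerivWithinAt_pos (convex_Ioc x₀ b)
      (fun x hx => (hu x hx).continuousAt.continuousWithinAt)
      (fun x hx => (hu x (interior_subset hx)).hasDerivWithinAt)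
      (fun x hx => hu' x (by rwa [interior_Ioc] at hx))
  obtain ⟨m, hm₀, hmb⟩ := exists_between hb
  calc ℓ ≤ u m :=
        (hmono.monotoneOn.mono (Ioc_subset_Ioc_right hmb.le)).le_of_tendsto_nhdsGT hm₀ hlim
    _ < u b := hmono ⟨hm₀, hmb.le⟩ (right_mem_Ioc.2 hb) hmb

theorem ContinuousOn.forall_mem_Ioo_pos_of_step {u : ℝ → ℝ} {R : ℝ}
    (hu : ContinuousOn u (Ioo 0 R))
    (hbase : ∀ᶠ s in 𝓝[>] 0, 0 < u s)
    (hstep : ∀ b ∈ Ioo 0 R, (∀ s ∈ Ioo 0 b, 0 < u s) → 0 < u b) :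
    ∀ r ∈ Ioo 0 R, 0 < u r := by
  intro r hr
  by_contra! hur
  obtain ⟨δ, hδ, hδu⟩ := mem_nhdsGT_iff_exists_Ioo_subset.1 hbase
  obtain ⟨ε, hε, hεδr⟩ := exists_between (lt_min hδ hr.1)
  obtain ⟨hεδ, hεr⟩ := lt_min_iff.1 hεδr
  set K := {s ∈ Icc ε r | u s ≤ 0}
  have hKsub : Icc ε r ⊆ Ioo 0 R := fun s hs => ⟨hε.trans_le hs.1, hs.2.trans_lt hr.2⟩
  have hK : IsClosed K := (hu.mono hKsub).preimage_isClosed_of_isClosed isClosed_Icc isClosed_Iic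
  have hKbdd : BddBelow K := ⟨ε, fun s hs => hs.1.1⟩
  have hr₀ : sInf K ∈ K := hK.csInf_mem ⟨r, ⟨hεr.le, le_rfl⟩, hur⟩ hKbdd
  refine (hstep _ (hKsub hr₀.1) fun s hs => ?_).not_ge hr₀.2
  by_cases hsε : s < ε
  · exact hδu ⟨hs.1, hsε.trans hεδ⟩
  · by_contra! hus
    exact (csInf_le hKbdd ⟨⟨not_lt.1 hsε, hs.2.le.trans hr₀.1.2⟩, hus⟩).not_gt hs.2

theorem HasDerivAt.rpow_sub_one_mul {u : ℝ → ℝ} {u' s : ℝ} (c : ℝ) (hu : HasDerivAt u u' s)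
    (hs : 0 < s) :
    HasDerivAt (fun t => t ^ (c - 1) * u t) (s ^ (c - 1) * (u' + (c - 1) / s * u s)) s := by
  refine ((Real.hasDerivAt_rpow_const (Or.inl hs.ne')).mul hu).congr_deriv ?_
  rw [Real.rpow_sub_one hs.ne' (c - 1)]
  field_simp
  ring

theorem le_mul_div_of_add_div_mul_le {u u' : ℝ → ℝ} {b c H : ℝ} (hb : 0 < b) (hc : 1 ≤ c)
    (hu : ∀ s ∈ Ioc 0 b, HasDerivAt u (u' s) s)
    (hH : ∀ s ∈ Ioo 0 b, u' s + (c - 1) / s * u s ≤ H)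
    (hlim : Tendsto u (𝓝[>] 0) (𝓝 0)) : u b ≤ b * H / c := by
  have hc0 : 0 < c := by linarith
  have hpow : ∀ e : ℝ, 0 ≤ e → Tendsto (fun s : ℝ => s ^ e) (𝓝[>] 0) (𝓝 (0 ^ e)) := fun e he =>
    (Real.continuousAt_rpow_const 0 e (Or.inr he)).tendsto.mono_left nhdsWithin_le_nhds
  -- `(s ^ (c - 1) * u s)' = s ^ (c - 1) * (u' s + (c - 1) / s * u s) ≤ (s ^ c * H / c)'`
  have key : 0 ≤ b ^ c * H / c - b ^ (c - 1) * u b := by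
    refine le_of_tendsto_nhdsGT_of_hasDerivAt_nonneg_s6
      (u := fun s => s ^ c * H / c - s ^ (c - 1) * u s)
      (u' := fun s => s ^ (c - 1) * (H - (u' s + (c - 1) / s * u s))) hb (fun s hs => ?_)
      (fun s hs => mul_nonneg (Real.rpow_nonneg hs.1.le _) (sub_nonneg.2 (hH s hs))) ?_
    · refine ((((Real.hasDerivAt_rpow_const (Or.inl hs.1.ne')).mul_const H).div_const c).sub
        ((hu s hs).rpow_sub_one_mul c hs.1)).congr_deriv ?_
      field_simp
    · simpa [Real.zero_rpow hc0.ne'] using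
        (((hpow c hc0.le).mul_const H).div_const c).sub ((hpow (c - 1) (by linarith)).mul hlim)
  have hbc : b ^ c = b ^ (c - 1) * b := by rw [← Real.rpow_add_one hb.ne']; norm_num
  refine le_of_mul_le_mul_left ?_ (Real.rpow_pos_of_pos hb (c - 1))
  rw [hbc] at key
  linarith [show b ^ (c - 1) * b * H / c = b ^ (c - 1) * (b * H / c) by ring]

theorem div_rpow_one_div_le {c x : ℝ} (hc : 1 ≤ c) (hx0 : 0 < x) (hx2 : x ≤ 2) :
    (x / c) ^ (1 / x) ≤ (2 / c) ^ ((1 : ℝ) / 2) := by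
  have hc0 : 0 < c := by linarith
  rw [Real.rpow_def_of_pos (div_pos hx0 hc0), Real.rpow_def_of_pos (div_pos two_pos hc0),
    Real.exp_le_exp, Real.log_div hx0.ne' hc0.ne', Real.log_div two_ne_zero hc0.ne',
    mul_one_div, mul_one_div, div_le_div_iff₀ hx0 two_pos]
  -- `log x ≤ log 2 + x / 2 - 1` is `log t ≤ t - 1` at `t = x / 2`
  have hlogx : Real.log x ≤ Real.log 2 + x / 2 - 1 := by
    have := Real.log_le_sub_one_of_pos (half_pos hx0)
    rw [Real.log_div hx0.ne' two_ne_zero] at this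
    linarith
  have hlog2 : Real.log 2 ≤ 1 := by
    linarith [Real.log_le_sub_one_of_pos (two_pos : (0 : ℝ) < 2)]
  nlinarith [mul_nonneg (sub_nonneg.2 hx2) (sub_nonneg.2 hlog2),
    mul_nonneg (sub_nonneg.2 hx2) (Real.log_nonneg hc)]

theorem eq_div_of_tendsto_second_deriv {c q a R L : ℝ} {f g φ φ' φ'' : ℝ → ℝ} (hR : 0 < R)
    (hc : c ≠ 0) (hq : 0 < q) (hf : ContinuousAt f a) (hg : ContinuousAt g a)
    (hφ : Tendsto φ (𝓝[>] 0) (𝓝 a)) (hφ' : ∀ s ∈ Ioo 0 R, HasDerivAt φ' (φ'' s) s)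
    (hlim : Tendsto φ' (𝓝[>] 0) (𝓝 0)) (hL : Tendsto φ'' (𝓝[>] 0) (𝓝 L))
    (hode : ∀ s ∈ Ioo 0 R, φ'' s + (c - 1) / s * φ' s = f (φ s) + g (φ s) * |φ' s| ^ q) :
    L = f a / c := by
  have hIoo : Ioo 0 R ∈ 𝓝[>] (0 : ℝ) := Ioo_mem_nhdsGT hR
  have hslope : Tendsto (fun s => φ' s / s) (𝓝[>] 0) (𝓝 L) :=
    HasDerivAt.lhopital_zero_nhdsGT (eventually_of_mem hIoo hφ')
      (.of_forall hasDerivAt_id) (.of_forall fun _ => one_ne_zero) hlim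
      (tendsto_id.mono_left nhdsWithin_le_nhds) (by simpa using hL)
  have hpow : Tendsto (fun s => |φ' s| ^ q) (𝓝[>] 0) (𝓝 0) := by
    simpa [Function.comp_def, Real.zero_rpow hq.ne'] using
      (Real.continuousAt_rpow_const 0 q (Or.inr hq.le)).tendsto.comp (by simpa using hlim.abs)
  have hrhs : Tendsto φ'' (𝓝[>] 0) (𝓝 (f a + g a * 0 - (c - 1) * L)) := by
    refine (((hf.tendsto.comp hφ).add ((hg.tendsto.comp hφ).mul hpow)).sub
      (hslope.const_mul (c - 1))).congr' ?_
    filter_upwards [hIoo] with s hs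
    simp only [Function.comp, ← hode s hs]
    ring
  have := tendsto_nhds_unique hL hrhs
  field_simp
  linarith

theorem second_deriv_lower_bound {c q a R b : ℝ} {f g φ φ' φ'' : ℝ → ℝ} (hc : 1 ≤ c)
    (hq : 0 ≤ q) (hf : Monotone f) (hg : Monotone g) (hga : 0 ≤ g a)
    (hφc : ContinuousOn φ (Ico 0 R)) (hφa : φ 0 = a)
    (hφ : ∀ s ∈ Ioo 0 R, HasDerivAt φ (φ' s) s) (hφ' : ∀ s ∈ Ioo 0 R, HasDerivAt φ' (φ'' s) s)
    (hlim : Tendsto φ' (𝓝[>] 0) (𝓝 0))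
    (hode : ∀ s ∈ Ioo 0 R, φ'' s + (c - 1) / s * φ' s = f (φ s) + g (φ s) * |φ' s| ^ q)
    (hb : b ∈ Ioo 0 R) (hconvex : ∀ s ∈ Ioo 0 b, 0 < φ'' s) :
    0 < φ' b ∧ a ≤ φ b ∧ 0 ≤ g (φ b) ∧ (f (φ b) + g (φ b) * φ' b ^ q) / c ≤ φ'' b := by
  obtain ⟨hb0, hbR⟩ := hb
  have hsub : Ioc 0 b ⊆ Ioo 0 R := fun s hs => ⟨hs.1, hs.2.trans_lt hbR⟩
  have hpos : ∀ s ∈ Ioc 0 b, 0 < φ' s := fun s hs =>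
    lt_of_tendsto_nhdsGT_of_hasDerivAt_pos hs.1 (fun x hx => hφ' x (hsub ⟨hx.1, hx.2.trans hs.2⟩))
      (fun x hx => hconvex x ⟨hx.1, hx.2.trans_le hs.2⟩) hlim
  have hφmono : MonotoneOn φ (Icc 0 b) := by
    refine (convex_Icc 0 b).monotoneOn_of_hasDerivAt_nonneg (u' := φ')
      (hφc.mono (Icc_subset_Ico_right hbR))
      (fun x hx => ?_) (fun x hx => ?_) <;> rw [interior_Icc] at hx
    exacts [hφ x (hsub (Ioo_subset_Ioc_self hx)), (hpos x (Ioo_subset_Ioc_self hx)).le]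
  have haφ : ∀ s ∈ Icc 0 b, a ≤ φ s := fun s hs => hφa ▸ hφmono (left_mem_Icc.2 hb0.le) hs hs.1
  have hφ'mono : MonotoneOn φ' (Ioc 0 b) :=
    monotoneOn_Ioc_of_hasDerivAt_nonneg_s6 (fun x hx => hφ' x (hsub hx))
      (fun x hx => (hconvex x hx).le)
  have hgb : 0 ≤ g (φ b) := hga.trans (hg (haφ b (right_mem_Icc.2 hb0.le)))
  set H := f (φ b) + g (φ b) * φ' b ^ q
  -- the right-hand side of the equation is nondecreasing along the solution
  have hH : ∀ s ∈ Ioo 0 b, φ'' s + (c - 1) / s * φ' s ≤ H := by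
    intro s hs
    have hs' := Ioo_subset_Ioc_self hs
    have hφs := hφmono (Ioc_subset_Icc_self hs') (right_mem_Icc.2 hb0.le) hs.2.le
    rw [hode s (hsub hs'), abs_of_pos (hpos s hs')]
    exact add_le_add (hf hφs) (mul_le_mul (hg hφs)
      (Real.rpow_le_rpow (hpos s hs').le (hφ'mono hs' (right_mem_Ioc.2 hb0) hs.2.le) hq)
      (Real.rpow_nonneg (hpos s hs').le q) hgb)
  have hbound : φ' b ≤ b * H / c :=
    le_mul_div_of_add_div_mul_le hb0 hc (fun s hs => hφ' s (hsub hs)) hH hlim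
  refine ⟨hpos b (right_mem_Ioc.2 hb0), haφ b (right_mem_Icc.2 hb0.le), hgb, ?_⟩
  have hodeb := hode b ⟨hb0, hbR⟩
  rw [abs_of_pos (hpos b (right_mem_Ioc.2 hb0))] at hodeb
  have hdamp : (c - 1) / b * φ' b ≤ (c - 1) / b * (b * H / c) :=
    mul_le_mul_of_nonneg_left hbound (div_nonneg (by linarith) hb0.le)
  have e : (c - 1) / b * (b * H / c) = H - H / c := by field_simp
  linarith

theorem energy_le_rpow {c p a R r : ℝ} {k φ φ' φ'' : ℝ → ℝ} (hp : p < 2) (hk : Continuous k)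
    (hφa : Tendsto φ (𝓝[>] 0) (𝓝 a))
    (hφ : ∀ s ∈ Ioo 0 R, HasDerivAt φ (φ' s) s) (hφ' : ∀ s ∈ Ioo 0 R, HasDerivAt φ' (φ'' s) s)
    (hlim : Tendsto φ' (𝓝[>] 0) (𝓝 0)) (hpos : ∀ s ∈ Ioo 0 R, 0 < φ' s)
    (hk_le : ∀ s ∈ Ioo 0 R, k (φ s) * φ' s ^ p / c ≤ φ'' s) (hr : r ∈ Ioo 0 R) :
    (2 - p) / c * ∫ t in a..φ r, k t ≤ φ' r ^ (2 - p) := by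
  have hK : ∀ x, HasDerivAt (fun x => ∫ t in a..x, k t) (k x) x := fun x =>
    (hk.integral_hasStrictDerivAt a x).hasDerivAt
  have hsub : Ioc 0 r ⊆ Ioo 0 R := fun s hs => ⟨hs.1, hs.2.trans_lt hr.2⟩
  refine sub_nonneg.1 (le_of_tendsto_nhdsGT_of_hasDerivAt_nonneg_s6
    (u := fun s => φ' s ^ (2 - p) - (2 - p) / c * ∫ t in a..φ s, k t)
    (u' := fun s => φ'' s * (2 - p) * φ' s ^ (2 - p - 1) - (2 - p) / c * (k (φ s) * φ' s))
    hr.1 (fun s hs => ?_) (fun s hs => ?_) ?_)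
  · exact ((hφ' s (hsub hs)).rpow_const (Or.inl (hpos s (hsub hs)).ne')).sub
      (((hK (φ s)).comp s (hφ s (hsub hs))).const_mul _)
  · have hs' := hsub (Ioo_subset_Ioc_self hs)
    have e : φ' s ^ p * φ' s ^ (2 - p - 1) = φ' s := by
      rw [← Real.rpow_add (hpos s hs'), show p + (2 - p - 1) = 1 by ring, Real.rpow_one]
    calc 0 ≤ (2 - p) * φ' s ^ (2 - p - 1) * (φ'' s - k (φ s) * φ' s ^ p / c) :=
          mul_nonneg (mul_nonneg (by linarith) (Real.rpow_nonneg (hpos s hs').le _))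
            (sub_nonneg.2 (hk_le s hs'))
      _ = _ := by linear_combination (-(2 - p) / c * k (φ s)) * e
  · simpa [Real.zero_rpow (by linarith : 2 - p ≠ 0)] using
      ((Real.continuousAt_rpow_const 0 (2 - p) (Or.inr (by linarith))).tendsto.comp hlim).sub
        (((hK a).continuousAt.tendsto.comp hφa).const_mul ((2 - p) / c))

theorem half_mul_add_rpow_le {c q A B y : ℝ} (hc : 1 ≤ c) (hq0 : 0 < q) (hq2 : q < 2)
    (hA : 0 ≤ A) (hB : 0 ≤ B) (hy : 0 ≤ y)
    (hAy : 2 / c * A ≤ y ^ 2) (hBy : (2 - q) / c * B ≤ y ^ (2 - q)) :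
    1 / 2 * ((2 - q) / c) ^ (1 / (2 - q)) * (A ^ ((1 : ℝ) / 2) + B ^ (1 / (2 - q))) ≤ y := by
  have hc0 : 0 < c := by linarith
  have hq : 0 < 2 - q := by linarith
  have hAy' : ((2 - q) / c) ^ (1 / (2 - q)) * A ^ ((1 : ℝ) / 2) ≤ y :=
    calc _ ≤ (2 / c) ^ ((1 : ℝ) / 2) * A ^ ((1 : ℝ) / 2) :=
          mul_le_mul_of_nonneg_right (div_rpow_one_div_le hc hq (by linarith))
            (Real.rpow_nonneg hA _)
      _ = (2 / c * A) ^ ((1 : ℝ) / 2) := (Real.mul_rpow (by positivity) hA).symm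
      _ ≤ y := by
        rw [one_div, Real.rpow_inv_le_iff_of_pos (by positivity) hy two_pos]
        exact_mod_cast hAy
  have hBy' : ((2 - q) / c) ^ (1 / (2 - q)) * B ^ (1 / (2 - q)) ≤ y := by
    rw [← Real.mul_rpow (by positivity) hB, one_div,
      Real.rpow_inv_le_iff_of_pos (by positivity) hy hq]
    exact hBy
  linarith

theorem radial_solution_bounds {c q a R L : ℝ} {f g φ φ' φ'' : ℝ → ℝ} (hc : 1 ≤ c) (hq : 0 < q)
    (hR : 0 < R) (hf : Continuous f) (hfpos : ∀ t, 0 < f t) (hfmono : Monotone f)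
    (hg : Continuous g) (hgmono : Monotone g) (hga : 0 ≤ g a)
    (hφc : ContinuousOn φ (Ico 0 R)) (hφa : φ 0 = a) (hφ0 : Tendsto φ (𝓝[>] 0) (𝓝 a))
    (hφ : ∀ s ∈ Ioo 0 R, HasDerivAt φ (φ' s) s) (hφ' : ∀ s ∈ Ioo 0 R, HasDerivAt φ' (φ'' s) s)
    (hφ''c : ContinuousOn φ'' (Ioo 0 R))
    (hlim : Tendsto φ' (𝓝[>] 0) (𝓝 0)) (hL : Tendsto φ'' (𝓝[>] 0) (𝓝 L))
    (hode : ∀ s ∈ Ioo 0 R, φ'' s + (c - 1) / s * φ' s = f (φ s) + g (φ s) * |φ' s| ^ q) :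
    ∀ s ∈ Ioo 0 R, 0 < φ' s ∧ a ≤ φ s ∧
      f (φ s) / c ≤ φ'' s ∧ max (g (φ s)) 0 * φ' s ^ q / c ≤ φ'' s := by
  have hc0 : 0 < c := by linarith
  have hbound := fun b hb => second_deriv_lower_bound hc hq.le hfmono hgmono hga hφc hφa hφ
    hφ' hlim hode (b := b) hb
  have hLa := eq_div_of_tendsto_second_deriv hR hc0.ne' hq hf.continuousAt hg.continuousAt hφ0
    hφ' hlim hL hode
  have hconvex : ∀ s ∈ Ioo 0 R, 0 < φ'' s := by
    refine hφ''c.forall_mem_Ioo_pos_of_step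
      (hL.eventually (eventually_gt_nhds (hLa ▸ div_pos (hfpos a) hc0))) fun b hb hb' => ?_
    obtain ⟨hpos, -, hgb, hlow⟩ := hbound b hb hb'
    exact lt_of_lt_of_le (div_pos (add_pos_of_pos_of_nonneg (hfpos _)
      (mul_nonneg hgb (Real.rpow_nonneg hpos.le q))) hc0) hlow
  intro s hs
  obtain ⟨hpos, haφ, hgs, hlow⟩ := hbound s hs fun x hx => hconvex x ⟨hx.1, hx.2.trans hs.2⟩
  refine ⟨hpos, haφ, le_trans ?_ hlow, le_trans ?_ hlow⟩ <;>
    refine div_le_div_of_nonneg_right ?_ hc0.le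
  · exact le_add_of_nonneg_right (mul_nonneg hgs (Real.rpow_nonneg hpos.le q))
  · exact (max_eq_left hgs).symm ▸ le_add_of_nonneg_left (hfpos _).le

theorem stmt6 (c q R a : ℝ) (hc : 1 ≤ c) (hq0 : 0 < q) (hq2 : q < 2) (hR : 0 < R)
    (f g φ : ℝ → ℝ)
    (hf : Continuous f) (hfpos : ∀ t, 0 < f t) (hfmono : Monotone f)
    (hg : Continuous g) (hgmono : Monotone g) (hga : 0 ≤ g a)
    (hφc : ContinuousOn φ (Set.Ico 0 R))
    (hφ2 : ContDiffOn ℝ 2 φ (Set.Ioo 0 R))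
    (hφa : φ 0 = a)
    (hd0 : Filter.Tendsto (deriv φ) (nhdsWithin 0 (Set.Ioi 0)) (nhds 0))
    (hd2 : ∃ L, Filter.Tendsto (deriv (deriv φ)) (nhdsWithin 0 (Set.Ioi 0)) (nhds L))
    (hode : ∀ r ∈ Set.Ioo 0 R,
      deriv (deriv φ) r + (c - 1) / r * deriv φ r = f (φ r) + g (φ r) * |deriv φ r| ^ q) :
    ∀ r ∈ Set.Ico 0 R,
      (1 / 2) * ((2 - q) / c) ^ (1 / (2 - q)) *
          ((∫ t in a..φ r, f t) ^ ((1 : ℝ) / 2) +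
            (∫ t in a..φ r, max (g t) 0) ^ (1 / (2 - q)))
        ≤ deriv φ r := by
  have hφ2' : ContDiffOn ℝ 1 (deriv φ) (Ioo 0 R) := hφ2.deriv_of_isOpen isOpen_Ioo (by norm_num)
  have hφ' := fun s (hs : s ∈ Ioo 0 R) => hφ2.hasDerivAt_deriv isOpen_Ioo two_ne_zero hs
  have hφ'' := fun s (hs : s ∈ Ioo 0 R) => hφ2'.hasDerivAt_deriv isOpen_Ioo one_ne_zero hs
  have hφ0 : Tendsto φ (𝓝[>] 0) (𝓝 a) := by
    rw [← nhdsWithin_Ioo_eq_nhdsGT hR, ← hφa]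
    exact ((hφc 0 ⟨le_rfl, hR⟩).mono Ioo_subset_Ico_self).tendsto
  obtain ⟨L, hL⟩ := hd2
  have hsol := radial_solution_bounds hc hq0 hR hf hfpos hfmono hg hgmono hga hφc hφa hφ0 hφ'
    hφ'' (hφ2'.continuousOn_deriv_of_isOpen isOpen_Ioo le_rfl) hd0 hL hode
  intro r hr
  rcases hr.1.eq_or_lt with rfl | hr0
  · have hmono : MonotoneOn φ (Ico 0 R) :=
      (convex_Ico 0 R).monotoneOn_of_hasDerivAt_nonneg hφc (by rwa [interior_Ico])
        (by simpa only [interior_Ico] using fun x hx => (hsol x hx).1.le)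
    simpa [hφa, Real.zero_rpow (inv_ne_zero (by linarith : 2 - q ≠ 0))] using
      hmono.deriv_nonneg_of_uniqueDiffWithinAt (uniqueDiffOn_Ico 0 R 0 ⟨le_rfl, hR⟩)
  · have hr' : r ∈ Ioo 0 R := ⟨hr0, hr.2⟩
    obtain ⟨hpos, haφ, -, -⟩ := hsol r hr'
    refine half_mul_add_rpow_le hc hq0 hq2
      (intervalIntegral.integral_nonneg haφ fun t _ => (hfpos t).le)
      (intervalIntegral.integral_nonneg haφ fun t _ => le_max_right _ _) hpos.le ?_
      (energy_le_rpow hq2 (hg.max continuous_const) hφ0 hφ' hφ'' hd0 (fun s hs => (hsol s hs).1)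
        (fun s hs => (hsol s hs).2.2.2) hr')
    simpa using energy_le_rpow (p := 0) (by norm_num) hf hφ0 hφ' hφ'' hd0
      (fun s hs => (hsol s hs).1) (fun s hs => by simpa using (hsol s hs).2.2.1) hr'
end

section
/- Let 0 < q ≤ 2, c ≥ 1, f, g continuous nondecreasing with f positive and g(t) ≤ 0 for all t. If φ is a C² solution of φ'' + ((c-1)/r)φ' = f(φ) + g(φ)|φ'|^q on [0,R) with φ(0)=a, φ'(0)=0, then for all r ∈ [0,R): φ'(r) ≤ ( 2 ∫_a^{φ(r)} exp( -2 ∫_t^{φ(r)} (g⁻(s)/f(s))^{2/q} f(s) ds ) f(t) dt )^{1/2}. -/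
/-!
Write `w = φ'`. First `w ≥ 0`: near `0` the right-hand side is close to `f a > 0`, so
`r ^ (c - 1) w` increases from `0`, and later `w` cannot turn negative since `w' = f(φ) > 0`
wherever `w = 0`. Next, the a priori bound `g⁻(φ) w ^ q ≤ f(φ)` holds: wherever it fails,
`w' < 0`, so `w` decreases while `φ` increases, and the failure can only shrink. Since
`x ^ (2 / q) ≤ x` for `x = g⁻(φ) w ^ q / f(φ) ≤ 1`, the equation then gives
`w' + h(φ) w² ≤ f(φ)` with `h = (g⁻ / f) ^ (2 / q) f`, and the integrating factor
`exp (2 ∫ h)` makes `exp (2 H(φ)) w² - 2 ∫ₐ^φ exp (2 H) f` nonincreasing from its limit `0`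
at `r = 0`.
-/

open Real MeasureTheory Set Filter
open scoped Topology

theorem MonotoneOn.le_of_tendsto_nhdsGT_s8 {u : ℝ → ℝ} {a b l s : ℝ}
    (hu : MonotoneOn u (Ioo a b)) (hl : Tendsto u (𝓝[>] a) (𝓝 l)) (hs : s ∈ Ioo a b) :
    l ≤ u s :=
  le_of_tendsto hl <| Filter.mem_of_superset (Ioo_mem_nhdsGT hs.1) fun _ ht =>
    hu ⟨ht.1, ht.2.trans hs.2⟩ hs ht.2.le

theorem forall_nonpos_of_decreasing_while_pos {D : ℝ → ℝ} {a b : ℝ}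
    (hD : ContinuousOn D (Ioo a b)) (hstart : ∀ᶠ x in 𝓝[>] a, D x ≤ 0)
    (hdecr : ∀ x ∈ Ioo a b, ∀ y ∈ Ioo x b, (∀ z ∈ Ioo x y, 0 < D z) → D y ≤ D x) :
    ∀ y ∈ Ioo a b, D y ≤ 0 := by
  intro y hy
  by_contra! hDy
  obtain ⟨x₀, hx₀D, hx₀⟩ := (hstart.and (Ioo_mem_nhdsGT hy.1)).exists
  -- `x` is the last point of `[x₀, y]` where `D ≤ 0`.
  set Z := Icc x₀ y ∩ D ⁻¹' Iic 0
  have hZbdd : BddAbove Z := ⟨y, fun z hz => hz.1.2⟩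
  have hx : sSup Z ∈ Z :=
    ((hD.mono (Icc_subset_Ioo hx₀.1 hy.2)).preimage_isClosed_of_isClosed isClosed_Icc
      isClosed_Iic).csSup_mem ⟨x₀, ⟨le_rfl, hx₀.2.le⟩, hx₀D⟩ hZbdd
  set x := sSup Z
  have hxy : x < y := hx.1.2.lt_of_ne fun h => hDy.not_ge (h ▸ hx.2)
  have hpos : ∀ z ∈ Ioo x y, 0 < D z := fun z hz => by
    by_contra! h
    exact hz.1.not_ge (le_csSup hZbdd ⟨⟨hx.1.1.trans hz.1.le, hz.2.le⟩, h⟩)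
  have := hdecr x ⟨hx₀.1.trans_le hx.1.1, hxy.trans hy.2⟩ y ⟨hxy, hy.2⟩ hpos
  linarith [show D x ≤ 0 from hx.2]

theorem deriv_eq_zero_of_tendsto_deriv_nhdsGT_s8 {f : ℝ → ℝ} {a b : ℝ} (hab : a < b)
    (hf : DifferentiableOn ℝ f (Ioo a b)) (hfa : ContinuousWithinAt f (Ioo a b) a)
    (h0 : Tendsto (deriv f) (𝓝[>] a) (𝓝 0)) : deriv f a = 0 := by
  by_cases hd : DifferentiableAt ℝ f a
  · rw [← hd.derivWithin (uniqueDiffWithinAt_Ici a)]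
    exact (hasDerivWithinAt_Ici_of_tendsto_deriv hf hfa (Ioo_mem_nhdsGT hab) h0).derivWithin
      (uniqueDiffWithinAt_Ici a)
  · exact deriv_zero_of_not_differentiableAt hd

theorem div_rpow_two_div_mul_mul_sq_le {A F w q : ℝ} (hq0 : 0 < q) (hq2 : q ≤ 2) (hA : 0 ≤ A)
    (hF : 0 < F) (hw : 0 ≤ w) (h : A * w ^ q ≤ F) :
    (A / F) ^ (2 / q) * F * w ^ 2 ≤ A * w ^ q := by
  set x := A / F * w ^ q
  have hx : x = A * w ^ q / F := div_mul_eq_mul_div A F _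
  have hx0 : 0 ≤ x := by positivity
  have hx1 : x ≤ 1 := by rwa [hx, div_le_one hF]
  calc (A / F) ^ (2 / q) * F * w ^ 2 = x ^ (2 / q) * F := by
        rw [mul_rpow (by positivity) (by positivity), ← rpow_mul hw,
          mul_div_cancel₀ _ hq0.ne', rpow_two]
        ring
    _ ≤ x ^ (1 : ℝ) * F := mul_le_mul_of_nonneg_right
        (rpow_le_rpow_of_exponent_ge' hx0 hx1 zero_le_one (by rw [le_div_iff₀ hq0]; linarith))
        hF.le
    _ = A * w ^ q := by
        rw [rpow_one, hx, div_mul_cancel₀ _ hF.ne']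

theorem nonneg_of_deriv_add_div_mul_pos {c R : ℝ} {w w' : ℝ → ℝ} (hc : 1 ≤ c)
    (hw : ∀ r ∈ Ioo 0 R, HasDerivAt w (w' r) r) (hw0 : Tendsto w (𝓝[>] 0) (𝓝 0))
    (hnear : ∀ᶠ r in 𝓝[>] 0, 0 < w' r + (c - 1) / r * w r)
    (hzero : ∀ r ∈ Ioo 0 R, w r = 0 → 0 < w' r) : ∀ r ∈ Ioo 0 R, 0 ≤ w r := by
  intro r hr
  obtain ⟨ε, hε, hεsub⟩ :=
    mem_nhdsGT_iff_exists_Ioo_subset.1 (hnear.and (Ioo_mem_nhdsGT hr.1))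
  have hεr : ε ≤ r := by
    by_contra! h
    exact (hεsub ⟨hr.1, h⟩).2.2.false
  have hεR : Ioo 0 ε ⊆ Ioo 0 R := fun x hx => ⟨hx.1, hx.2.trans_le hεr |>.trans hr.2⟩
  -- `r ↦ r ^ (c - 1) * w r` increases near `0`, where it tends to `0`.
  set u : ℝ → ℝ := fun x => x ^ (c - 1) * w x
  have hu : ∀ x ∈ Ioo 0 ε, HasDerivAt u (x ^ (c - 1) * (w' x + (c - 1) / x * w x)) x := by
    intro x hx
    refine ((hasDerivAt_rpow_const (Or.inl hx.1.ne')).mul (hw x (hεR hx))).congr_deriv ?_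
    rw [rpow_sub_one hx.1.ne']
    field_simp
    ring
  have hu_mono : MonotoneOn u (Ioo 0 ε) := by
    refine monotoneOn_of_hasDerivWithinAt_nonneg (convex_Ioo 0 ε)
      (f' := fun x => x ^ (c - 1) * (w' x + (c - 1) / x * w x))
      (fun x hx => (hu x hx).continuousAt.continuousWithinAt) (fun x hx => ?_) (fun x hx => ?_)
    · rw [interior_Ioo] at hx
      exact (hu x hx).hasDerivWithinAt
    · rw [interior_Ioo] at hx
      exact mul_nonneg (rpow_nonneg hx.1.le _) (hεsub hx).1.le
  have hu0 : Tendsto u (𝓝[>] 0) (𝓝 0) := by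
    simpa using (tendsto_nhdsWithin_of_tendsto_nhds
      (continuousAt_rpow_const 0 (c - 1) (Or.inr (by linarith))).tendsto).mul hw0
  have hs : ε / 2 ∈ Ioo 0 ε := ⟨half_pos hε, half_lt_self hε⟩
  have hws : 0 ≤ w (ε / 2) :=
    nonneg_of_mul_nonneg_right (hu_mono.le_of_tendsto_nhdsGT_s8 hu0 hs) (rpow_pos_of_pos hs.1 _)
  -- Past `ε / 2`, `w` can only cross zero upwards.
  have hsub : Icc (ε / 2) r ⊆ Ioo 0 R := fun x hx => ⟨hs.1.trans_le hx.1, hx.2.trans_lt hr.2⟩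
  have := image_le_of_deriv_right_lt_deriv_boundary' (f := fun x => -w x) (f' := fun x => -w' x)
    (B := 0) (B' := 0) (fun x hx => (hw x (hsub hx)).continuousAt.neg.continuousWithinAt)
    (fun x hx => (hw x (hsub (Ico_subset_Icc_self hx))).neg.hasDerivWithinAt) (by simpa using hws)
    continuousOn_const (fun x _ => hasDerivWithinAt_const x _ 0)
    (fun x hx hx0 => by
      simpa using hzero x (hsub (Ico_subset_Icc_self hx)) (neg_eq_zero.1 hx0))
    ⟨hs.2.le.trans hεr, le_rfl⟩
  simpa using this

theorem integral_exp_neg_two_integral_mul {h : ℝ → ℝ} (hh : Continuous h) (k : ℝ → ℝ)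
    (a b : ℝ) :
    ∫ t in a..b, exp (-2 * ∫ s in t..b, h s) * k t =
      exp (-2 * ∫ s in a..b, h s) * ∫ t in a..b, exp (2 * ∫ s in a..t, h s) * k t := by
  rw [← intervalIntegral.integral_const_mul]
  refine intervalIntegral.integral_congr fun t _ => ?_
  rw [← intervalIntegral.integral_interval_sub_left (hh.intervalIntegrable a b)
    (hh.intervalIntegrable a t), show ∀ X Y : ℝ, -2 * (X - Y) = -2 * X + 2 * Y by intros; ring,
    exp_add]
  ring

theorem sq_le_two_mul_integral_exp_of_deriv_add_mul_sq_le {y w w' h k : ℝ → ℝ} {a R : ℝ}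
    (hh : Continuous h) (hk : Continuous k)
    (hy : ∀ r ∈ Ioo 0 R, HasDerivAt y (w r) r) (hw : ∀ r ∈ Ioo 0 R, HasDerivAt w (w' r) r)
    (hw_nonneg : ∀ r ∈ Ioo 0 R, 0 ≤ w r)
    (hineq : ∀ r ∈ Ioo 0 R, w' r + h (y r) * w r ^ 2 ≤ k (y r))
    (hya : Tendsto y (𝓝[>] 0) (𝓝 a)) (hw0 : Tendsto w (𝓝[>] 0) (𝓝 0)) :
    ∀ r ∈ Ioo 0 R, w r ^ 2 ≤ 2 * ∫ t in a..y r, exp (-2 * ∫ s in t..y r, h s) * k t := by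
  set H : ℝ → ℝ := fun u => ∫ t in a..u, h t
  have hH : ∀ u, HasDerivAt H (h u) u := fun u => (hh.integral_hasStrictDerivAt a u).hasDerivAt
  have hH_cont : Continuous H := continuous_iff_continuousAt.2 fun u => (hH u).continuousAt
  have hG : Continuous fun t => exp (2 * H t) * k t := (continuous_const.mul hH_cont).rexp.mul hk
  set P : ℝ → ℝ := fun u => ∫ t in a..u, exp (2 * H t) * k t
  have hP : ∀ u, HasDerivAt P (exp (2 * H u) * k u) u := fun u =>
    (hG.integral_hasStrictDerivAt a u).hasDerivAt
  have hP_cont : Continuous P := continuous_iff_continuousAt.2 fun u => (hP u).continuousAt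
  set Φ : ℝ → ℝ := fun s => exp (2 * H (y s)) * w s ^ 2 - 2 * P (y s)
  have hΦ : ∀ s ∈ Ioo 0 R, HasDerivAt Φ
      (2 * w s * exp (2 * H (y s)) * (w' s + h (y s) * w s ^ 2 - k (y s))) s := by
    intro s hs
    refine ((((hH (y s)).comp s (hy s hs)).const_mul 2).exp.mul ((hw s hs).pow 2)).sub
      (((hP (y s)).comp s (hy s hs)).const_mul 2) |>.congr_deriv ?_
    simp only [Function.comp_apply, Pi.pow_apply]
    ring
  have hΦ_anti : AntitoneOn Φ (Ioo 0 R) := by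
    refine antitoneOn_of_hasDerivWithinAt_nonpos (convex_Ioo 0 R)
      (f' := fun s => 2 * w s * exp (2 * H (y s)) * (w' s + h (y s) * w s ^ 2 - k (y s)))
      (fun s hs => (hΦ s hs).continuousAt.continuousWithinAt) (fun s hs => ?_) (fun s hs => ?_)
    · rw [interior_Ioo] at hs
      exact (hΦ s hs).hasDerivWithinAt
    · rw [interior_Ioo] at hs
      exact mul_nonpos_of_nonneg_of_nonpos (by have := hw_nonneg s hs; positivity)
        (by linarith [hineq s hs])
  have hΦ0 : Tendsto Φ (𝓝[>] 0) (𝓝 0) := by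
    simpa [P] using ((((continuous_const.mul hH_cont).rexp.tendsto a).comp hya).mul
      (hw0.pow 2)).sub (((hP_cont.tendsto a).comp hya).const_mul 2)
  intro r hr
  have hΦr : Φ r ≤ 0 := by simpa using hΦ_anti.neg.le_of_tendsto_nhdsGT_s8 hΦ0.neg hr
  replace hΦr : exp (2 * H (y r)) * w r ^ 2 ≤ 2 * P (y r) := sub_nonpos.1 hΦr
  rw [integral_exp_neg_two_integral_mul hh]
  calc w r ^ 2 = exp (-2 * H (y r)) * (exp (2 * H (y r)) * w r ^ 2) := by
        rw [← mul_assoc, ← exp_add]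
        simp
    _ ≤ exp (-2 * H (y r)) * (2 * P (y r)) := by gcongr
    _ = 2 * (exp (-2 * H (y r)) * P (y r)) := by ring

section RadialEquation

variable {c q R a : ℝ} {f g φ w w' : ℝ → ℝ}

theorem deriv_nonneg_of_radial_eq (hc : 1 ≤ c) (hq0 : 0 < q) (hf : Continuous f)
    (hfpos : ∀ t, 0 < f t) (hg : Continuous g) (hw : ∀ r ∈ Ioo 0 R, HasDerivAt w (w' r) r)
    (hφa : Tendsto φ (𝓝[>] 0) (𝓝 a)) (hw0 : Tendsto w (𝓝[>] 0) (𝓝 0))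
    (hode : ∀ r ∈ Ioo 0 R, w' r + (c - 1) / r * w r = f (φ r) + g (φ r) * |w r| ^ q) :
    ∀ r ∈ Ioo 0 R, 0 ≤ w r := by
  intro r hr
  have hrhs : Tendsto (fun s => f (φ s) + g (φ s) * |w s| ^ q) (𝓝[>] 0) (𝓝 (f a)) := by
    simpa [zero_rpow hq0.ne'] using ((hf.tendsto a).comp hφa).add
      (((hg.tendsto a).comp hφa).mul (hw0.abs.rpow_const (Or.inr hq0.le)))
  refine nonneg_of_deriv_add_div_mul_pos hc hw hw0 ?_ (fun s hs hs0 => ?_) r hr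
  · filter_upwards [hrhs.eventually (eventually_gt_nhds (hfpos a)),
      Ioo_mem_nhdsGT (hr.1.trans hr.2)] with s hs hsR
    rwa [hode s hsR]
  · have := hode s hs
    simp only [hs0, mul_zero, add_zero, abs_zero, zero_rpow hq0.ne'] at this
    exact this ▸ hfpos (φ s)

theorem neg_mul_rpow_le_of_radial_eq (hc : 1 ≤ c) (hq0 : 0 < q) (hf : Continuous f)
    (hfpos : ∀ t, 0 < f t) (hfmono : Monotone f) (hg : Continuous g) (hgmono : Monotone g)
    (hgnonpos : ∀ t, g t ≤ 0) (hφ : ∀ r ∈ Ioo 0 R, HasDerivAt φ (w r) r)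
    (hw : ∀ r ∈ Ioo 0 R, HasDerivAt w (w' r) r) (hφa : Tendsto φ (𝓝[>] 0) (𝓝 a))
    (hw0 : Tendsto w (𝓝[>] 0) (𝓝 0)) (hw_nonneg : ∀ r ∈ Ioo 0 R, 0 ≤ w r)
    (hode : ∀ r ∈ Ioo 0 R, w' r + (c - 1) / r * w r = f (φ r) + g (φ r) * w r ^ q) :
    ∀ r ∈ Ioo 0 R, -g (φ r) * w r ^ q ≤ f (φ r) := by
  have hφc : ContinuousOn φ (Ioo 0 R) := fun s hs => (hφ s hs).continuousAt.continuousWithinAt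
  have hwc : ContinuousOn w (Ioo 0 R) := fun s hs => (hw s hs).continuousAt.continuousWithinAt
  suffices ∀ r ∈ Ioo 0 R, -g (φ r) * w r ^ q - f (φ r) ≤ 0 from
    fun r hr => sub_nonpos.1 (this r hr)
  refine forall_nonpos_of_decreasing_while_pos ?_ ?_ ?_
  · exact ((hg.comp_continuousOn hφc).neg.mul (hwc.rpow_const fun _ _ => Or.inr hq0.le)).sub
      (hf.comp_continuousOn hφc)
  · have : Tendsto (fun s => -g (φ s) * w s ^ q - f (φ s)) (𝓝[>] 0) (𝓝 (-f a)) := by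
      simpa [zero_rpow hq0.ne'] using (((hg.tendsto a).comp hφa).neg.mul
        (hw0.rpow_const (Or.inr hq0.le))).sub ((hf.tendsto a).comp hφa)
    exact (this.eventually (eventually_lt_nhds (neg_lt_zero.2 (hfpos a)))).mono fun _ h => h.le
  · intro x hx y hy hpos
    have hsub : Icc x y ⊆ Ioo 0 R := Icc_subset_Ioo hx.1 hy.2
    -- While the bound fails, the equation forces `w' < 0`, so `w` decreases and `φ` increases.
    have hw_anti : AntitoneOn w (Icc x y) := by
      refine antitoneOn_of_hasDerivWithinAt_nonpos (convex_Icc x y) (f' := w') (hwc.mono hsub)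
        (fun z hz => ?_) (fun z hz => ?_) <;> rw [interior_Icc] at hz
      · exact (hw z (hsub (Ioo_subset_Icc_self hz))).hasDerivWithinAt
      · have hz' := hsub (Ioo_subset_Icc_self hz)
        have hnn : 0 ≤ (c - 1) / z * w z :=
          mul_nonneg (div_nonneg (by linarith) hz'.1.le) (hw_nonneg z hz')
        linarith [hode z hz', hpos z hz]
    have hφ_mono : MonotoneOn φ (Icc x y) := by
      refine monotoneOn_of_hasDerivWithinAt_nonneg (convex_Icc x y) (f' := w) (hφc.mono hsub)
        (fun z hz => ?_) (fun z hz => ?_) <;> rw [interior_Icc] at hz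
      · exact (hφ z (hsub (Ioo_subset_Icc_self hz))).hasDerivWithinAt
      · exact hw_nonneg z (hsub (Ioo_subset_Icc_self hz))
    have hxI : x ∈ Icc x y := left_mem_Icc.2 hy.1.le
    have hyI : y ∈ Icc x y := right_mem_Icc.2 hy.1.le
    have hφxy := hφ_mono hxI hyI hy.1.le
    have : -g (φ y) * w y ^ q ≤ -g (φ x) * w x ^ q :=
      mul_le_mul (neg_le_neg (hgmono hφxy))
        (rpow_le_rpow (hw_nonneg y (hsub hyI)) (hw_anti hxI hyI hy.1.le) hq0.le)
        (rpow_nonneg (hw_nonneg y (hsub hyI)) q) (neg_nonneg.2 (hgnonpos _))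
    linarith [hfmono hφxy]

theorem deriv_add_mul_sq_le_of_radial_eq (hc : 1 ≤ c) (hq0 : 0 < q) (hq2 : q ≤ 2)
    (hfpos : ∀ t, 0 < f t) (hgnonpos : ∀ t, g t ≤ 0)
    (hw_nonneg : ∀ r ∈ Ioo 0 R, 0 ≤ w r)
    (hbound : ∀ r ∈ Ioo 0 R, -g (φ r) * w r ^ q ≤ f (φ r))
    (hode : ∀ r ∈ Ioo 0 R, w' r + (c - 1) / r * w r = f (φ r) + g (φ r) * w r ^ q) :
    ∀ r ∈ Ioo 0 R,
      w' r + (max (-g (φ r)) 0 / f (φ r)) ^ (2 / q) * f (φ r) * w r ^ 2 ≤ f (φ r) := by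
  intro r hr
  rw [max_eq_left (neg_nonneg.2 (hgnonpos _))]
  have := div_rpow_two_div_mul_mul_sq_le hq0 hq2 (neg_nonneg.2 (hgnonpos _)) (hfpos _)
    (hw_nonneg r hr) (hbound r hr)
  have hnn : 0 ≤ (c - 1) / r * w r :=
    mul_nonneg (div_nonneg (by linarith) hr.1.le) (hw_nonneg r hr)
  linarith [hode r hr]

end RadialEquation

theorem stmt8_general (c q R a : ℝ) (hc : 1 ≤ c) (hq0 : 0 < q) (hq2 : q ≤ 2)
    (f g φ : ℝ → ℝ)
    (hf : Continuous f) (hfpos : ∀ t, 0 < f t) (hfmono : Monotone f)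
    (hg : Continuous g) (hgmono : Monotone g) (hgnonpos : ∀ t, g t ≤ 0)
    (hφc : ContinuousOn φ (Set.Ico 0 R))
    (hφ2 : ContDiffOn ℝ 2 φ (Set.Ioo 0 R))
    (hφa : φ 0 = a)
    (hd0 : Filter.Tendsto (deriv φ) (nhdsWithin 0 (Set.Ioi 0)) (nhds 0))
    (hode : ∀ r ∈ Set.Ioo 0 R,
      deriv (deriv φ) r + (c - 1) / r * deriv φ r = f (φ r) + g (φ r) * |deriv φ r| ^ q) :
    ∀ r ∈ Set.Ico 0 R,
      deriv φ r ≤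
        (2 * ∫ t in a..φ r,
            Real.exp (-2 * ∫ s in t..φ r, (max (-g s) 0 / f s) ^ (2 / q) * f s) * f t)
          ^ ((1 : ℝ) / 2) := by
  intro r hr
  have hR : 0 < R := hr.1.trans_lt hr.2
  have hφd : ∀ s ∈ Ioo 0 R, HasDerivAt φ (deriv φ s) s := fun s hs =>
    ((hφ2.differentiableOn (by norm_num)).differentiableAt (isOpen_Ioo.mem_nhds hs)).hasDerivAt
  have hwd : ∀ s ∈ Ioo 0 R, HasDerivAt (deriv φ) (deriv (deriv φ) s) s := fun s hs =>
    (((hφ2.deriv_of_isOpen (m := 1) isOpen_Ioo (by norm_num)).differentiableOn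
      one_ne_zero).differentiableAt (isOpen_Ioo.mem_nhds hs)).hasDerivAt
  have hφ0 : ContinuousWithinAt φ (Ioo 0 R) 0 :=
    (hφc 0 ⟨le_rfl, hR⟩).mono Ioo_subset_Ico_self
  have hφa' : Tendsto φ (𝓝[>] 0) (𝓝 a) :=
    hφa ▸ hφ0.tendsto.mono_left (nhdsWithin_le_of_mem (Ioo_mem_nhdsGT hR))
  rcases hr.1.eq_or_lt with rfl | hr0
  · rw [deriv_eq_zero_of_tendsto_deriv_nhdsGT_s8 hR (hφ2.differentiableOn (by norm_num)) hφ0 hd0]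
    simp [hφa]
  have hw_nonneg := deriv_nonneg_of_radial_eq hc hq0 hf hfpos hg hwd hφa' hd0 hode
  have hode' : ∀ s ∈ Ioo 0 R,
      deriv (deriv φ) s + (c - 1) / s * deriv φ s = f (φ s) + g (φ s) * deriv φ s ^ q :=
    fun s hs => by rw [hode s hs, abs_of_nonneg (hw_nonneg s hs)]
  have hbound := neg_mul_rpow_le_of_radial_eq hc hq0 hf hfpos hfmono hg hgmono hgnonpos hφd hwd
    hφa' hd0 hw_nonneg hode'
  have hh : Continuous fun s => (max (-g s) 0 / f s) ^ (2 / q) * f s :=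
    (((hg.neg.max continuous_const).div hf fun t => (hfpos t).ne').rpow_const
      fun _ => Or.inr (by positivity)).mul hf
  rw [← sqrt_eq_rpow]
  have hineq := deriv_add_mul_sq_le_of_radial_eq hc hq0 hq2 hfpos hgnonpos hw_nonneg hbound hode'
  exact le_sqrt_of_sq_le <| sq_le_two_mul_integral_exp_of_deriv_add_mul_sq_le hh hf hφd hwd
    hw_nonneg hineq hφa' hd0 r ⟨hr0, hr.2⟩

theorem stmt8 (c q R a : ℝ) (hc : 1 ≤ c) (hq0 : 0 < q) (hq2 : q ≤ 2) (hR : 0 < R)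
    (f g φ : ℝ → ℝ)
    (hf : Continuous f) (hfpos : ∀ t, 0 < f t) (hfmono : Monotone f)
    (hg : Continuous g) (hgmono : Monotone g) (hgnonpos : ∀ t, g t ≤ 0)
    (hφc : ContinuousOn φ (Set.Ico 0 R))
    (hφ2 : ContDiffOn ℝ 2 φ (Set.Ioo 0 R))
    (hφa : φ 0 = a)
    (hd0 : Filter.Tendsto (deriv φ) (nhdsWithin 0 (Set.Ioi 0)) (nhds 0))
    (hd2 : ∃ L, Filter.Tendsto (deriv (deriv φ)) (nhdsWithin 0 (Set.Ioi 0)) (nhds L))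
    (hode : ∀ r ∈ Set.Ioo 0 R,
      deriv (deriv φ) r + (c - 1) / r * deriv φ r = f (φ r) + g (φ r) * |deriv φ r| ^ q) :
    ∀ r ∈ Set.Ico 0 R,
      deriv φ r ≤
        (2 * ∫ t in a..φ r,
            Real.exp (-2 * ∫ s in t..φ r, (max (-g s) 0 / f s) ^ (2 / q) * f s) * f t)
          ^ ((1 : ℝ) / 2) :=
  stmt8_general c q R a hc hq0 hq2 f g φ hf hfpos hfmono hg hgmono hgnonpos hφc hφ2 hφa hd0 hode
end

section
/- Let 0 < q < 2, c ≥ 1, f, g continuous nondecreasing, f positive. If φ solves the radial ODE Cauchy problem on [0,R) with φ(0)=a, φ'(0)=0, then for all r ∈ [0,R): r ≥ 2^{-2/(2-q)} ∫_a^{φ(r)} dt / [ (∫_a^t f(s) ds)^{1/2} + (∫_a^t g⁺(s) ds)^{1/(2-q)} ]. -/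
/-!
Write `v = φ'`, `F(t) = ∫ₐᵗ f`, `G(t) = ∫ₐᵗ g⁺` and `ψ = F^{1/2} + G^{1/(2-q)}`.
By L'Hôpital `v(s)/s → φ''(0⁺)`, and the equation at `0⁺` reads `c φ''(0⁺) = f(a) > 0`, so
`v > 0` near `0`; at a later zero of `v` the equation forces `v' = f(φ) > 0`, so `v` stays
positive and `φ` increases. On `[ε, s]`, with `M = max v`, the energy `v² - 2F(φ) - 2Mᵠ G(φ)`
is nonincreasing (the damping term has the right sign as `c ≥ 1`), whence
`M² ≤ v(ε)² + 2F(φ(s)) + 2Mᵠ G(φ(s))`; splitting according to which term dominates and letting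
`ε → 0` gives `φ' ≤ 2^{2/(2-q)} ψ(φ)`. Hence `u ↦ 2^{2/(2-q)} u - ∫ₐ^{φ(u)} 1/ψ` is
nondecreasing, and `1/ψ` is integrable at `a` because `ψ(t) ≥ √(f(a)(t-a))`.
-/

open Real MeasureTheory Set Filter
open Topology

lemma le_of_sq_le_add_two_rpow_mul {q M e F G : ℝ} (hq0 : 0 ≤ q) (hq2 : q < 2) (hM : 0 ≤ M)
    (he : 0 ≤ e) (hF : 0 ≤ F) (hG : 0 ≤ G) (h : M ^ 2 ≤ e ^ 2 + 2 * F + 2 * M ^ q * G) :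
    M ≤ 2 ^ (2 / (2 - q)) * (e + F ^ ((1 : ℝ) / 2) + G ^ (1 / (2 - q))) := by
  have h2q : 0 < 2 - q := by linarith
  have hK : (2 : ℝ) ≤ 2 ^ (2 / (2 - q)) := by
    conv_lhs => rw [← rpow_one 2]
    exact rpow_le_rpow_of_exponent_le one_le_two (by rw [le_div_iff₀ h2q]; linarith)
  have hsqrtF : 0 ≤ F ^ ((1 : ℝ) / 2) := rpow_nonneg hF _
  have hrootG : 0 ≤ G ^ (1 / (2 - q)) := rpow_nonneg hG _
  rcases le_total (2 * M ^ q * G) (e ^ 2 + 2 * F) with hsmall | hlarge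
  · have hsq : (F ^ ((1 : ℝ) / 2)) ^ 2 = F := by rw [← sqrt_eq_rpow, sq_sqrt hF]
    have hM2 : M ≤ 2 * (e + F ^ ((1 : ℝ) / 2)) := by
      nlinarith [mul_nonneg he hsqrtF]
    nlinarith
  · rcases hM.eq_or_lt with rfl | hMpos
    · positivity
    have hMq : 0 < M ^ q := rpow_pos_of_pos hMpos q
    have hsplit : M ^ q * M ^ (2 - q) = M ^ 2 := by
      rw [← rpow_add hMpos, add_sub_cancel, rpow_two]
    have hMroot : M ^ (2 - q) ≤ 4 * G := by nlinarith
    have hM : M ≤ (4 * G) ^ (1 / (2 - q)) := by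
      calc M = (M ^ (2 - q)) ^ (1 / (2 - q)) := by
            rw [← rpow_mul hM, mul_one_div_cancel h2q.ne', rpow_one]
        _ ≤ (4 * G) ^ (1 / (2 - q)) := by gcongr
    have hfour : (4 * G) ^ (1 / (2 - q)) = 2 ^ (2 / (2 - q)) * G ^ (1 / (2 - q)) := by
      rw [mul_rpow (by norm_num) hG, show (4 : ℝ) = 2 ^ (2 : ℝ) by norm_num,
        ← rpow_mul (by norm_num), mul_one_div]
    nlinarith

lemma pos_of_eventually_pos_of_deriv_pos_of_eq_zero {v v' : ℝ → ℝ} {a b : ℝ}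
    (hv : ∀ x ∈ Ioo a b, HasDerivAt v (v' x) x) (hpos : ∀ᶠ x in 𝓝[>] a, 0 < v x)
    (hzero : ∀ x ∈ Ioo a b, v x = 0 → 0 < v' x) : ∀ x ∈ Ioo a b, 0 < v x := by
  intro x hx
  obtain ⟨e, hve, hex⟩ := (hpos.and (Ioo_mem_nhdsGT hx.1)).exists
  obtain ⟨b', hxb', hb'⟩ := exists_between hx.2
  have hsub : Icc e b' ⊆ Ioo a b := Icc_subset_Ioo hex.1 hb'
  have hnonneg : ∀ y ∈ Icc e b', 0 ≤ v y := by
    intro y hy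
    have := image_le_of_deriv_right_lt_deriv_boundary (f := fun y => -v y) (f' := fun y => -v' y)
      (fun y hy => (hv y (hsub hy)).continuousAt.neg.continuousWithinAt)
      (fun y hy => (hv y (hsub (Ico_subset_Icc_self hy))).neg.hasDerivWithinAt)
      (B := fun _ => 0) (B' := fun _ => 0) (by simpa using hve.le) (fun _ => hasDerivAt_const _ _)
      (fun y hy hy0 => by linarith [hzero y (hsub (Ico_subset_Icc_self hy)) (neg_eq_zero.1 hy0)]) hy
    linarith
  refine (hnonneg x ⟨hex.2.le, hxb'.le⟩).lt_of_ne' fun hx0 => ?_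
  have hmin : IsLocalMin v x := by
    filter_upwards [Ioo_mem_nhds hex.2 hxb'] with y hy
    exact hx0 ▸ hnonneg y ⟨hy.1.le, hy.2.le⟩
  exact (hzero x hx hx0).ne' (hmin.hasDerivAt_eq_zero (hv x hx))

lemma le_of_mul_deriv_le_add_mul_rpow {v v' A A' B B' : ℝ → ℝ} {q ε r : ℝ} (hq0 : 0 ≤ q)
    (hq2 : q < 2) (hεr : ε ≤ r) (hv : ∀ s ∈ Icc ε r, HasDerivAt v (v' s) s)
    (hA : ∀ s ∈ Icc ε r, HasDerivAt A (A' s) s) (hB : ∀ s ∈ Icc ε r, HasDerivAt B (B' s) s)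
    (hvnn : ∀ s ∈ Icc ε r, 0 ≤ v s) (hA' : ∀ s ∈ Ioo ε r, 0 ≤ A' s)
    (hB' : ∀ s ∈ Ioo ε r, 0 ≤ B' s) (hA0 : 0 ≤ A ε) (hB0 : 0 ≤ B ε)
    (hineq : ∀ s ∈ Ioo ε r, v s * v' s ≤ A' s + B' s * v s ^ q) :
    v r ≤ 2 ^ (2 / (2 - q)) * (v ε + A r ^ ((1 : ℝ) / 2) + B r ^ (1 / (2 - q))) := by
  have hcont {u u' : ℝ → ℝ} (hu : ∀ s ∈ Icc ε r, HasDerivAt u (u' s) s) :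
      ContinuousOn u (Icc ε r) :=
    fun s hs => (hu s hs).continuousAt.continuousWithinAt
  have hmono {u u' : ℝ → ℝ} (hu : ∀ s ∈ Icc ε r, HasDerivAt u (u' s) s)
      (hu' : ∀ s ∈ Ioo ε r, 0 ≤ u' s) : MonotoneOn u (Icc ε r) :=
    monotoneOn_of_hasDerivWithinAt_nonneg (convex_Icc ε r) (hcont hu)
      (fun s hs => (hu s (interior_subset hs)).hasDerivWithinAt) (by rwa [interior_Icc])
  obtain ⟨s₀, hs₀, hmax⟩ := isCompact_Icc.exists_isMaxOn (nonempty_Icc.2 hεr) (hcont hv)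
  set M := v s₀
  have hM : 0 ≤ M := (hvnn ε ⟨le_rfl, hεr⟩).trans (hmax ⟨le_rfl, hεr⟩)
  have hMq : 0 ≤ M ^ q := rpow_nonneg hM q
  have hE : ∀ s ∈ Icc ε r, HasDerivAt (fun s => v s ^ 2 - 2 * A s - 2 * M ^ q * B s)
      (2 * v s * v' s - 2 * A' s - 2 * M ^ q * B' s) s := fun s hs => by
    simpa using (((hv s hs).fun_pow 2).fun_sub ((hA s hs).const_mul 2)).fun_sub
      ((hB s hs).const_mul (2 * M ^ q))
  have henergy : AntitoneOn (fun s => v s ^ 2 - 2 * A s - 2 * M ^ q * B s) (Icc ε r) := by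
    refine antitoneOn_of_hasDerivWithinAt_nonpos (convex_Icc ε r) (hcont hE)
      (fun s hs => (hE s (interior_subset hs)).hasDerivWithinAt) ?_
    rw [interior_Icc]
    intro s hs
    have hvq : v s ^ q ≤ M ^ q := rpow_le_rpow (hvnn s (Ioo_subset_Icc_self hs))
      (hmax (Ioo_subset_Icc_self hs)) hq0
    nlinarith [hineq s hs, mul_le_mul_of_nonneg_left hvq (hB' s hs)]
  have hdecay := henergy ⟨le_rfl, hεr⟩ hs₀ hs₀.1
  have hAs₀ := hmono hA hA' hs₀ ⟨hεr, le_rfl⟩ hs₀.2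
  have hBs₀ := hmono hB hB' hs₀ ⟨hεr, le_rfl⟩ hs₀.2
  have hAr : 0 ≤ A r := hA0.trans (hmono hA hA' ⟨le_rfl, hεr⟩ ⟨hεr, le_rfl⟩ hεr)
  have hBr : 0 ≤ B r := hB0.trans (hmono hB hB' ⟨le_rfl, hεr⟩ ⟨hεr, le_rfl⟩ hεr)
  refine (hmax ⟨hεr, le_rfl⟩).trans (le_of_sq_le_add_two_rpow_mul hq0 hq2 hM
    (hvnn ε ⟨le_rfl, hεr⟩) hAr hBr ?_)
  simp only at hdecay
  nlinarith [mul_le_mul_of_nonneg_left hBs₀ hMq, mul_nonneg hMq hB0]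

lemma intervalIntegrable_one_div_of_sqrt_le {ψ : ℝ → ℝ} {m a b : ℝ} (hψ : Measurable ψ)
    (hm : 0 < m) (hab : a ≤ b) (hle : ∀ t ∈ Ioc a b, √(m * (t - a)) ≤ ψ t) :
    IntervalIntegrable (fun t => 1 / ψ t) volume a b := by
  have hdom : IntervalIntegrable (fun t => (√m)⁻¹ * (t - a) ^ (-(1 / 2 : ℝ))) volume a b := by
    have := (intervalIntegral.intervalIntegrable_rpow' (a := a - a) (b := b - a)
      (r := -(1 / 2 : ℝ)) (by norm_num)).comp_sub_right a
    simp only [sub_add_cancel] at this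
    exact this.const_mul _
  refine hdom.mono_fun' (measurable_const.div hψ).aestronglyMeasurable ?_
  rw [EventuallyLE, uIoc_of_le hab, ae_restrict_iff' measurableSet_Ioc]
  refine Eventually.of_forall fun t ht => ?_
  have hta : 0 < t - a := sub_pos.2 ht.1
  have hsqrt : 0 < √(m * (t - a)) := sqrt_pos.2 (mul_pos hm hta)
  have hψt : 0 < ψ t := hsqrt.trans_le (hle t ht)
  calc ‖1 / ψ t‖ = 1 / ψ t := by rw [norm_of_nonneg (by positivity)]
    _ ≤ 1 / √(m * (t - a)) := one_div_le_one_div_of_le hsqrt (hle t ht)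
    _ = (√m)⁻¹ * (t - a) ^ (-(1 / 2 : ℝ)) := by
      rw [sqrt_mul hm.le, one_div, mul_inv, rpow_neg hta.le, sqrt_eq_rpow (t - a)]

lemma integral_one_div_comp_le_of_deriv_le {φ v ψ : ℝ → ℝ} {K x y : ℝ} (hxy : x ≤ y)
    (hφ : ContinuousOn φ (Icc x y)) (hφ' : ∀ s ∈ Ioo x y, HasDerivAt φ (v s) s)
    (hmono : MonotoneOn φ (Icc x y)) (hψ : Continuous ψ) (hψpos : ∀ s ∈ Ioo x y, 0 < ψ (φ s))
    (hint : IntervalIntegrable (fun t => 1 / ψ t) volume (φ x) (φ y))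
    (hle : ∀ s ∈ Ioo x y, v s ≤ K * ψ (φ s)) :
    ∫ t in φ x..φ y, 1 / ψ t ≤ K * (y - x) := by
  set Φ := fun u => ∫ t in φ x..u, 1 / ψ t
  have hmaps : MapsTo φ (Icc x y) (uIcc (φ x) (φ y)) := fun s hs => by
    rw [uIcc_of_le (hmono ⟨le_rfl, hxy⟩ ⟨hxy, le_rfl⟩ hxy)]
    exact ⟨hmono ⟨le_rfl, hxy⟩ hs hs.1, hmono hs ⟨hxy, le_rfl⟩ hs.2⟩
  have hΦ' : ∀ s ∈ Ioo x y, HasDerivAt Φ (1 / ψ (φ s)) (φ s) := fun s hs =>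
    intervalIntegral.integral_hasDerivAt_right
      (hint.mono_set (uIcc_subset_uIcc_left (hmaps (Ioo_subset_Icc_self hs))))
      (measurable_const.div hψ.measurable).aestronglyMeasurable.stronglyMeasurableAtFilter
      (continuousAt_const.div hψ.continuousAt (hψpos s hs).ne')
  have hH : MonotoneOn (fun u => K * u - Φ (φ u)) (Icc x y) := by
    refine monotoneOn_of_hasDerivWithinAt_nonneg (convex_Icc x y)
      ((continuousOn_const.mul continuousOn_id).sub
        ((intervalIntegral.continuousOn_primitive_interval' hint left_mem_uIcc).comp hφ hmaps))
      (f' := fun s => K * 1 - 1 / ψ (φ s) * v s) ?_ ?_ <;> rw [interior_Icc] <;> intro s hs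
    · exact (((hasDerivAt_id s).const_mul K).sub ((hΦ' s hs).comp s (hφ' s hs))).hasDerivWithinAt
    · rw [mul_one, sub_nonneg, one_div, inv_mul_le_iff₀ (hψpos s hs), mul_comm]
      exact hle s hs
  have := hH ⟨le_rfl, hxy⟩ ⟨hxy, le_rfl⟩ hxy
  simp only [Φ, intervalIntegral.integral_same] at this
  linarith

noncomputable def gradientBound (f g : ℝ → ℝ) (q a t : ℝ) : ℝ :=
  (∫ s in a..t, f s) ^ ((1 : ℝ) / 2) + (∫ s in a..t, max (g s) 0) ^ (1 / (2 - q))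

section gradientBound

variable {f g : ℝ → ℝ} {q a : ℝ}

lemma continuous_gradientBound (hf : Continuous f) (hg : Continuous g) (hq2 : q < 2) :
    Continuous (gradientBound f g q a) := by
  have hG : Continuous fun s => max (g s) 0 := hg.max continuous_const
  have h2q : 0 ≤ 1 / (2 - q) := by rw [one_div_nonneg]; linarith
  exact ((intervalIntegral.continuous_primitive (hf.intervalIntegrable · ·) a).rpow_const
    fun _ => Or.inr (by norm_num)).add
    ((intervalIntegral.continuous_primitive (hG.intervalIntegrable · ·) a).rpow_const
      fun _ => Or.inr h2q)

lemma sqrt_mul_sub_le_gradientBound (hf : Continuous f) (hfmono : Monotone f) {t : ℝ}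
    (hat : a ≤ t) : √(f a * (t - a)) ≤ gradientBound f g q a t := by
  have hF : f a * (t - a) ≤ ∫ s in a..t, f s := by
    simpa [mul_comm] using intervalIntegral.integral_mono_on hat
      (intervalIntegrable_const (μ := volume)) (hf.intervalIntegrable a t) fun s hs => hfmono hs.1
  have hG : 0 ≤ (∫ s in a..t, max (g s) 0) ^ (1 / (2 - q)) :=
    rpow_nonneg (intervalIntegral.integral_nonneg hat fun _ _ => le_max_right _ _) _
  rw [gradientBound, ← sqrt_eq_rpow]
  linarith [sqrt_le_sqrt hF]

lemma integral_one_div_gradientBound_le (hf : Continuous f) (hfa : 0 < f a)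
    (hfmono : Monotone f) (hg : Continuous g) (hq2 : q < 2) {φ v : ℝ → ℝ} {K x y : ℝ}
    (hxy : x ≤ y) (hφx : φ x = a) (hφ : ContinuousOn φ (Icc x y))
    (hφ' : ∀ s ∈ Ioo x y, HasDerivAt φ (v s) s) (hmono : StrictMonoOn φ (Icc x y))
    (hle : ∀ s ∈ Ioo x y, v s ≤ K * gradientBound f g q a (φ s)) :
    ∫ t in a..φ y, 1 / gradientBound f g q a t ≤ K * (y - x) := by
  subst hφx
  have hψ := continuous_gradientBound (a := φ x) hf hg hq2
  have hlower (t : ℝ) (ht : φ x ≤ t) := sqrt_mul_sub_le_gradientBound (g := g) (q := q) hf hfmono ht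
  have hgt : ∀ s ∈ Ioo x y, φ x < φ s := fun s hs =>
    hmono ⟨le_rfl, hxy⟩ (Ioo_subset_Icc_self hs) hs.1
  exact integral_one_div_comp_le_of_deriv_le hxy hφ hφ' hmono.monotoneOn hψ
    (fun s hs => (sqrt_pos.2 (mul_pos hfa (sub_pos.2 (hgt s hs)))).trans_le
      (hlower _ (hgt s hs).le))
    (intervalIntegrable_one_div_of_sqrt_le hψ.measurable hfa
      (hmono.monotoneOn ⟨le_rfl, hxy⟩ ⟨hxy, le_rfl⟩ hxy) fun t ht => hlower t ht.1.le)
    hle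

end gradientBound

section RadialODE

variable {c q R a : ℝ} {f g φ : ℝ → ℝ}

lemma eventually_deriv_pos_of_radial_ode (hc : 0 < c) (hq : 0 < q) (hR : 0 < R)
    (hfa : 0 < f a) (hf : ContinuousAt f a) (hg : ContinuousAt g a)
    (hφ : Tendsto φ (𝓝[>] 0) (𝓝 a))
    (hv' : ∀ s ∈ Ioo 0 R, HasDerivAt (deriv φ) (deriv (deriv φ) s) s)
    (hd0 : Tendsto (deriv φ) (𝓝[>] 0) (𝓝 0))
    (hd2 : ∃ L, Tendsto (deriv (deriv φ)) (𝓝[>] 0) (𝓝 L))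
    (hode : ∀ r ∈ Ioo 0 R,
      deriv (deriv φ) r + (c - 1) / r * deriv φ r = f (φ r) + g (φ r) * |deriv φ r| ^ q) :
    ∀ᶠ s in 𝓝[>] 0, 0 < deriv φ s := by
  obtain ⟨L, hL⟩ := hd2
  have hslope : Tendsto (fun s => deriv φ s / s) (𝓝[>] 0) (𝓝 L) :=
    HasDerivAt.lhopital_zero_right_on_Ioo hR hv' (fun s _ => hasDerivAt_id s)
      (fun _ _ => one_ne_zero) hd0 (tendsto_nhdsWithin_of_tendsto_nhds tendsto_id)
      (by simpa only [div_one] using hL)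
  have hlhs : Tendsto (fun s => deriv (deriv φ) s + (c - 1) / s * deriv φ s) (𝓝[>] 0)
      (𝓝 (L + (c - 1) * L)) :=
    hL.add ((hslope.const_mul (c - 1)).congr fun s => by ring)
  have hrhs : Tendsto (fun s => f (φ s) + g (φ s) * |deriv φ s| ^ q) (𝓝[>] 0)
      (𝓝 (f a + g a * |0| ^ q)) :=
    (hf.tendsto.comp hφ).add ((hg.tendsto.comp hφ).mul
      ((continuousAt_rpow_const _ q (Or.inr hq.le)).tendsto.comp hd0.abs))
  have hcL : c * L = f a := by
    have := tendsto_nhds_unique (hlhs.congr' (eventually_of_mem (Ioo_mem_nhdsGT hR) hode)) hrhs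
    rw [abs_zero, zero_rpow hq.ne'] at this
    linarith
  have hL : 0 < L := pos_of_mul_pos_right (hcL ▸ hfa) hc.le
  filter_upwards [hslope.eventually (lt_mem_nhds hL), self_mem_nhdsWithin] with s hs hs0
  exact (div_pos_iff_of_pos_right hs0).1 hs

lemma deriv_pos_of_radial_ode (hc : 0 < c) (hq : 0 < q) (hR : 0 < R) (hfpos : ∀ t, 0 < f t)
    (hf : ContinuousAt f a) (hg : ContinuousAt g a) (hφ : Tendsto φ (𝓝[>] 0) (𝓝 a))
    (hv' : ∀ s ∈ Ioo 0 R, HasDerivAt (deriv φ) (deriv (deriv φ) s) s)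
    (hd0 : Tendsto (deriv φ) (𝓝[>] 0) (𝓝 0))
    (hd2 : ∃ L, Tendsto (deriv (deriv φ)) (𝓝[>] 0) (𝓝 L))
    (hode : ∀ r ∈ Ioo 0 R,
      deriv (deriv φ) r + (c - 1) / r * deriv φ r = f (φ r) + g (φ r) * |deriv φ r| ^ q) :
    ∀ s ∈ Ioo 0 R, 0 < deriv φ s := by
  refine pos_of_eventually_pos_of_deriv_pos_of_eq_zero hv'
    (eventually_deriv_pos_of_radial_ode hc hq hR (hfpos a) hf hg hφ hv' hd0 hd2 hode)
    fun s hs hs0 => ?_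
  have hodes := hode s hs
  rw [hs0, abs_zero, zero_rpow hq.ne', mul_zero, mul_zero, add_zero, add_zero] at hodes
  exact hodes ▸ hfpos (φ s)

lemma deriv_le_gradientBound_of_radial_ode (hc : 1 ≤ c) (hq0 : 0 ≤ q) (hq2 : q < 2)
    (hf : Continuous f) (hfnn : ∀ t, 0 ≤ f t) (hg : Continuous g)
    (hφ' : ∀ s ∈ Ioo 0 R, HasDerivAt φ (deriv φ s) s)
    (hv' : ∀ s ∈ Ioo 0 R, HasDerivAt (deriv φ) (deriv (deriv φ) s) s)
    (hvnn : ∀ s ∈ Ioo 0 R, 0 ≤ deriv φ s) (hφa : ∀ s ∈ Ioo 0 R, a ≤ φ s)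
    (hd0 : Tendsto (deriv φ) (𝓝[>] 0) (𝓝 0))
    (hode : ∀ r ∈ Ioo 0 R,
      deriv (deriv φ) r + (c - 1) / r * deriv φ r = f (φ r) + g (φ r) * |deriv φ r| ^ q) :
    ∀ s ∈ Ioo 0 R, deriv φ s ≤ 2 ^ (2 / (2 - q)) * gradientBound f g q a (φ s) := by
  intro s hs
  have hF (x : ℝ) : HasDerivAt (fun y => ∫ t in a..y, f t) (f x) x :=
    (hf.integral_hasStrictDerivAt a x).hasDerivAt
  have hG (x : ℝ) : HasDerivAt (fun y => ∫ t in a..y, max (g t) 0) (max (g x) 0) x :=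
    ((hg.max continuous_const).integral_hasStrictDerivAt a x).hasDerivAt
  have hineq : ∀ t ∈ Ioo 0 R, deriv φ t * deriv (deriv φ) t ≤
      f (φ t) * deriv φ t + max (g (φ t)) 0 * deriv φ t * deriv φ t ^ q := by
    intro t ht
    have hv := hvnn t ht
    have hode' := hode t ht
    rw [abs_of_nonneg hv] at hode'
    have hdamp : 0 ≤ (c - 1) / t * deriv φ t :=
      mul_nonneg (div_nonneg (sub_nonneg.2 hc) ht.1.le) hv
    have hg' : g (φ t) * deriv φ t ^ q ≤ max (g (φ t)) 0 * deriv φ t ^ q :=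
      mul_le_mul_of_nonneg_right (le_max_left _ _) (rpow_nonneg hv q)
    nlinarith [mul_le_mul_of_nonneg_left hg' hv, mul_nonneg hv hdamp]
  have hε : ∀ ε ∈ Ioo 0 s,
      deriv φ s ≤ 2 ^ (2 / (2 - q)) * (deriv φ ε + gradientBound f g q a (φ s)) := by
    intro ε hε
    have hsub : Icc ε s ⊆ Ioo 0 R := Icc_subset_Ioo hε.1 hs.2
    have hεR : ε ∈ Ioo 0 R := hsub ⟨le_rfl, hε.2.le⟩
    rw [gradientBound, ← add_assoc]
    exact le_of_mul_deriv_le_add_mul_rpow hq0 hq2 hε.2.le (fun t ht => hv' t (hsub ht))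
      (fun t ht => (hF (φ t)).comp t (hφ' t (hsub ht)))
      (fun t ht => (hG (φ t)).comp t (hφ' t (hsub ht)))
      (fun t ht => hvnn t (hsub ht))
      (fun t ht => mul_nonneg (hfnn _) (hvnn t (hsub (Ioo_subset_Icc_self ht))))
      (fun t ht => mul_nonneg (le_max_right _ _) (hvnn t (hsub (Ioo_subset_Icc_self ht))))
      (intervalIntegral.integral_nonneg (hφa ε hεR) fun _ _ => hfnn _)
      (intervalIntegral.integral_nonneg (hφa ε hεR) fun _ _ => le_max_right _ _)
      (fun t ht => hineq t (hsub (Ioo_subset_Icc_self ht)))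
  have hlim : Tendsto (fun ε => 2 ^ (2 / (2 - q)) * (deriv φ ε + gradientBound f g q a (φ s)))
      (𝓝[>] 0) (𝓝 (2 ^ (2 / (2 - q)) * gradientBound f g q a (φ s))) := by
    simpa only [zero_add] using (hd0.add_const _).const_mul _
  exact ge_of_tendsto hlim (eventually_of_mem (Ioo_mem_nhdsGT hs.1) hε)

end RadialODE

theorem stmt10_general (c q R a : ℝ) (hc : 1 ≤ c) (hq0 : 0 < q) (hq2 : q < 2) (hR : 0 < R)
    (f g φ : ℝ → ℝ)
    (hf : Continuous f) (hfpos : ∀ t, 0 < f t) (hfmono : Monotone f)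
    (hg : Continuous g)
    (hφc : ContinuousOn φ (Set.Ico 0 R))
    (hφ2 : ContDiffOn ℝ 2 φ (Set.Ioo 0 R))
    (hφa : φ 0 = a)
    (hd0 : Filter.Tendsto (deriv φ) (nhdsWithin 0 (Set.Ioi 0)) (nhds 0))
    (hd2 : ∃ L, Filter.Tendsto (deriv (deriv φ)) (nhdsWithin 0 (Set.Ioi 0)) (nhds L))
    (hode : ∀ r ∈ Set.Ioo 0 R,
      deriv (deriv φ) r + (c - 1) / r * deriv φ r = f (φ r) + g (φ r) * |deriv φ r| ^ q) :
    ∀ r ∈ Set.Ico 0 R,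
      (2 : ℝ) ^ (-(2 / (2 - q))) *
          ∫ t in a..φ r,
            1 / ((∫ s in a..t, f s) ^ ((1 : ℝ) / 2) +
              (∫ s in a..t, max (g s) 0) ^ (1 / (2 - q)))
        ≤ r := by
  intro r hr
  have hφ' : ∀ s ∈ Ioo 0 R, HasDerivAt φ (deriv φ s) s := fun s hs =>
    ((hφ2.differentiableOn (by norm_num)).differentiableAt (isOpen_Ioo.mem_nhds hs)).hasDerivAt
  have hv' : ∀ s ∈ Ioo 0 R, HasDerivAt (deriv φ) (deriv (deriv φ) s) s := fun s hs =>
    (((hφ2.deriv_of_isOpen (m := 1) isOpen_Ioo (by norm_num)).differentiableOn one_ne_zero)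
      |>.differentiableAt (isOpen_Ioo.mem_nhds hs)).hasDerivAt
  have hφ0 : Tendsto φ (𝓝[>] 0) (𝓝 a) := hφa ▸ ((hφc 0 ⟨le_rfl, hR⟩).mono_of_mem_nhdsWithin
    (mem_of_superset (Ioo_mem_nhdsGT hR) Ioo_subset_Ico_self)).tendsto
  have hvpos := deriv_pos_of_radial_ode (by linarith) hq0 hR hfpos hf.continuousAt
    hg.continuousAt hφ0 hv' hd0 hd2 hode
  have hφmono : StrictMonoOn φ (Ico 0 R) :=
    strictMonoOn_of_deriv_pos (convex_Ico 0 R) hφc (by rwa [interior_Ico])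
  have hφa_le : ∀ s ∈ Ioo 0 R, a ≤ φ s := fun s hs =>
    hφa ▸ hφmono.monotoneOn ⟨le_rfl, hR⟩ ⟨hs.1.le, hs.2⟩ hs.1.le
  have hkey := deriv_le_gradientBound_of_radial_ode hc hq0.le hq2 hf (fun t => (hfpos t).le) hg
    hφ' hv' (fun s hs => (hvpos s hs).le) hφa_le hd0 hode
  have hsub : Icc 0 r ⊆ Ico 0 R := Icc_subset_Ico_right hr.2
  have hsub' : Ioo 0 r ⊆ Ioo 0 R := Ioo_subset_Ioo_right hr.2.le
  have hbound := integral_one_div_gradientBound_le hf (hfpos a) hfmono hg hq2 hr.1 hφa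
    (hφc.mono hsub) (fun s hs => hφ' s (hsub' hs)) (hφmono.mono hsub) fun s hs => hkey s (hsub' hs)
  rw [sub_zero] at hbound
  rw [rpow_neg zero_le_two, inv_mul_le_iff₀ (by positivity)]
  exact hbound

theorem stmt10 (c q R a : ℝ) (hc : 1 ≤ c) (hq0 : 0 < q) (hq2 : q < 2) (hR : 0 < R)
    (f g φ : ℝ → ℝ)
    (hf : Continuous f) (hfpos : ∀ t, 0 < f t) (hfmono : Monotone f)
    (hg : Continuous g) (hgmono : Monotone g)
    (hφc : ContinuousOn φ (Set.Ico 0 R))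
    (hφ2 : ContDiffOn ℝ 2 φ (Set.Ioo 0 R))
    (hφa : φ 0 = a)
    (hd0 : Filter.Tendsto (deriv φ) (nhdsWithin 0 (Set.Ioi 0)) (nhds 0))
    (hd2 : ∃ L, Filter.Tendsto (deriv (deriv φ)) (nhdsWithin 0 (Set.Ioi 0)) (nhds L))
    (hode : ∀ r ∈ Set.Ioo 0 R,
      deriv (deriv φ) r + (c - 1) / r * deriv φ r = f (φ r) + g (φ r) * |deriv φ r| ^ q) :
    ∀ r ∈ Set.Ico 0 R,
      (2 : ℝ) ^ (-(2 / (2 - q))) *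
          ∫ t in a..φ r,
            1 / ((∫ s in a..t, f s) ^ ((1 : ℝ) / 2) +
              (∫ s in a..t, max (g s) 0) ^ (1 / (2 - q)))
        ≤ r :=
  stmt10_general c q R a hc hq0 hq2 hR f g φ hf hfpos hfmono hg hφc hφ2 hφa hd0 hd2 hode
end

section
/- Let 0 < q < 2, c ≥ 1, f, g continuous nondecreasing, f positive, g(a) ≥ 0. If φ solves the radial ODE Cauchy problem on [0,R) with φ(0)=a, φ'(0)=0, then for all r ∈ [0,R): r ≤ 2 (c/(2-q))^{1/(2-q)} ∫_a^{φ(r)} dt / [ (∫_a^t f(s) ds)^{1/2} + (∫_a^t g⁺(s) ds)^{1/(2-q)} ]. -/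
/-!
At the centre `φ'(r) / r → φ''(0)`, so the equation gives `c φ''(0) = f a > 0`. As long as
`φ'' ≥ 0`, the right-hand side `N = f(φ) + g(φ) |φ'|^q` is nondecreasing in `r`, and integrating
`(r^(c-1) φ')' = r^(c-1) N` yields `c φ' ≤ r N`, hence `c φ'' ≥ N ≥ f a`; by continuity of `φ''`
this propagates to all of `(0, R)`. With `F`, `G` the primitives of `f`, `g⁺` from `a`, the
inequalities `c φ'' ≥ f(φ)` and `c φ'' ≥ g(φ) φ'^q` integrate to `φ'^2 ≥ (2/c) F(φ)` and
`φ'^(2-q) ≥ ((2-q)/c) G(φ)`, and since `((2-q)/c)^(1/(2-q)) ≤ (2/c)^(1/2)` this gives the gradient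
bound `2 φ' ≥ ((2-q)/c)^(1/(2-q)) (F^(1/2) + G^(1/(2-q)))(φ)`. Dividing by the bracket and
integrating in `r` proves the claim; the integrand is `O((t - a)^(-1/2))` at `a` because
`F(t) ≥ f a (t - a)`.
-/

open Real MeasureTheory Set Filter Topology

theorem le_of_hasDerivAt_le_of_tendsto {u w u' w' : ℝ → ℝ} {a b l : ℝ} (hab : a < b)
    (hu : ∀ t ∈ Ioc a b, HasDerivAt u (u' t) t) (hw : ∀ t ∈ Ioc a b, HasDerivAt w (w' t) t)
    (hle : ∀ t ∈ Ioo a b, u' t ≤ w' t)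
    (hul : Tendsto u (𝓝[>] a) (𝓝 l)) (hwl : Tendsto w (𝓝[>] a) (𝓝 l)) : u b ≤ w b := by
  have hv : ∀ t ∈ Ioc a b, HasDerivAt (fun x => w x - u x) (w' t - u' t) t :=
    fun t ht => (hw t ht).sub (hu t ht)
  have hmono : MonotoneOn (fun x => w x - u x) (Ioc a b) := by
    refine monotoneOn_of_deriv_nonneg (convex_Ioc a b)
      (fun t ht => (hv t ht).continuousAt.continuousWithinAt) ?_ ?_ <;> rw [interior_Ioc]
    · exact fun t ht => (hv t (Ioo_subset_Ioc_self ht)).differentiableAt.differentiableWithinAt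
    · exact fun t ht => (hv t (Ioo_subset_Ioc_self ht)).deriv ▸ sub_nonneg.2 (hle t ht)
  have hlim : Tendsto (fun x => w x - u x) (𝓝[>] a) (𝓝 0) := by simpa using hwl.sub hul
  have : 0 ≤ w b - u b := le_of_tendsto hlim <| by
    filter_upwards [Ioc_mem_nhdsGT hab] with t ht using hmono ht (right_mem_Ioc.2 hab) ht.2
  linarith

theorem mul_le_mul_of_radial_ode {D D' N : ℝ → ℝ} {c s : ℝ} (hc : 1 ≤ c) (hs : 0 < s)
    (hD : ∀ t ∈ Ioc 0 s, HasDerivAt D (D' t) t) (hD0 : Tendsto D (𝓝[>] 0) (𝓝 0))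
    (hode : ∀ t ∈ Ioo 0 s, D' t + (c - 1) / t * D t = N t) (hN : ∀ t ∈ Ioo 0 s, N t ≤ N s) :
    c * D s ≤ s * N s := by
  have hpow : ∀ t ≠ 0, ∀ e : ℝ, HasDerivAt (fun x : ℝ => x ^ e) (e * t ^ (e - 1)) t :=
    fun t ht e => hasDerivAt_rpow_const (Or.inl ht)
  have hpow0 : ∀ e : ℝ, 0 ≤ e → Tendsto (fun x : ℝ => x ^ e) (𝓝[>] 0) (𝓝 (0 ^ e)) :=
    fun e he => (continuousAt_rpow_const 0 e (Or.inr he)).tendsto.mono_left nhdsWithin_le_nhds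
  -- integrating factor: `(t ^ (c - 1) * D)' = t ^ (c - 1) * N`
  have key : s ^ (c - 1) * D s ≤ N s * (s ^ c / c) := by
    refine le_of_hasDerivAt_le_of_tendsto (u := fun t => t ^ (c - 1) * D t) (l := 0) hs
      (fun t ht => (hpow t ht.1.ne' (c - 1)).mul (hD t ht))
      (fun t ht => ((hpow t ht.1.ne' c).div_const c).const_mul (N s))
      (fun t ht => ?_) (by simpa using (hpow0 _ (by linarith)).mul hD0) ?_
    · have h1 : t ^ (c - 1 - 1) = t ^ (c - 1) / t := rpow_sub_one ht.1.ne' _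
      have h2 : c * t ^ (c - 1) / c = t ^ (c - 1) := by field_simp
      calc (c - 1) * t ^ (c - 1 - 1) * D t + t ^ (c - 1) * D' t
          = t ^ (c - 1) * N t := by rw [h1, ← hode t ht]; ring
        _ ≤ t ^ (c - 1) * N s := mul_le_mul_of_nonneg_left (hN t ht) (rpow_nonneg ht.1.le _)
        _ = N s * (c * t ^ (c - 1) / c) := by rw [h2, mul_comm]
    · simpa [zero_rpow (show c ≠ 0 by linarith)] using
        ((hpow0 c (by linarith)).div_const c).const_mul (N s)
  have hsc : N s * (s ^ c / c) = s ^ (c - 1) * (s * N s / c) := by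
    rw [rpow_sub_one hs.ne']; field_simp
  rw [hsc, mul_le_mul_iff_right₀ (rpow_pos_of_pos hs (c - 1)), le_div_iff₀ (by linarith)] at key
  linarith

theorem le_mul_deriv_of_radial_ode {D D' N : ℝ → ℝ} {c s : ℝ} (hc : 1 ≤ c) (hs : 0 < s)
    (hD : ∀ t ∈ Ioc 0 s, HasDerivAt D (D' t) t) (hD0 : Tendsto D (𝓝[>] 0) (𝓝 0))
    (hode : ∀ t ∈ Ioc 0 s, D' t + (c - 1) / t * D t = N t) (hN : ∀ t ∈ Ioo 0 s, N t ≤ N s) :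
    N s ≤ c * D' s := by
  have hcD := mul_le_mul_of_radial_ode hc hs hD hD0 (fun t ht => hode t (Ioo_subset_Ioc_self ht)) hN
  have hD's : c * D' s = c * N s - (c - 1) / s * (c * D s) := by
    rw [← hode s (right_mem_Ioc.2 hs)]; ring
  have hdamp : (c - 1) / s * (c * D s) ≤ (c - 1) * N s := by
    calc (c - 1) / s * (c * D s) ≤ (c - 1) / s * (s * N s) :=
          mul_le_mul_of_nonneg_left hcD (div_nonneg (by linarith) hs.le)
      _ = (c - 1) * N s := by field_simp
  linarith

theorem two_sub_div_rpow_le_two_div_rpow {c q : ℝ} (hc : 1 ≤ c) (hq0 : 0 < q) (hq2 : q < 2) :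
    ((2 - q) / c) ^ (1 / (2 - q)) ≤ (2 / c) ^ ((1 : ℝ) / 2) := by
  have h2q : 0 < 2 - q := by linarith
  have hc0 : 0 < c := by linarith
  rw [rpow_def_of_pos (div_pos h2q hc0), rpow_def_of_pos (div_pos two_pos hc0), exp_le_exp,
    log_div h2q.ne' hc0.ne', log_div two_ne_zero hc0.ne', mul_one_div, mul_one_div,
    div_le_div_iff₀ h2q two_pos]
  have hlog : log (2 - q) - log 2 ≤ (2 - q) / 2 - 1 := by
    have := log_le_sub_one_of_pos (show 0 < (2 - q) / 2 by linarith)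
    rwa [log_div h2q.ne' two_ne_zero] at this
  have hlog2 : log 2 < 1 := by linarith [log_two_lt_d9]
  nlinarith [mul_nonneg (log_nonneg hc) hq0.le]

theorem mul_integral_le_rpow {φ D D' k : ℝ → ℝ} {a c p s : ℝ} (hc : 0 < c) (hp : p < 2) (hs : 0 < s)
    (hφ : ∀ t ∈ Ioc 0 s, HasDerivAt φ (D t) t) (hD : ∀ t ∈ Ioc 0 s, HasDerivAt D (D' t) t)
    (hDpos : ∀ t ∈ Ioc 0 s, 0 < D t) (hφ0 : Tendsto φ (𝓝[>] 0) (𝓝 a))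
    (hD0 : Tendsto D (𝓝[>] 0) (𝓝 0)) (hk : Continuous k)
    (hkD : ∀ t ∈ Ioo 0 s, k (φ t) * D t ^ p ≤ c * D' t) :
    (2 - p) / c * ∫ x in a..φ s, k x ≤ D s ^ (2 - p) := by
  have hK : ∀ x, HasDerivAt (fun y => ∫ x in a..y, k x) (k x) x := fun x =>
    (hk.integral_hasStrictDerivAt a x).hasDerivAt
  refine le_of_hasDerivAt_le_of_tendsto (l := 0) hs
    (fun t ht => ((hK (φ t)).comp t (hφ t ht)).const_mul ((2 - p) / c))
    (fun t ht => (hD t ht).rpow_const (Or.inl (hDpos t ht).ne')) (fun t ht => ?_) ?_ ?_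
  · have hDt := hDpos t (Ioo_subset_Ioc_self ht)
    have hsplit : D t = D t ^ (2 - p - 1) * D t ^ p := by
      rw [← rpow_add hDt, show 2 - p - 1 + p = 1 by ring, rpow_one]
    have hfac : 0 ≤ (2 - p) * D t ^ (2 - p - 1) :=
      mul_nonneg (by linarith) (rpow_nonneg hDt.le _)
    calc (2 - p) / c * (k (φ t) * D t)
        = (2 - p) * D t ^ (2 - p - 1) * (k (φ t) * D t ^ p) / c := by
          conv_lhs => rw [hsplit]
          ring
      _ ≤ (2 - p) * D t ^ (2 - p - 1) * (c * D' t) / c := by gcongr _ * ?_ / _; exact hkD t ht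
      _ = D' t * (2 - p) * D t ^ (2 - p - 1) := by field_simp
  · simpa using (((hK a).continuousAt.tendsto).comp hφ0).const_mul ((2 - p) / c)
  · have := ((continuousAt_rpow_const 0 (2 - p) (Or.inr (by linarith))).tendsto).comp hD0
    rwa [zero_rpow (by linarith)] at this

theorem intervalIntegrable_one_div_of_mul_sqrt_le {ρ : ℝ → ℝ} {a b m : ℝ} (hab : a ≤ b)
    (hm : 0 < m) (hρ : Continuous ρ) (hle : ∀ x ∈ Ioc a b, m * (x - a) ^ (1 / 2 : ℝ) ≤ ρ x) :
    IntervalIntegrable (fun x => 1 / ρ x) volume a b := by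
  have hbound : IntervalIntegrable (fun x => m⁻¹ * (x - a) ^ (-(1 / 2) : ℝ)) volume a b := by
    have := (intervalIntegral.intervalIntegrable_rpow' (a := 0) (b := b - a)
      (r := -(1 / 2)) (by norm_num)).comp_sub_right a
    simp only [zero_add, sub_add_cancel] at this
    exact this.const_mul _
  refine hbound.mono_fun' (hρ.measurable.const_div 1).aestronglyMeasurable ?_
  rw [uIoc_of_le hab]
  refine (ae_restrict_iff' measurableSet_Ioc).2 (Eventually.of_forall fun x hx => ?_)
  have hxa : 0 < x - a := sub_pos.2 hx.1
  have hpos : 0 < m * (x - a) ^ (1 / 2 : ℝ) := mul_pos hm (rpow_pos_of_pos hxa _)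
  show ‖1 / ρ x‖ ≤ m⁻¹ * (x - a) ^ (-(1 / 2) : ℝ)
  rw [Real.norm_eq_abs, abs_of_pos (one_div_pos.2 (hpos.trans_le (hle x hx))),
    rpow_neg hxa.le, ← mul_inv, ← one_div]
  exact one_div_le_one_div_of_le hpos (hle x hx)

theorem mul_le_integral_one_div {φ D ρ : ℝ → ℝ} {a κ r : ℝ} (hr : 0 < r)
    (hφ : ∀ t ∈ Ioc 0 r, HasDerivAt φ (D t) t) (hφ0 : Tendsto φ (𝓝[>] 0) (𝓝 a))
    (hφa : ∀ t ∈ Ioc 0 r, a < φ t) (hρ : Continuous ρ) (hρpos : ∀ x, a < x → 0 < ρ x)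
    (hint : ∀ x, a ≤ x → IntervalIntegrable (fun x => 1 / ρ x) volume a x)
    (hκ : ∀ t ∈ Ioo 0 r, κ * ρ (φ t) ≤ D t) :
    κ * r ≤ ∫ x in a..φ r, 1 / ρ x := by
  set H := fun y => ∫ x in a..y, 1 / ρ x
  have hH : ∀ x, a < x → HasDerivAt H (1 / ρ x) x := fun x hx =>
    intervalIntegral.integral_hasDerivAt_right (hint x hx.le)
      (hρ.measurable.const_div 1).stronglyMeasurable.stronglyMeasurableAtFilter
      (continuousAt_const.div hρ.continuousAt (hρpos x hx).ne')
  have hHa : ContinuousWithinAt H (Icc a (a + 1)) a := by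
    have := intervalIntegral.continuousOn_primitive_interval' (hint (a + 1) (by linarith))
      left_mem_uIcc
    rw [uIcc_of_le (by linarith)] at this
    exact this a (left_mem_Icc.2 (by linarith))
  have hφIcc : Tendsto φ (𝓝[>] 0) (𝓝[Icc a (a + 1)] a) := by
    refine tendsto_nhdsWithin_iff.2 ⟨hφ0, ?_⟩
    filter_upwards [Ioc_mem_nhdsGT hr, hφ0.eventually (eventually_lt_nhds (lt_add_one a))]
      with t ht h1 using ⟨(hφa t ht).le, h1.le⟩
  refine le_of_hasDerivAt_le_of_tendsto (l := 0) hr (u := fun t => κ * t) (w := H ∘ φ)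
    (fun t _ => (hasDerivAt_id t).const_mul κ)
    (fun t ht => (hH (φ t) (hφa t ht)).comp t (hφ t ht))
    (fun t ht => ?_) ?_ ?_
  · rw [mul_one, one_div_mul_eq_div, le_div_iff₀ (hρpos _ (hφa t (Ioo_subset_Ioc_self ht)))]
    exact hκ t ht
  · exact ((continuous_const_mul κ).tendsto' 0 0 (mul_zero κ)).mono_left nhdsWithin_le_nhds
  · simpa [H] using hHa.tendsto.comp hφIcc

noncomputable def gradientProfile (f g : ℝ → ℝ) (a q t : ℝ) : ℝ :=
  (∫ s in a..t, f s) ^ ((1 : ℝ) / 2) + (∫ s in a..t, max (g s) 0) ^ (1 / (2 - q))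

theorem continuous_gradientProfile {f g : ℝ → ℝ} {a q : ℝ} (hf : Continuous f)
    (hg : Continuous g) (hq : q ≤ 2) : Continuous (gradientProfile f g a q) := by
  have hprimitive : ∀ {k : ℝ → ℝ}, Continuous k → Continuous fun t => ∫ s in a..t, k s :=
    fun hk => intervalIntegral.continuous_primitive (fun x y => hk.intervalIntegrable x y) a
  exact ((hprimitive hf).rpow_const fun _ => Or.inr (by norm_num)).add
    ((hprimitive (hg.max continuous_const)).rpow_const
      fun _ => Or.inr (one_div_nonneg.2 (by linarith)))

theorem mul_rpow_le_gradientProfile {f g : ℝ → ℝ} {a q x : ℝ} (hf : Continuous f)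
    (hfmono : Monotone f) (hfa : 0 ≤ f a) (hx : a ≤ x) :
    f a ^ (1 / 2 : ℝ) * (x - a) ^ (1 / 2 : ℝ) ≤ gradientProfile f g a q x := by
  have hF : (x - a) * f a ≤ ∫ t in a..x, f t := by
    simpa using intervalIntegral.integral_mono_on hx (intervalIntegrable_const (μ := volume))
      (hf.intervalIntegrable a x) fun t ht => hfmono ht.1
  have hG : 0 ≤ ∫ t in a..x, max (g t) 0 :=
    intervalIntegral.integral_nonneg hx fun t _ => le_max_right (g t) 0
  rw [← mul_rpow hfa (sub_nonneg.2 hx), gradientProfile]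
  linarith [rpow_le_rpow (by positivity) (show f a * (x - a) ≤ ∫ t in a..x, f t by linarith)
    (by norm_num : (0 : ℝ) ≤ 1 / 2), rpow_nonneg hG (1 / (2 - q))]

structure IsRadialSolution (c q R a : ℝ) (f g φ : ℝ → ℝ) : Prop where
  continuousOn : ContinuousOn φ (Ico 0 R)
  contDiffOn : ContDiffOn ℝ 2 φ (Ioo 0 R)
  apply_zero : φ 0 = a
  tendsto_deriv : Tendsto (deriv φ) (𝓝[>] 0) (𝓝 0)
  exists_tendsto_deriv_deriv : ∃ L, Tendsto (deriv (deriv φ)) (𝓝[>] 0) (𝓝 L)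
  ode : ∀ r ∈ Ioo 0 R,
    deriv (deriv φ) r + (c - 1) / r * deriv φ r = f (φ r) + g (φ r) * |deriv φ r| ^ q

namespace IsRadialSolution

variable {c q R a : ℝ} {f g φ : ℝ → ℝ}

theorem hasDerivAt (hφ : IsRadialSolution c q R a f g φ) {t : ℝ} (ht : t ∈ Ioo 0 R) :
    HasDerivAt φ (deriv φ t) t :=
  ((hφ.contDiffOn.differentiableOn (by norm_num)).differentiableAt
    (isOpen_Ioo.mem_nhds ht)).hasDerivAt

theorem contDiffOn_deriv (hφ : IsRadialSolution c q R a f g φ) :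
    ContDiffOn ℝ 1 (deriv φ) (Ioo 0 R) :=
  hφ.contDiffOn.deriv_of_isOpen isOpen_Ioo (by norm_num)

theorem hasDerivAt_deriv (hφ : IsRadialSolution c q R a f g φ) {t : ℝ} (ht : t ∈ Ioo 0 R) :
    HasDerivAt (deriv φ) (deriv (deriv φ) t) t :=
  ((hφ.contDiffOn_deriv.differentiableOn (by norm_num)).differentiableAt
    (isOpen_Ioo.mem_nhds ht)).hasDerivAt

theorem continuousOn_deriv_deriv (hφ : IsRadialSolution c q R a f g φ) :
    ContinuousOn (deriv (deriv φ)) (Ioo 0 R) :=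
  hφ.contDiffOn_deriv.continuousOn_deriv_of_isOpen isOpen_Ioo le_rfl

theorem tendsto_nhdsGT (hφ : IsRadialSolution c q R a f g φ) (hR : 0 < R) :
    Tendsto φ (𝓝[>] 0) (𝓝 a) := by
  have h := hφ.continuousOn 0 (left_mem_Ico.2 hR)
  rw [ContinuousWithinAt, hφ.apply_zero, ← nhdsWithin_Ioo_eq_nhdsGT hR] at *
  exact h.mono_left (nhdsWithin_mono 0 Ioo_subset_Ico_self)

theorem tendsto_deriv_deriv_nhdsGT (hφ : IsRadialSolution c q R a f g φ) (hR : 0 < R)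
    (hc : 0 < c) (hq : 0 < q) (hf : Continuous f) (hg : Continuous g) :
    Tendsto (deriv (deriv φ)) (𝓝[>] 0) (𝓝 (f a / c)) := by
  obtain ⟨L, hL⟩ := hφ.exists_tendsto_deriv_deriv
  have hratio : Tendsto (fun t => deriv φ t / t) (𝓝[>] 0) (𝓝 L) :=
    HasDerivAt.lhopital_zero_right_on_Ioo hR (fun t ht => hφ.hasDerivAt_deriv ht)
      (fun t _ => hasDerivAt_id t) (fun _ _ => one_ne_zero) hφ.tendsto_deriv
      (tendsto_nhdsWithin_of_tendsto_nhds tendsto_id) (by simpa using hL)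
  have hlhs : Tendsto (fun t => deriv (deriv φ) t + (c - 1) / t * deriv φ t) (𝓝[>] 0)
      (𝓝 (L + (c - 1) * L)) :=
    (hL.add (hratio.const_mul (c - 1))).congr fun t => by ring
  have hφ0 := hφ.tendsto_nhdsGT hR
  have hpow : Tendsto (fun t => |deriv φ t| ^ q) (𝓝[>] 0) (𝓝 0) := by
    have habs := hφ.tendsto_deriv.abs
    rw [abs_zero] at habs
    have := (continuousAt_rpow_const 0 q (Or.inr hq.le)).tendsto.comp habs
    rwa [zero_rpow hq.ne'] at this
  have hrhs : Tendsto (fun t => f (φ t) + g (φ t) * |deriv φ t| ^ q) (𝓝[>] 0) (𝓝 (f a)) := by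
    simpa using ((hf.tendsto a).comp hφ0).add (((hg.tendsto a).comp hφ0).mul hpow)
  have hode : (fun t => deriv (deriv φ) t + (c - 1) / t * deriv φ t)
      =ᶠ[𝓝[>] 0] fun t => f (φ t) + g (φ t) * |deriv φ t| ^ q := by
    filter_upwards [Ioo_mem_nhdsGT hR] with t ht using hφ.ode t ht
  have hlim : L + (c - 1) * L = f a := tendsto_nhds_unique (hlhs.congr' hode) hrhs
  convert hL using 2
  rw [div_eq_iff hc.ne', ← hlim]
  ring

section Convex

variable (hφ : IsRadialSolution c q R a f g φ) {b : ℝ} (hbR : b ≤ R)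
  (hb : ∀ t ∈ Ioo 0 b, 0 ≤ deriv (deriv φ) t)
include hφ hbR hb

theorem deriv_nonneg_of_convex {s : ℝ} (hs : s ∈ Ioo 0 b) : 0 ≤ deriv φ s := by
  have hsub : Ioc 0 s ⊆ Ioo 0 R := fun t ht => ⟨ht.1, ht.2.trans_lt (hs.2.trans_le hbR)⟩
  exact le_of_hasDerivAt_le_of_tendsto (l := 0) hs.1 (fun t _ => hasDerivAt_const t 0)
    (fun t ht => hφ.hasDerivAt_deriv (hsub ht)) (fun t ht => hb t ⟨ht.1, ht.2.trans hs.2⟩)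
    tendsto_const_nhds hφ.tendsto_deriv

theorem monotoneOn_of_convex : MonotoneOn φ (Ico 0 b) := by
  have hsub : Ioo 0 b ⊆ Ioo 0 R := Ioo_subset_Ioo_right hbR
  refine monotoneOn_of_deriv_nonneg (convex_Ico 0 b)
    (hφ.continuousOn.mono (Ico_subset_Ico_right hbR)) ?_ ?_ <;> rw [interior_Ico]
  · exact fun t ht => (hφ.hasDerivAt (hsub ht)).differentiableAt.differentiableWithinAt
  · exact fun t ht => hφ.deriv_nonneg_of_convex hbR hb ht

theorem le_apply_of_convex {s : ℝ} (hs : s ∈ Ioo 0 b) : a ≤ φ s :=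
  hφ.apply_zero ▸ hφ.monotoneOn_of_convex hbR hb (left_mem_Ico.2 (hs.1.trans hs.2))
    (Ioo_subset_Ico_self hs) hs.1.le

theorem monotoneOn_deriv_of_convex : MonotoneOn (deriv φ) (Ioo 0 b) := by
  have hsub : Ioo 0 b ⊆ Ioo 0 R := Ioo_subset_Ioo_right hbR
  refine monotoneOn_of_deriv_nonneg (convex_Ioo 0 b)
    (fun t ht => (hφ.hasDerivAt_deriv (hsub ht)).continuousAt.continuousWithinAt) ?_ ?_ <;>
    rw [interior_Ioo]
  · exact fun t ht => (hφ.hasDerivAt_deriv (hsub ht)).differentiableAt.differentiableWithinAt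
  · exact hb

theorem rhs_le_mul_deriv_deriv_of_convex (hc : 1 ≤ c) (hq : 0 ≤ q) (hfmono : Monotone f)
    (hgmono : Monotone g) (hga : 0 ≤ g a) {s : ℝ} (hs : s ∈ Ioo 0 b) :
    f (φ s) + g (φ s) * |deriv φ s| ^ q ≤ c * deriv (deriv φ) s := by
  have hsub : Ioc 0 s ⊆ Ioo 0 b := fun t ht => ⟨ht.1, ht.2.trans_lt hs.2⟩
  refine le_mul_deriv_of_radial_ode hc hs.1
    (fun t ht => hφ.hasDerivAt_deriv (Ioo_subset_Ioo_right hbR (hsub ht))) hφ.tendsto_deriv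
    (fun t ht => hφ.ode t (Ioo_subset_Ioo_right hbR (hsub ht))) fun t ht => ?_
  have ht' : t ∈ Ioo 0 b := hsub (Ioo_subset_Ioc_self ht)
  have hφts : φ t ≤ φ s := hφ.monotoneOn_of_convex hbR hb (Ioo_subset_Ico_self ht')
    (Ioo_subset_Ico_self hs) ht.2.le
  have hDt := hφ.deriv_nonneg_of_convex hbR hb ht'
  have hDts : deriv φ t ≤ deriv φ s := hφ.monotoneOn_deriv_of_convex hbR hb ht' hs ht.2.le
  have hgt : 0 ≤ g (φ t) := hga.trans (hgmono (hφ.le_apply_of_convex hbR hb ht'))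
  have hpow : |deriv φ t| ^ q ≤ |deriv φ s| ^ q := by
    rw [abs_of_nonneg hDt, abs_of_nonneg (hDt.trans hDts)]
    exact rpow_le_rpow hDt hDts hq
  exact add_le_add (hfmono hφts)
    (mul_le_mul (hgmono hφts) hpow (rpow_nonneg (abs_nonneg _) q) (hgt.trans (hgmono hφts)))

theorem le_mul_deriv_deriv_of_convex (hc : 1 ≤ c) (hq : 0 ≤ q) (hfmono : Monotone f)
    (hgmono : Monotone g) (hga : 0 ≤ g a) {s : ℝ} (hs : s ∈ Ioo 0 b) :
    f a ≤ c * deriv (deriv φ) s := by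
  have has := hφ.le_apply_of_convex hbR hb hs
  have hg : 0 ≤ g (φ s) * |deriv φ s| ^ q :=
    mul_nonneg (hga.trans (hgmono has)) (rpow_nonneg (abs_nonneg _) q)
  linarith [hfmono has, hφ.rhs_le_mul_deriv_deriv_of_convex hbR hb hc hq hfmono hgmono hga hs]

end Convex

section Solution

variable (hφ : IsRadialSolution c q R a f g φ) (hR : 0 < R) (hc : 1 ≤ c) (hq : 0 < q)
  (hf : Continuous f) (hfpos : ∀ x, 0 < f x) (hfmono : Monotone f)
  (hg : Continuous g) (hgmono : Monotone g) (hga : 0 ≤ g a)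
include hφ hR hc hq hf hfpos hfmono hg hgmono hga

theorem exists_Ico_deriv_deriv_nonneg {x : ℝ} (hx : x ∈ Ico 0 R)
    (hxS : ∀ t ∈ Ioo 0 x, 0 ≤ deriv (deriv φ) t) :
    ∃ y > x, ∀ s ∈ Ico x y, 0 < s → 0 ≤ deriv (deriv φ) s := by
  have hc0 : 0 < c := by linarith
  have hfac : 0 < f a / c := div_pos (hfpos a) hc0
  rcases hx.1.eq_or_lt with rfl | hx0
  · obtain ⟨y, hy, hsub⟩ := mem_nhdsGT_iff_exists_Ioo_subset.1
      ((hφ.tendsto_deriv_deriv_nhdsGT hR hc0 hq hf hg).eventually (eventually_gt_nhds hfac))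
    exact ⟨y, hy, fun s hs hs0 => (hsub ⟨hs0, hs.2⟩).le⟩
  · have hcont : ContinuousAt (deriv (deriv φ)) x :=
      hφ.continuousOn_deriv_deriv.continuousAt (isOpen_Ioo.mem_nhds ⟨hx0, hx.2⟩)
    have hDx : f a / c ≤ deriv (deriv φ) x := by
      refine ge_of_tendsto (hcont.tendsto.mono_left (nhdsWithin_le_nhds (s := Iio x))) ?_
      filter_upwards [Ioo_mem_nhdsLT hx0] with t ht
      rw [div_le_iff₀' hc0]
      exact hφ.le_mul_deriv_deriv_of_convex hx.2.le hxS hc hq.le hfmono hgmono hga ht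
    obtain ⟨y, hy, hsub⟩ := exists_Ico_subset_of_mem_nhds
      (hcont.eventually (eventually_gt_nhds (hfac.trans_le hDx))) ⟨R, hx.2⟩
    exact ⟨y, hy, fun s hs _ => (hsub hs).le⟩

theorem deriv_deriv_nonneg {t : ℝ} (ht : t ∈ Ioo 0 R) :
    0 ≤ deriv (deriv φ) t := by
  set S := {b : ℝ | ∀ t ∈ Ioo 0 b, 0 ≤ deriv (deriv φ) t}
  -- `S` is cut out by the conditions `b ≤ t` over the points `t > 0` where `φ'' < 0`
  have hS : IsClosed S := by
    have : S = ⋂ t ∈ {t | 0 < t ∧ deriv (deriv φ) t < 0}, Iic t := by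
      ext b
      simp only [S, mem_iInter, mem_Iic, mem_Ioo, and_imp]
      exact ⟨fun h t ⟨ht0, hneg⟩ => not_lt.1 fun hlt => (h t ht0 hlt).not_gt hneg,
        fun h t ht0 htb => not_lt.1 fun hneg => (h t ⟨ht0, hneg⟩).not_gt htb⟩
    rw [this]
    exact isClosed_biInter fun t _ => isClosed_Iic
  have hstep : ∀ x ∈ S ∩ Ico 0 ((t + R) / 2), S ∈ 𝓝[>] x := by
    rintro x ⟨hxS, hx⟩
    obtain ⟨y, hy, hsub⟩ := hφ.exists_Ico_deriv_deriv_nonneg hR hc hq hf hfpos hfmono hg hgmono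
      hga ⟨hx.1, hx.2.trans (by linarith [ht.2])⟩ hxS
    refine mem_nhdsGT_iff_exists_Ioo_subset.2 ⟨y, hy, fun b hb s hs => ?_⟩
    rcases lt_or_ge s x with hsx | hxs
    · exact hxS s ⟨hs.1, hsx⟩
    · exact hsub s ⟨hxs, hs.2.trans hb.2⟩ hs.1
  have hIcc := (hS.inter isClosed_Icc).Icc_subset_of_forall_mem_nhdsWithin
    (show (0 : ℝ) ∈ S from fun s hs => absurd hs.2 hs.1.not_gt) hstep
  exact hIcc (right_mem_Icc.2 (by linarith [ht.1, ht.2])) t ⟨ht.1, by linarith [ht.2]⟩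

theorem rhs_le_mul_deriv_deriv {s : ℝ} (hs : s ∈ Ioo 0 R) :
    f (φ s) + g (φ s) * |deriv φ s| ^ q ≤ c * deriv (deriv φ) s :=
  hφ.rhs_le_mul_deriv_deriv_of_convex le_rfl
    (fun _ ht => hφ.deriv_deriv_nonneg hR hc hq hf hfpos hfmono hg hgmono hga ht)
    hc hq.le hfmono hgmono hga hs

theorem deriv_pos {s : ℝ} (hs : s ∈ Ioo 0 R) : 0 < deriv φ s := by
  have hc0 : 0 < c := by linarith
  have hconvex : ∀ t ∈ Ioo 0 R, 0 ≤ deriv (deriv φ) t :=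
    fun t ht => hφ.deriv_deriv_nonneg hR hc hq hf hfpos hfmono hg hgmono hga ht
  have hsub : Ioc 0 s ⊆ Ioo 0 R := fun t ht => ⟨ht.1, ht.2.trans_lt hs.2⟩
  have hlin : f a / c * s ≤ deriv φ s :=
    le_of_hasDerivAt_le_of_tendsto (l := 0) hs.1 (fun t _ => (hasDerivAt_id t).const_mul _)
      (fun t ht => hφ.hasDerivAt_deriv (hsub ht))
      (fun t ht => by
        rw [mul_one, div_le_iff₀' hc0]
        exact hφ.le_mul_deriv_deriv_of_convex le_rfl hconvex hc hq.le hfmono hgmono hga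
          (hsub (Ioo_subset_Ioc_self ht)))
      (((continuous_const_mul _).tendsto' 0 0 (mul_zero _)).mono_left nhdsWithin_le_nhds)
      hφ.tendsto_deriv
  exact (mul_pos (div_pos (hfpos a) hc0) hs.1).trans_le hlin

theorem lt_apply {s : ℝ} (hs : s ∈ Ioo 0 R) : a < φ s := by
  have hmono : StrictMonoOn φ (Ico 0 R) := strictMonoOn_of_deriv_pos (convex_Ico 0 R)
    hφ.continuousOn fun t ht => by
      rw [interior_Ico] at ht
      exact hφ.deriv_pos hR hc hq hf hfpos hfmono hg hgmono hga ht
  exact hφ.apply_zero ▸ hmono (left_mem_Ico.2 hR) (Ioo_subset_Ico_self hs) hs.1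

theorem rpow_mul_integral_le_deriv {k : ℝ → ℝ} {p : ℝ} (hp : p < 2) (hk : Continuous k)
    (hk0 : ∀ x, 0 ≤ k x) (hkD : ∀ t ∈ Ioo 0 R, k (φ t) * deriv φ t ^ p ≤ c * deriv (deriv φ) t)
    {s : ℝ} (hs : s ∈ Ioo 0 R) :
    ((2 - p) / c * ∫ x in a..φ s, k x) ^ (1 / (2 - p)) ≤ deriv φ s := by
  have hc0 : 0 < c := by linarith
  have hsub : Ioc 0 s ⊆ Ioo 0 R := fun t ht => ⟨ht.1, ht.2.trans_lt hs.2⟩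
  have hI : 0 ≤ ∫ x in a..φ s, k x :=
    intervalIntegral.integral_nonneg (hφ.lt_apply hR hc hq hf hfpos hfmono hg hgmono hga hs).le
      fun x _ => hk0 x
  have h2p : 0 < 2 - p := by linarith
  rw [one_div, rpow_inv_le_iff_of_pos (by positivity)
    (hφ.deriv_pos hR hc hq hf hfpos hfmono hg hgmono hga hs).le h2p]
  exact mul_integral_le_rpow hc0 hp hs.1 (fun t ht => hφ.hasDerivAt (hsub ht))
    (fun t ht => hφ.hasDerivAt_deriv (hsub ht))
    (fun t ht => hφ.deriv_pos hR hc hq hf hfpos hfmono hg hgmono hga (hsub ht))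
    (hφ.tendsto_nhdsGT hR) hφ.tendsto_deriv hk
    fun t ht => hkD t (hsub (Ioo_subset_Ioc_self ht))

theorem gradient_lower_bound (hq2 : q < 2) {s : ℝ} (hs : s ∈ Ioo 0 R) :
    ((2 - q) / c) ^ (1 / (2 - q)) * gradientProfile f g a q (φ s) ≤ 2 * deriv φ s := by
  have hgφ : ∀ t ∈ Ioo 0 R, 0 ≤ g (φ t) := fun t ht =>
    hga.trans (hgmono (hφ.lt_apply hR hc hq hf hfpos hfmono hg hgmono hga ht).le)
  have hF := hφ.rpow_mul_integral_le_deriv hR hc hq hf hfpos hfmono hg hgmono hga (p := 0)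
    two_pos hf (fun x => (hfpos x).le) (fun t ht => by
      rw [rpow_zero, mul_one]
      linarith [hφ.rhs_le_mul_deriv_deriv hR hc hq hf hfpos hfmono hg hgmono hga ht,
        mul_nonneg (hgφ t ht) (rpow_nonneg (abs_nonneg (deriv φ t)) q)]) hs
  have hG := hφ.rpow_mul_integral_le_deriv hR hc hq hf hfpos hfmono hg hgmono hga hq2
    (hg.max continuous_const) (fun x => le_max_right _ _) (fun t ht => by
      rw [max_eq_left (hgφ t ht), ← abs_of_pos (hφ.deriv_pos hR hc hq hf hfpos hfmono hg hgmono
        hga ht)]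
      linarith [hφ.rhs_le_mul_deriv_deriv hR hc hq hf hfpos hfmono hg hgmono hga ht,
        hfpos (φ t)]) hs
  have hc0 : 0 < c := by linarith
  have hFnn : 0 ≤ ∫ x in a..φ s, f x :=
    intervalIntegral.integral_nonneg (hφ.lt_apply hR hc hq hf hfpos hfmono hg hgmono hga hs).le
      fun x _ => (hfpos x).le
  have hGnn : 0 ≤ ∫ x in a..φ s, max (g x) 0 :=
    intervalIntegral.integral_nonneg (hφ.lt_apply hR hc hq hf hfpos hfmono hg hgmono hga hs).le
      fun x _ => le_max_right _ _
  rw [sub_zero, mul_rpow (by positivity) hFnn] at hF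
  rw [mul_rpow (div_nonneg (by linarith) hc0.le) hGnn] at hG
  have hK := two_sub_div_rpow_le_two_div_rpow hc hq hq2
  rw [gradientProfile]
  nlinarith [rpow_nonneg hFnn ((1 : ℝ) / 2)]

theorem mul_le_integral_one_div_gradientProfile (hq2 : q < 2) {r : ℝ} (hr : r ∈ Ioo 0 R) :
    ((2 - q) / c) ^ (1 / (2 - q)) / 2 * r ≤ ∫ t in a..φ r, 1 / gradientProfile f g a q t := by
  have hsub : Ioc 0 r ⊆ Ioo 0 R := fun t ht => ⟨ht.1, ht.2.trans_lt hr.2⟩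
  have hρ := continuous_gradientProfile (a := a) hf hg hq2.le
  have hρlow : ∀ x, a ≤ x → f a ^ (1 / 2 : ℝ) * (x - a) ^ (1 / 2 : ℝ) ≤ gradientProfile f g a q x :=
    fun x hx => mul_rpow_le_gradientProfile hf hfmono (hfpos a).le hx
  refine mul_le_integral_one_div hr.1 (fun t ht => hφ.hasDerivAt (hsub ht)) (hφ.tendsto_nhdsGT hR)
    (fun t ht => hφ.lt_apply hR hc hq hf hfpos hfmono hg hgmono hga (hsub ht)) hρ
    (fun x hx => (mul_pos (rpow_pos_of_pos (hfpos a) _) (rpow_pos_of_pos (sub_pos.2 hx) _)).trans_le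
      (hρlow x hx.le))
    (fun x hx => intervalIntegrable_one_div_of_mul_sqrt_le hx (rpow_pos_of_pos (hfpos a) _) hρ
      fun y hy => hρlow y hy.1.le)
    fun t ht => ?_
  linarith [hφ.gradient_lower_bound hR hc hq hf hfpos hfmono hg hgmono hga hq2
    (hsub (Ioo_subset_Ioc_self ht))]

end Solution

end IsRadialSolution

theorem stmt11 (c q R a : ℝ) (hc : 1 ≤ c) (hq0 : 0 < q) (hq2 : q < 2) (hR : 0 < R)
    (f g φ : ℝ → ℝ)
    (hf : Continuous f) (hfpos : ∀ t, 0 < f t) (hfmono : Monotone f)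
    (hg : Continuous g) (hgmono : Monotone g) (hga : 0 ≤ g a)
    (hφc : ContinuousOn φ (Set.Ico 0 R))
    (hφ2 : ContDiffOn ℝ 2 φ (Set.Ioo 0 R))
    (hφa : φ 0 = a)
    (hd0 : Filter.Tendsto (deriv φ) (nhdsWithin 0 (Set.Ioi 0)) (nhds 0))
    (hd2 : ∃ L, Filter.Tendsto (deriv (deriv φ)) (nhdsWithin 0 (Set.Ioi 0)) (nhds L))
    (hode : ∀ r ∈ Set.Ioo 0 R,
      deriv (deriv φ) r + (c - 1) / r * deriv φ r = f (φ r) + g (φ r) * |deriv φ r| ^ q) :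
    ∀ r ∈ Set.Ico 0 R,
      r ≤ 2 * (c / (2 - q)) ^ (1 / (2 - q)) *
          ∫ t in a..φ r,
            1 / ((∫ s in a..t, f s) ^ ((1 : ℝ) / 2) +
              (∫ s in a..t, max (g s) 0) ^ (1 / (2 - q))) := by
  intro r hr
  rcases hr.1.eq_or_lt with rfl | hr0
  · simp [hφa]
  have hsol : IsRadialSolution c q R a f g φ := ⟨hφc, hφ2, hφa, hd0, hd2, hode⟩
  have key := hsol.mul_le_integral_one_div_gradientProfile hR hc hq0 hf hfpos hfmono hg hgmono
    hga hq2 ⟨hr0, hr.2⟩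
  set K := ((2 - q) / c) ^ (1 / (2 - q))
  have hK : 0 < K := rpow_pos_of_pos (div_pos (by linarith) (by linarith)) _
  rw [← inv_div, inv_rpow (div_pos (by linarith) (by linarith)).le]
  calc r = 2 * K⁻¹ * (K / 2 * r) := by field_simp
    _ ≤ 2 * K⁻¹ * ∫ t in a..φ r, 1 / gradientProfile f g a q t := by gcongr
end

section
/- Let f, h : ℝ → ℝ be continuous with f positive nondecreasing and h nonnegative nonincreasing. Define ψ_a(t) = ∫_a^t exp(-2∫_s^t h(r) dr) f(s) ds for t ≥ a. Then ψ_a is strictly increasing in t on [a, ∞), and more precisely ψ_a'(t) = f(t) - 2h(t)ψ_a(t) > 0 for all t > a. -/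
/-!
With `H t = ∫_a^t h`, the integrating factor `exp (2 H)` gives
`ψ t = exp (-2 H t) * ∫_a^t exp (2 H s) f s ds`, so `ψ' = f - 2 h ψ`. For `s ≤ t` monotonicity
gives `h t * f s ≤ h s * f t`, hence
`2 h t ∫_a^t exp (2 H s) f s ds ≤ f t ∫_a^t 2 h s exp (2 H s) ds = f t (exp (2 H t) - 1)`,
that is `2 h t ψ t ≤ f t (1 - exp (-2 H t)) < f t`.
-/

open Real intervalIntegral

section IntegratingFactor

variable {f h : ℝ → ℝ}

theorem integral_exp_mul_integral_mul_eq (hh : Continuous h) (f : ℝ → ℝ) (c a t : ℝ) :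
    ∫ s in a..t, exp (c * ∫ r in s..t, h r) * f s =
      exp (c * ∫ r in a..t, h r) * ∫ s in a..t, exp (-(c * ∫ r in a..s, h r)) * f s := by
  rw [← integral_const_mul]
  refine integral_congr fun s _ => ?_
  rw [← integral_interval_sub_left (hh.intervalIntegrable a t)
    (hh.intervalIntegrable a s), mul_sub, sub_eq_add_neg, exp_add]
  ring

theorem hasDerivAt_integral_exp_mul_integral_mul (hf : Continuous f) (hh : Continuous h)
    (c a t : ℝ) :
    HasDerivAt (fun t => ∫ s in a..t, exp (c * ∫ r in s..t, h r) * f s)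
      (f t + c * h t * ∫ s in a..t, exp (c * ∫ r in s..t, h r) * f s) t := by
  have hH : HasDerivAt (fun t => ∫ r in a..t, h r) (h t) t :=
    (hh.integral_hasStrictDerivAt a t).hasDerivAt
  have hHc : Continuous fun t => ∫ r in a..t, h r :=
    continuous_primitive (fun _ _ => hh.intervalIntegrable _ _) a
  have hg : Continuous fun s => exp (-(c * ∫ r in a..s, h r)) * f s := by fun_prop
  simp only [integral_exp_mul_integral_mul_eq hh f c a]
  refine ((hH.const_mul c).exp.mul (hg.integral_hasStrictDerivAt a t).hasDerivAt).congr_deriv ?_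
  rw [exp_neg, mul_inv_cancel_left₀ (exp_ne_zero _)]
  ring

theorem integral_mul_exp_mul_integral (hh : Continuous h) (c a t : ℝ) :
    ∫ s in a..t, c * h s * exp (c * ∫ r in a..s, h r) = exp (c * ∫ r in a..t, h r) - 1 := by
  have hHc : Continuous fun t => ∫ r in a..t, h r :=
    continuous_primitive (fun _ _ => hh.intervalIntegrable _ _) a
  have hderiv (s : ℝ) : HasDerivAt (fun t => exp (c * ∫ r in a..t, h r))
      (c * h s * exp (c * ∫ r in a..s, h r)) s := by
    convert ((hh.integral_hasStrictDerivAt a s).hasDerivAt.const_mul c).exp using 1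
    ring
  rw [integral_eq_sub_of_hasDerivAt (fun s _ => hderiv s)
    ((by fun_prop : Continuous _).intervalIntegrable a t)]
  simp

theorem mul_integral_exp_neg_mul_integral_mul_lt (hf : Continuous f) (hfpos : ∀ t, 0 < f t)
    (hfmono : Monotone f) (hh : Continuous h) (hhnonneg : ∀ t, 0 ≤ h t) (hhanti : Antitone h)
    {c a t : ℝ} (hc : 0 ≤ c) (hat : a ≤ t) :
    c * h t * ∫ s in a..t, exp (-c * ∫ r in s..t, h r) * f s < f t := by
  set H := fun t => ∫ r in a..t, h r
  have hHc : Continuous H :=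
    continuous_primitive (fun _ _ => hh.intervalIntegrable _ _) a
  have hbound : c * h t * ∫ s in a..t, exp (-(-c * H s)) * f s ≤ f t * (exp (c * H t) - 1) := by
    rw [← integral_mul_exp_mul_integral hh c a t, ← integral_const_mul, ← integral_const_mul]
    refine integral_mono_on hat
      ((by fun_prop : Continuous _).intervalIntegrable _ _)
      ((by fun_prop : Continuous _).intervalIntegrable _ _) fun s hs => ?_
    have hfh : h t * f s ≤ h s * f t :=
      calc h t * f s ≤ h s * f s := mul_le_mul_of_nonneg_right (hhanti hs.2) (hfpos s).le
        _ ≤ h s * f t := mul_le_mul_of_nonneg_left (hfmono hs.2) (hhnonneg s)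
    calc c * h t * (exp (-(-c * H s)) * f s)
        = c * exp (c * H s) * (h t * f s) := by rw [neg_mul, neg_neg]; ring
      _ ≤ c * exp (c * H s) * (h s * f t) := by gcongr
      _ = f t * (c * h s * exp (c * H s)) := by ring
  rw [integral_exp_mul_integral_mul_eq hh f (-c) a t]
  calc c * h t * (exp (-c * H t) * ∫ s in a..t, exp (-(-c * H s)) * f s)
      = exp (-c * H t) * (c * h t * ∫ s in a..t, exp (-(-c * H s)) * f s) := by ring
    _ ≤ exp (-c * H t) * (f t * (exp (c * H t) - 1)) := by gcongr
    _ = f t - f t * exp (-c * H t) := by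
      rw [neg_mul, exp_neg]; field_simp
    _ < f t := by have := hfpos t; have := exp_pos (-c * H t); nlinarith

end IntegratingFactor

theorem stmt12 (f h : ℝ → ℝ)
    (hf : Continuous f) (hfpos : ∀ t, 0 < f t) (hfmono : Monotone f)
    (hh : Continuous h) (hhnonneg : ∀ t, 0 ≤ h t) (hhanti : Antitone h)
    (a : ℝ)
    (ψ : ℝ → ℝ)
    (hψ : ∀ t, ψ t = ∫ s in a..t, Real.exp (-2 * ∫ r in s..t, h r) * f s) :
    StrictMonoOn ψ (Set.Ici a) ∧
    ∀ t, a < t → HasDerivAt ψ (f t - 2 * h t * ψ t) t ∧ 0 < f t - 2 * h t * ψ t := by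
  have hψ_eq : ψ = fun t => ∫ s in a..t, exp (-2 * ∫ r in s..t, h r) * f s := funext hψ
  have hderiv (t : ℝ) : HasDerivAt ψ (f t - 2 * h t * ψ t) t := by
    rw [hψ_eq]
    exact (hasDerivAt_integral_exp_mul_integral_mul hf hh (-2) a t).congr_deriv (by ring)
  have hpos (t : ℝ) (ht : a ≤ t) : 0 < f t - 2 * h t * ψ t := by
    rw [hψ t, sub_pos]
    exact mul_integral_exp_neg_mul_integral_mul_lt hf hfpos hfmono hh hhnonneg hhanti
      zero_le_two ht
  refine ⟨?_, fun t ht => ⟨hderiv t, hpos t ht.le⟩⟩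
  refine strictMonoOn_of_hasDerivWithinAt_pos (convex_Ici a)
    (fun t _ => (hderiv t).continuousAt.continuousWithinAt)
    (fun t _ => (hderiv t).hasDerivWithinAt) fun t ht => hpos t (interior_subset ht)
end
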